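/- arXiv:1609.02724 — 6 statements merged into one kernel-verified Lean document; each statement's English description precedes it below -/
import Mathlib

section
/- For any fixed integer r ≥ 2, the sum over n ≤ x of s_r(n)·τ(n) is O(x^{1/r}·(log x)^r), where s_r is the indicator function of r-full numbers and τ is the number-of-divisors function. -/
open Finset
open scoped Classical

/-- `n` is `r`-full: every prime dividing `n` satisfies `p^r ∣ n`. -/
def IsRFull (r n : ℕ) : Prop := ∀ p : ℕ, p.Prime → p ∣ n → p ^ r ∣ n

/-- indicator of `r`-full numbers (0 at 0). -/
noncomputable def sFull (r n : ℕ) : ℝ := if 1 ≤ n ∧ IsRFull r n then 1 else 0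

namespace RFullAux

open ArithmeticFunction Nat

/-- exponent condition on the small part -/
def KCond (r k : ℕ) : Prop :=
  ∀ p ∈ k.primeFactors, r + 1 ≤ k.factorization p ∧ k.factorization p ≤ 2 * r - 1

/-- the generalized divisor function, as `ζ^m` in the Dirichlet ring -/
def tm (m : ℕ) : ArithmeticFunction ℕ := (ArithmeticFunction.zeta) ^ m

lemma tm_succ (m : ℕ) : tm (m + 1) = tm m * ArithmeticFunction.zeta := by
  rw [tm, tm, pow_succ]

lemma tm_succ_apply (m n : ℕ) : tm (m + 1) n = ∑ d ∈ n.divisors, tm m d := by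
  rw [tm_succ, ArithmeticFunction.mul_zeta_apply]

lemma tm_mult (m : ℕ) : (tm m).IsMultiplicative := by
  induction m with
  | zero => exact ArithmeticFunction.isMultiplicative_one
  | succ m ih => rw [tm_succ]; exact ih.mul ArithmeticFunction.isMultiplicative_zeta

lemma tm_one_eq (m : ℕ) : tm m 1 = 1 := (tm_mult m).1

/-- lower bound for `τ_{m+1}` at prime powers -/
lemma tm_prime_pow_lower (m : ℕ) {p : ℕ} (hp : p.Prime) (Q : ℕ) :
    m * Q + 1 ≤ tm (m + 1) (p ^ Q) := by
  induction m generalizing Q with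
  | zero =>
    have h1 : tm (0 + 1) (p ^ Q) = 1 := by
      rw [tm, pow_one, ArithmeticFunction.zeta_apply_ne (pow_ne_zero _ hp.ne_zero)]
    omega
  | succ m ih =>
    rw [tm_succ_apply, Nat.sum_divisors_prime_pow hp]
    calc (m+1) * Q + 1 ≤ ∑ j ∈ Finset.range (Q+1), (m * j + 1) := by
          induction Q with
          | zero => simp
          | succ Q ihQ =>
            rw [Finset.sum_range_succ]
            have h1 : (m+1) * (Q+1) + 1 = ((m+1) * Q + 1) + (m + 1) := by ring
            have h2 : m + 1 ≤ m * (Q+1) + 1 := by nlinarith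
            linarith
      _ ≤ ∑ j ∈ Finset.range (Q+1), tm (m+1) (p ^ j) :=
          Finset.sum_le_sum fun j _ => ih j

/-- swap lemma : summing a function over divisor pairs -/
lemma sum_Icc_divisorsAntidiagonal {M : Type*} [AddCommMonoid M] (N : ℕ) (f : ℕ → ℕ → M) :
    ∑ n ∈ Icc 1 N, ∑ p ∈ n.divisorsAntidiagonal, f p.1 p.2
      = ∑ d ∈ Icc 1 N, ∑ q ∈ Icc 1 (N / d), f d q := by
  rw [Finset.sum_sigma', Finset.sum_sigma']
  refine Finset.sum_nbij' (fun x => ⟨x.2.1, x.2.2⟩) (fun x => ⟨x.1 * x.2, (x.1, x.2)⟩)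
    ?_ ?_ ?_ ?_ ?_
  · rintro ⟨n, d, q⟩ hx
    dsimp only
    simp only [Finset.mem_sigma, Finset.mem_Icc, Nat.mem_divisorsAntidiagonal] at hx
    obtain ⟨⟨hn1, hnN⟩, hdq, hn0⟩ := hx
    have hd : 0 < d := by
      rcases Nat.eq_zero_or_pos d with h | h
      · subst h; simp at hdq; omega
      · exact h
    have hq : 0 < q := by
      rcases Nat.eq_zero_or_pos q with h | h
      · subst h; simp at hdq; omega
      · exact h
    have hdd : d ≤ d * q := Nat.le_mul_of_pos_right d hq
    have hqd : q ≤ N / d := (Nat.le_div_iff_mul_le hd).mpr (by rw [Nat.mul_comm]; omega)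
    exact Finset.mem_sigma.mpr ⟨Finset.mem_Icc.mpr ⟨hd, by show d ≤ N; omega⟩,
      Finset.mem_Icc.mpr ⟨hq, hqd⟩⟩
  · rintro ⟨d, q⟩ hx
    dsimp only
    simp only [Finset.mem_sigma, Finset.mem_Icc] at hx
    obtain ⟨⟨hd1, hdN⟩, hq1, hqN⟩ := hx
    have hdqN : d * q ≤ N := by
      have h2 := (Nat.le_div_iff_mul_le (by omega : 0 < d)).mp hqN
      calc d * q = q * d := Nat.mul_comm d q
        _ ≤ N := h2
    refine Finset.mem_sigma.mpr ⟨Finset.mem_Icc.mpr ⟨?_, hdqN⟩,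
      Nat.mem_divisorsAntidiagonal.mpr ⟨rfl, ?_⟩⟩
    · exact Nat.one_le_iff_ne_zero.mpr (Nat.mul_ne_zero (by omega) (by omega))
    · exact Nat.mul_ne_zero (by omega) (by omega)
  · rintro ⟨n, d, q⟩ hx
    dsimp only
    simp only [Finset.mem_sigma, Finset.mem_Icc, Nat.mem_divisorsAntidiagonal] at hx
    obtain ⟨⟨hn1, hnN⟩, hdq, hn0⟩ := hx
    simp [hdq]
  · rintro ⟨d, q⟩ hx
    rfl
  · rintro ⟨n, d, q⟩ hx
    rfl

lemma harmonic_Icc (B : ℕ) : ∑ v ∈ Icc 1 B, (v : ℝ)⁻¹ ≤ 1 + Real.log B := by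
  have h := harmonic_le_one_add_log B
  rw [harmonic_eq_sum_Icc] at h
  push_cast at h
  exact h

/-- weighted average of τ_m -/
lemma tm_div_sum_le (m : ℕ) (N : ℕ) :
    ∑ d ∈ Icc 1 N, (tm m d : ℝ) / d ≤ (1 + Real.log N) ^ m := by
  rcases Nat.eq_zero_or_pos N with hN | hN
  · subst hN
    rw [Finset.Icc_eq_empty (by omega)]
    simp
  have hlogN : 0 ≤ Real.log N := Real.log_natCast_nonneg N
  induction m with
  | zero =>
    have h0 : ∑ d ∈ Icc 1 N, (tm 0 d : ℝ) / d = (tm 0 1 : ℝ) / ((1:ℕ):ℝ) := by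
      apply Finset.sum_eq_single_of_mem 1 (Finset.mem_Icc.mpr ⟨le_refl 1, hN⟩)
      intro d hd hne
      rw [tm, pow_zero, ArithmeticFunction.one_apply, if_neg hne]
      simp
    rw [h0, tm, pow_zero, ArithmeticFunction.one_apply, if_pos rfl, pow_zero]
    norm_num
  | succ m ih =>
    have step1 : ∀ n ∈ Icc 1 N, (tm (m+1) n : ℝ) / n
        = ∑ p ∈ n.divisorsAntidiagonal, ((tm m p.1 : ℝ) / p.1) * ((p.2 : ℝ))⁻¹ := by
      intro n hn
      rw [tm_succ, ArithmeticFunction.mul_apply]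
      push_cast
      rw [Finset.sum_div]
      refine Finset.sum_congr rfl fun p hp => ?_
      obtain ⟨hpn, hn0⟩ := Nat.mem_divisorsAntidiagonal.mp hp
      have h1 : p.1 ≠ 0 := left_ne_zero_of_mul (hpn ▸ hn0)
      have h2 : p.2 ≠ 0 := right_ne_zero_of_mul (hpn ▸ hn0)
      have c1 : (p.1 : ℝ) ≠ 0 := Nat.cast_ne_zero.mpr h1
      have c2 : (p.2 : ℝ) ≠ 0 := Nat.cast_ne_zero.mpr h2
      rw [ArithmeticFunction.zeta_apply_ne h2, ← hpn]
      push_cast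
      field_simp
    calc ∑ d ∈ Icc 1 N, (tm (m+1) d : ℝ) / d
        = ∑ n ∈ Icc 1 N, ∑ p ∈ n.divisorsAntidiagonal,
            ((tm m p.1 : ℝ) / p.1) * ((p.2 : ℝ))⁻¹ := Finset.sum_congr rfl step1
      _ = ∑ d ∈ Icc 1 N, ∑ q ∈ Icc 1 (N / d), ((tm m d : ℝ) / d) * ((q : ℝ))⁻¹ :=
          sum_Icc_divisorsAntidiagonal N (fun u v => ((tm m u : ℝ) / u) * ((v : ℝ))⁻¹)
      _ = ∑ d ∈ Icc 1 N, ((tm m d : ℝ) / d) * ∑ q ∈ Icc 1 (N / d), ((q : ℝ))⁻¹ := by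
          refine Finset.sum_congr rfl fun d _ => ?_
          rw [Finset.mul_sum]
      _ ≤ ∑ d ∈ Icc 1 N, ((tm m d : ℝ) / d) * (1 + Real.log N) := by
          refine Finset.sum_le_sum fun d hd => ?_
          have hnn : (0:ℝ) ≤ (tm m d : ℝ) / d := by positivity
          refine mul_le_mul_of_nonneg_left ((harmonic_Icc _).trans ?_) hnn
          have hlog2 : Real.log (↑(N / d)) ≤ Real.log N := by
            rcases Nat.eq_zero_or_pos (N / d) with h | h
            · rw [h]; simpa using hlogN
            · exact Real.log_le_log (by exact_mod_cast h)
                (Nat.cast_le.mpr (Nat.div_le_self N d))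
          linarith
      _ = (1 + Real.log N) * ∑ d ∈ Icc 1 N, (tm m d : ℝ) / d := by
          rw [← Finset.sum_mul]; ring
      _ ≤ (1 + Real.log N) * (1 + Real.log N) ^ m :=
          mul_le_mul_of_nonneg_left ih (by linarith)
      _ = (1 + Real.log N) ^ (m + 1) := by ring

/-- sum of τ_{m+1} -/
lemma tm_sum_le (m : ℕ) (N : ℕ) :
    ∑ a ∈ Icc 1 N, (tm (m + 1) a : ℝ) ≤ N * (1 + Real.log N) ^ m := by
  have step1 : ∀ n ∈ Icc 1 N, (tm (m+1) n : ℝ)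
      = ∑ p ∈ n.divisorsAntidiagonal, (tm m p.1 : ℝ) := by
    intro n hn
    rw [tm_succ, ArithmeticFunction.mul_apply]
    push_cast
    refine Finset.sum_congr rfl fun p hp => ?_
    obtain ⟨hpn, hn0⟩ := Nat.mem_divisorsAntidiagonal.mp hp
    rw [ArithmeticFunction.zeta_apply_ne (right_ne_zero_of_mul (hpn ▸ hn0))]
    simp
  calc ∑ a ∈ Icc 1 N, (tm (m+1) a : ℝ)
      = ∑ n ∈ Icc 1 N, ∑ p ∈ n.divisorsAntidiagonal, (tm m p.1 : ℝ) :=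
        Finset.sum_congr rfl step1
    _ = ∑ d ∈ Icc 1 N, ∑ q ∈ Icc 1 (N / d), (tm m d : ℝ) :=
        sum_Icc_divisorsAntidiagonal N (fun d _ => (tm m d : ℝ))
    _ = ∑ d ∈ Icc 1 N, (tm m d : ℝ) * ((N / d : ℕ) : ℝ) := by
        refine Finset.sum_congr rfl fun d _ => ?_
        rw [Finset.sum_const, Nat.card_Icc]
        simp [nsmul_eq_mul, mul_comm]
    _ ≤ ∑ d ∈ Icc 1 N, (N : ℝ) * ((tm m d : ℝ) / d) := by
        refine Finset.sum_le_sum fun d hd => ?_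
        have hd1 : 1 ≤ d := (Finset.mem_Icc.mp hd).1
        have hd0 : (0:ℝ) < d := by exact_mod_cast hd1
        have h1 : ((N / d : ℕ) : ℝ) ≤ (N : ℝ) / d := Nat.cast_div_le
        calc (tm m d : ℝ) * ((N / d : ℕ) : ℝ) ≤ (tm m d : ℝ) * ((N : ℝ) / d) :=
              mul_le_mul_of_nonneg_left h1 (by positivity)
          _ = (N : ℝ) * ((tm m d : ℝ) / d) := by field_simp
    _ = (N : ℝ) * ∑ d ∈ Icc 1 N, (tm m d : ℝ) / d := by rw [Finset.mul_sum]
    _ ≤ (N : ℝ) * (1 + Real.log N) ^ m :=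
        mul_le_mul_of_nonneg_left (tm_div_sum_le m N) (by positivity)

/-- p-series partial sums -/
lemma p_series_aux {δ : ℝ} (hδ : 0 < δ) (N : ℕ) (hN : 1 ≤ N) :
    ∑ b ∈ Icc 1 N, (b : ℝ) ^ (-(1 + δ)) ≤ 1 + 1 / δ - ((N : ℝ) ^ (-δ)) / δ := by
  induction N, hN using Nat.le_induction with
  | base =>
    rw [show Finset.Icc 1 1 = {1} from rfl]
    norm_num
  | succ N hN ih =>
    rw [Finset.sum_Icc_succ_top (by omega)]
    have hb0 : (0:ℝ) < ((N+1 : ℕ) : ℝ) := by positivity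
    have ha0 : (0:ℝ) < (N : ℝ) := by exact_mod_cast hN
    set a : ℝ := (N : ℝ) with hadef
    set b : ℝ := ((N+1 : ℕ) : ℝ) with hbdef
    have hab : a + 1 = b := by rw [hadef, hbdef]; push_cast; ring
    have key : (b : ℝ) ^ (-(1+δ)) ≤ (a ^ (-δ) - b ^ (-δ)) / δ := by
      -- main telescoping inequality
      have hlog : Real.log (a / b) ≤ a / b - 1 := Real.log_le_sub_one_of_pos (by positivity)
      have hlog2 : (1:ℝ)/b ≤ Real.log (b / a) := by
        have : Real.log (b / a) = - Real.log (a / b) := by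
          rw [← Real.log_inv]; congr 1; field_simp
        rw [this]
        have hfrac : a / b - 1 = -(1/b) := by field_simp; linarith
        linarith [hlog.trans_eq hfrac]
      have hexp : (1 : ℝ) + δ / b ≤ (b / a) ^ δ := by
        rw [Real.rpow_def_of_pos (by positivity)]
        calc (1:ℝ) + δ / b = δ * (1/b) + 1 := by ring
          _ ≤ Real.exp (δ * (1/b)) := Real.add_one_le_exp _
          _ ≤ Real.exp (Real.log (b/a) * δ) := by
              rw [Real.exp_le_exp]
              calc δ * (1/b) ≤ δ * Real.log (b/a) := by
                    exact mul_le_mul_of_nonneg_left hlog2 (le_of_lt hδ)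
                _ = Real.log (b/a) * δ := by ring
      have hid : b ^ (-δ) * ((b / a) ^ δ) = a ^ (-δ) := by
        rw [Real.div_rpow (le_of_lt hb0) (le_of_lt ha0), Real.rpow_neg (le_of_lt hb0),
          Real.rpow_neg (le_of_lt ha0)]
        field_simp
      have hsplit : b ^ (-(1+δ)) = b ^ (-δ) / b := by
        rw [show -(1+δ) = -δ + (-1) from by ring, Real.rpow_add hb0, Real.rpow_neg_one]
        field_simp
      have hbnn : (0:ℝ) < b ^ (-δ) := Real.rpow_pos_of_pos hb0 _
      have hexpand := mul_le_mul_of_nonneg_left hexp (le_of_lt hbnn)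
      rw [hid] at hexpand
      have h5 : b ^ (-δ) * (1 + δ / b) = b ^ (-δ) + δ * (b ^ (-δ) / b) := by
        field_simp
      rw [h5] at hexpand
      rw [hsplit, le_div_iff₀ hδ]
      linarith
    have key2 : b ^ (-(1+δ)) ≤ a ^ (-δ) / δ - b ^ (-δ) / δ := by
      rw [← sub_div]; exact key
    linarith
  
lemma p_series_sum {δ : ℝ} (hδ : 0 < δ) (N : ℕ) :
    ∑ b ∈ Icc 1 N, (b : ℝ) ^ (-(1 + δ)) ≤ 1 + 1 / δ := by
  rcases Nat.eq_zero_or_pos N with hN | hN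
  · subst hN; rw [Finset.Icc_eq_empty (by omega)]; simp; positivity
  have h := p_series_aux hδ N hN
  have : (0:ℝ) ≤ (N : ℝ) ^ (-δ) / δ := by positivity
  linarith

/-- bounding a power of the number of prime factors -/
lemma omega_pow_le {C : ℝ} (hC : 1 ≤ C) {γ : ℝ} (hγ : 0 < γ) (B₀ : ℕ)
    (hB : ∀ p : ℕ, p.Prime → (B₀ : ℝ) < p → C ≤ (p : ℝ) ^ γ)
    (t : Finset ℕ) (ht : ∀ p ∈ t, p.Prime) :
    C ^ t.card ≤ C ^ B₀ * (∏ p ∈ t, (p : ℝ)) ^ γ := by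
  classical
  have hC0 : (0:ℝ) ≤ C := by linarith
  set t₁ := t.filter (fun p => p ≤ B₀) with ht₁def
  set t₂ := t.filter (fun p => ¬ p ≤ B₀) with ht₂def
  have hcard : t₁.card + t₂.card = t.card := Finset.card_filter_add_card_filter_not _
  have hsub : t₁ ⊆ Finset.Icc 1 B₀ := by
    intro p hp
    obtain ⟨hpt, hpB⟩ := Finset.mem_filter.mp hp
    exact Finset.mem_Icc.mpr ⟨(ht p hpt).one_lt.le.trans' (by omega), hpB⟩
  have h1 : C ^ t₁.card ≤ C ^ B₀ := by
    refine pow_le_pow_right₀ hC ?_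
    calc t₁.card ≤ (Finset.Icc 1 B₀).card := Finset.card_le_card hsub
      _ = B₀ := by rw [Nat.card_Icc]; omega
  have h2 : C ^ t₂.card ≤ (∏ p ∈ t₂, (p : ℝ)) ^ γ := by
    rw [← Real.finset_prod_rpow t₂ _ (fun p _ => by positivity) γ, ← Finset.prod_const]
    refine Finset.prod_le_prod (fun p _ => hC0) (fun p hp => ?_)
    obtain ⟨hpt, hpB⟩ := Finset.mem_filter.mp hp
    exact hB p (ht p hpt) (by exact_mod_cast by omega)
  have hsub2 : t₂ ⊆ t := ht₂def ▸ Finset.filter_subset _ _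
  have hprodle : (∏ p ∈ t₂, p) ≤ ∏ p ∈ t, p :=
    Finset.prod_le_prod_of_subset_of_one_le' hsub2 (fun p hpt _ => (ht p hpt).one_lt.le)
  have h3 : (∏ p ∈ t₂, (p : ℝ)) ^ γ ≤ (∏ p ∈ t, (p : ℝ)) ^ γ := by
    rw [← Nat.cast_prod, ← Nat.cast_prod]
    exact Real.rpow_le_rpow (by positivity) (Nat.cast_le.mpr hprodle) (le_of_lt hγ)
  calc C ^ t.card = C ^ t₁.card * C ^ t₂.card := by rw [← pow_add, hcard]
    _ ≤ C ^ B₀ * (∏ p ∈ t, (p : ℝ)) ^ γ := by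
        refine mul_le_mul h1 (h2.trans h3) (pow_nonneg hC0 _) (pow_nonneg hC0 _)

lemma fact_prod_pow_apply (t : Finset ℕ) (ht : ∀ p ∈ t, p.Prime) (e : ℕ → ℕ) (p₀ : ℕ) :
    (∏ p ∈ t, p ^ e p).factorization p₀ = if p₀ ∈ t then e p₀ else 0 := by
  rw [Nat.factorization_prod (fun p hp => pow_ne_zero _ (ht p hp).pos.ne')]
  rw [Finset.sum_apply']
  have h1 : ∀ p ∈ t, ((p ^ e p).factorization) p₀ = if p = p₀ then e p else 0 := by
    intro p hp
    rw [(ht p hp).factorization_pow, Finsupp.single_apply]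
  rw [Finset.sum_congr rfl h1, Finset.sum_ite_eq' t p₀ e]

/-- quotient exponent -/
def Qe (r e : ℕ) : ℕ := if r ∣ e then e / r else e / r - 1

/-- remainder exponent -/
def se (r e : ℕ) : ℕ := e - r * Qe r e

lemma qe_mul_le {r e : ℕ} (hr : 1 ≤ r) (he : r ≤ e) :
    r * Qe r e ≤ e ∧ r * Qe r e + se r e = e := by
  have h : r * Qe r e ≤ e := by
    rw [Qe]; split_ifs with hc
    · exact le_of_eq (Nat.mul_div_cancel' hc)
    · calc r * (e / r - 1) ≤ r * (e / r) := Nat.mul_le_mul (le_refl r) (Nat.sub_le _ _)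
        _ = e / r * r := Nat.mul_comm _ _
        _ ≤ e := Nat.div_mul_le_self e r
  exact ⟨h, by rw [se]; omega⟩

lemma se_cases {r e : ℕ} (hr : 2 ≤ r) (he : r ≤ e) :
    se r e = 0 ∨ (r + 1 ≤ se r e ∧ se r e ≤ 2 * r - 1) := by
  have h0 : 0 < r := by omega
  have hdm := Nat.div_add_mod e r
  have hmlt : e % r < r := Nat.mod_lt _ h0
  have hd1 : 1 ≤ e / r := (Nat.one_le_div_iff h0).mpr he
  by_cases hc : r ∣ e
  · left
    have h2 : r * (e / r) = e := Nat.mul_div_cancel' hc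
    rw [se, Qe, if_pos hc]; omega
  · right
    have ht0 : e % r ≠ 0 := fun h => hc (Nat.dvd_of_mod_eq_zero h)
    have h3 : r * (e / r - 1) + r = r * (e / r) := by
      obtain ⟨d', hd'⟩ : ∃ d', e / r = d' + 1 := ⟨e / r - 1, by omega⟩
      rw [hd']; simp [Nat.mul_succ]
    rw [se, Qe, if_neg hc]; omega

lemma key_product {r e : ℕ} (hr : 2 ≤ r) (he : r ≤ e) :
    e + 1 ≤ (r * Qe r e + 1) * (se r e + 1) := by
  obtain ⟨h1, h2⟩ := qe_mul_le (by omega) he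
  set A := r * Qe r e with hA
  set B := se r e with hB
  have h3 : A + B + 1 ≤ (A + 1) * (B + 1) := by nlinarith
  omega

/-- the large part of the decomposition -/
def an (r n : ℕ) : ℕ := ∏ p ∈ n.primeFactors, p ^ Qe r (n.factorization p)

/-- the small part of the decomposition -/
def kn (r n : ℕ) : ℕ := ∏ p ∈ n.primeFactors, p ^ se r (n.factorization p)

lemma an_pos (r n : ℕ) : 0 < an r n :=
  Finset.prod_pos fun p hp => pow_pos (Nat.prime_of_mem_primeFactors hp).pos _

lemma kn_pos (r n : ℕ) : 0 < kn r n :=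
  Finset.prod_pos fun p hp => pow_pos (Nat.prime_of_mem_primeFactors hp).pos _

lemma full_exp {r n : ℕ} (hn : n ≠ 0) (hfull : IsRFull r n) {p : ℕ}
    (hp : p ∈ n.primeFactors) : r ≤ n.factorization p := by
  have hpp := Nat.prime_of_mem_primeFactors hp
  exact (Nat.Prime.pow_dvd_iff_le_factorization hpp hn).mp
    (hfull p hpp (Nat.dvd_of_mem_primeFactors hp))

lemma an_pow_mul_kn {r n : ℕ} (hr : 2 ≤ r) (hn : n ≠ 0) (hfull : IsRFull r n) :
    an r n ^ r * kn r n = n := by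
  rw [an, kn, ← Finset.prod_pow, ← Finset.prod_mul_distrib]
  have h1 : ∀ p ∈ n.primeFactors,
      (p ^ Qe r (n.factorization p)) ^ r * p ^ se r (n.factorization p)
        = p ^ n.factorization p := by
    intro p hp
    rw [← pow_mul, ← pow_add]
    congr 1
    have h2 := (qe_mul_le (by omega) (full_exp hn hfull hp)).2
    have h3 : Qe r (n.factorization p) * r = r * Qe r (n.factorization p) := Nat.mul_comm _ _
    omega
  rw [Finset.prod_congr rfl h1, ← Nat.support_factorization]
  exact Nat.factorization_prod_pow_eq_self hn

lemma kn_fact {r n : ℕ} (p : ℕ) :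
    (kn r n).factorization p
      = if p ∈ n.primeFactors then se r (n.factorization p) else 0 :=
  fact_prod_pow_apply _ (fun q hq => Nat.prime_of_mem_primeFactors hq) _ p

lemma kn_primeFactors_subset {r n : ℕ} : (kn r n).primeFactors ⊆ n.primeFactors := by
  intro p hp
  have h1 : (kn r n).factorization p ≠ 0 := by
    rw [← Nat.support_factorization] at hp; exact Finsupp.mem_support_iff.mp hp
  by_contra h
  rw [kn_fact p, if_neg h] at h1; exact h1 rfl

lemma kn_KCond {r n : ℕ} (hr : 2 ≤ r) (hn : n ≠ 0) (hfull : IsRFull r n) :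
    KCond r (kn r n) := by
  intro p hp
  have hpn : p ∈ n.primeFactors := kn_primeFactors_subset hp
  have h1 : (kn r n).factorization p = se r (n.factorization p) := by
    rw [kn_fact p, if_pos hpn]
  have h2 : (kn r n).factorization p ≠ 0 := by
    rw [← Nat.support_factorization] at hp; exact Finsupp.mem_support_iff.mp hp
  rcases se_cases hr (full_exp hn hfull hpn) with h | h
  · exact absurd (h1.trans h) h2
  · rw [h1]; exact h

lemma tau_n_le {r n : ℕ} (hr : 2 ≤ r) (hn : n ≠ 0) (hfull : IsRFull r n) :
    n.divisors.card ≤ tm (r + 1) (an r n) * (kn r n).divisors.card := by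
  have htau : n.divisors.card = ∏ p ∈ n.primeFactors, (n.factorization p + 1) :=
    Nat.card_divisors hn
  have han : tm (r+1) (an r n)
      = ∏ p ∈ n.primeFactors, tm (r+1) (p ^ Qe r (n.factorization p)) := by
    refine ArithmeticFunction.IsMultiplicative.map_prod _ (tm_mult (r+1)) _ ?_
    intro p hp q hq hpq
    exact Nat.Coprime.pow _ _ ((Nat.coprime_primes (Nat.prime_of_mem_primeFactors hp)
      (Nat.prime_of_mem_primeFactors hq)).mpr hpq)
  have hkn : (kn r n).divisors.card
      = ∏ p ∈ n.primeFactors, (se r (n.factorization p) + 1) := by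
    have e1 : ∏ p ∈ (kn r n).primeFactors, ((kn r n).factorization p + 1)
        = ∏ p ∈ n.primeFactors, ((kn r n).factorization p + 1) := by
      refine Finset.prod_subset kn_primeFactors_subset ?_
      intro p _ hnp
      have h0 : (kn r n).factorization p = 0 := by
        rw [← Nat.support_factorization] at hnp
        exact Finsupp.notMem_support_iff.mp hnp
      omega

    rw [Nat.card_divisors (kn_pos r n).ne', e1]
    
    refine Finset.prod_congr rfl fun p hp => ?_
    rw [kn_fact p, if_pos hp]
  rw [htau, han, hkn, ← Finset.prod_mul_distrib]
  refine Finset.prod_le_prod' fun p hp => ?_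
  have he := full_exp hn hfull hp
  calc n.factorization p + 1
      ≤ (r * Qe r (n.factorization p) + 1) * (se r (n.factorization p) + 1) :=
        key_product hr he
    _ ≤ tm (r+1) (p ^ Qe r (n.factorization p)) * (se r (n.factorization p) + 1) :=
        Nat.mul_le_mul_right _
          (tm_prime_pow_lower r (Nat.prime_of_mem_primeFactors hp) _)

/-- radical of a number -/
def rad (k : ℕ) : ℕ := ∏ p ∈ k.primeFactors, p

lemma rad_pos (k : ℕ) : 0 < rad k :=
  Finset.prod_pos fun p hp => (Nat.prime_of_mem_primeFactors hp).pos

lemma rad_fact (k p : ℕ) :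
    (rad k).factorization p = if p ∈ k.primeFactors then 1 else 0 := by
  have h : rad k = ∏ q ∈ k.primeFactors, q ^ (1:ℕ) := by simp [rad]
  rw [h, fact_prod_pow_apply _ (fun q hq => Nat.prime_of_mem_primeFactors hq) _ p]

lemma rad_pow_dvd {r k : ℕ} (hk : k ≠ 0) (hK : KCond r k) : rad k ^ (r+1) ∣ k := by
  rw [← Nat.factorization_le_iff_dvd (pow_ne_zero _ (rad_pos k).ne') hk]
  rw [Finsupp.le_def]
  intro p
  rw [Nat.factorization_pow, Finsupp.smul_apply, rad_fact, smul_eq_mul]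
  by_cases hp : p ∈ k.primeFactors
  · rw [if_pos hp, mul_one]; exact (hK p hp).1
  · rw [if_neg hp, mul_zero]; omega

lemma dvd_rad_pow {r k : ℕ} (hk : k ≠ 0) (hK : KCond r k) : k ∣ rad k ^ (2*r-1) := by
  rw [← Nat.factorization_le_iff_dvd hk (pow_ne_zero _ (rad_pos k).ne')]
  rw [Finsupp.le_def]
  intro p
  rw [Nat.factorization_pow, Finsupp.smul_apply, rad_fact, smul_eq_mul]
  by_cases hp : p ∈ k.primeFactors
  · rw [if_pos hp, mul_one]; exact (hK p hp).2
  · rw [if_neg hp, mul_zero]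
    exact le_of_eq (Finsupp.notMem_support_iff.mp
      (by rw [Nat.support_factorization]; exact hp))

lemma tau_prod_pow_le (t : Finset ℕ) (ht : ∀ p ∈ t, p.Prime) (m : ℕ) :
    ((∏ p ∈ t, p) ^ m).divisors.card ≤ (m + 1) ^ t.card := by
  have hprodpos : 0 < ∏ p ∈ t, p := Finset.prod_pos fun p hp => (ht p hp).pos
  have hne : (∏ p ∈ t, p) ^ m ≠ 0 := pow_ne_zero _ hprodpos.ne'
  have hform : (∏ p ∈ t, p) ^ m = ∏ p ∈ t, p ^ m := (Finset.prod_pow t m _).symm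
  rw [Nat.card_divisors hne]
  have hsub : ((∏ p ∈ t, p) ^ m).primeFactors ⊆ t := by
    intro p hp
    have h1 : ((∏ p ∈ t, p) ^ m).factorization p ≠ 0 := by
      rw [← Nat.support_factorization] at hp; exact Finsupp.mem_support_iff.mp hp
    by_contra hcon
    rw [hform, fact_prod_pow_apply t ht _ p, if_neg hcon] at h1
    exact h1 rfl
  calc ∏ p ∈ ((∏ p ∈ t, p) ^ m).primeFactors, (((∏ p ∈ t, p) ^ m).factorization p + 1)
      ≤ ∏ p ∈ ((∏ p ∈ t, p) ^ m).primeFactors, (m + 1) := by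
        refine Finset.prod_le_prod' fun p hp => ?_
        rw [hform, fact_prod_pow_apply t ht _ p]
        split_ifs <;> omega
    _ = (m + 1) ^ ((∏ p ∈ t, p) ^ m).primeFactors.card := Finset.prod_const _
    _ ≤ (m + 1) ^ t.card := Nat.pow_le_pow_right (by omega) (Finset.card_le_card hsub)

lemma E2 {r : ℕ} (hr : 2 ≤ r) (N : ℕ) :
    ∑ k ∈ (Icc 1 N).filter (fun k => KCond r k),
        (k.divisors.card : ℝ) * (k : ℝ) ^ (-((1:ℝ)/r))
      ≤ ((2*r^2 : ℕ) : ℝ) ^ ((2*r^2)^(2*r) : ℕ) * (1 + 2*(r:ℝ)) := by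
  classical
  have hr0 : (0:ℝ) < (r:ℝ) := by exact_mod_cast (by omega : 0 < r)
  have hrne : (r:ℝ) ≠ 0 := ne_of_gt hr0
  set C : ℝ := ((2*r^2 : ℕ) : ℝ) with hCdef
  set B₀ : ℕ := (2*r^2)^(2*r) with hB₀def
  have hC1 : (1:ℝ) ≤ C := by
    rw [hCdef]; exact_mod_cast (by nlinarith : 1 ≤ 2*r^2)
  have hC0 : (0:ℝ) ≤ C := by linarith
  set γ : ℝ := 1/(2*(r:ℝ)) with hγdef
  have hγ : (0:ℝ) < γ := by rw [hγdef]; positivity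
  set S := (Icc 1 N).filter (fun k => KCond r k) with hSdef
  have hmaps : ∀ k ∈ S, rad k ∈ Icc 1 N := by
    intro k hk
    obtain ⟨hk1, _⟩ := Finset.mem_filter.mp hk
    obtain ⟨hk1a, hk1b⟩ := Finset.mem_Icc.mp hk1
    exact Finset.mem_Icc.mpr ⟨rad_pos k,
      Nat.le_trans (Nat.le_of_dvd (by omega) (Nat.prod_primeFactors_dvd k)) hk1b⟩
  rw [← Finset.sum_fiberwise_of_maps_to hmaps
    (fun k => (k.divisors.card : ℝ) * (k : ℝ) ^ (-((1:ℝ)/r)))]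
  have hfiber : ∀ b ∈ Icc 1 N,
      ∑ k ∈ S.filter (fun k => rad k = b),
          (k.divisors.card : ℝ) * (k:ℝ) ^ (-((1:ℝ)/r))
        ≤ C ^ B₀ * (b:ℝ) ^ (-(1 + γ)) := by
    intro b hb
    obtain ⟨hb1, hbN⟩ := Finset.mem_Icc.mp hb
    have hbR : (0:ℝ) < (b:ℝ) := by exact_mod_cast (by omega : 0 < b)
    rcases Finset.eq_empty_or_nonempty (S.filter (fun k => rad k = b)) with hemp | hne
    · rw [hemp, Finset.sum_empty]; positivity
    obtain ⟨k₀, hk₀⟩ := hne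
    obtain ⟨hk₀S, hk₀b⟩ := Finset.mem_filter.mp hk₀
    obtain ⟨hk₀I, hk₀K⟩ := Finset.mem_filter.mp hk₀S
    have hk₀1 : 1 ≤ k₀ := (Finset.mem_Icc.mp hk₀I).1
    set t := k₀.primeFactors with htdef
    have htp : ∀ p ∈ t, p.Prime := fun p hp => Nat.prime_of_mem_primeFactors hp
    have hbt : b = ∏ p ∈ t, p := by rw [← hk₀b]; rfl
    -- bound each term of the fiber
    set Tb : ℝ := (((b ^ (2*r-1)).divisors.card : ℕ) : ℝ)
        * (((b ^ (r+1) : ℕ)) : ℝ) ^ (-((1:ℝ)/r)) with hTbdef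
    have hterm : ∀ k ∈ S.filter (fun k => rad k = b),
        (k.divisors.card : ℝ) * (k:ℝ) ^ (-((1:ℝ)/r)) ≤ Tb := by
      intro k hk
      obtain ⟨hkS, hkb⟩ := Finset.mem_filter.mp hk
      obtain ⟨hkI, hkK⟩ := Finset.mem_filter.mp hkS
      have hk1 : 1 ≤ k := (Finset.mem_Icc.mp hkI).1
      have hdvd2 : k ∣ b ^ (2*r-1) := by rw [← hkb]; exact dvd_rad_pow (by omega) hkK
      have hdvd1 : b ^ (r+1) ∣ k := by rw [← hkb]; exact rad_pow_dvd (by omega) hkK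
      have h1 : (k.divisors.card : ℝ) ≤ ((b ^ (2*r-1)).divisors.card : ℝ) := by
        exact_mod_cast Finset.card_le_card
          (Nat.divisors_subset_of_dvd (pow_ne_zero _ (by omega)) hdvd2)
      have h2 : (k:ℝ) ^ (-((1:ℝ)/r)) ≤ (((b ^ (r+1) : ℕ)) : ℝ) ^ (-((1:ℝ)/r)) := by
        have hx : (0:ℝ) < ((b ^ (r+1) : ℕ) : ℝ) := by
          exact_mod_cast pow_pos (by omega : 0 < b) (r+1)
        refine Real.rpow_le_rpow_of_nonpos hx ?_ (neg_nonpos.mpr (by positivity))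
        exact_mod_cast Nat.le_of_dvd (by omega) hdvd1
      refine mul_le_mul h1 h2 (by positivity) (by positivity)
    calc ∑ k ∈ S.filter (fun k => rad k = b),
          (k.divisors.card : ℝ) * (k:ℝ) ^ (-((1:ℝ)/r))
        ≤ (S.filter (fun k => rad k = b)).card • Tb :=
          Finset.sum_le_card_nsmul _ _ _ hterm
      _ = ((S.filter (fun k => rad k = b)).card : ℝ) * Tb := nsmul_eq_mul _ _
      _ ≤ ((b ^ (r-2)).divisors.card : ℝ) * Tb := by
          have hTb0 : (0:ℝ) ≤ Tb := by rw [hTbdef]; positivity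
          refine mul_le_mul_of_nonneg_right ?_ hTb0
          have hcard : (S.filter (fun k => rad k = b)).card ≤ (b ^ (r-2)).divisors.card := by
            refine Finset.card_le_card_of_injOn (fun k => k / b ^ (r+1)) ?_ ?_
            · intro k hk
              obtain ⟨hkS, hkb⟩ := Finset.mem_filter.mp hk
              obtain ⟨hkI, hkK⟩ := Finset.mem_filter.mp hkS
              have hk1 : 1 ≤ k := (Finset.mem_Icc.mp hkI).1
              have hdvd1 : b ^ (r+1) ∣ k := by rw [← hkb]; exact rad_pow_dvd (by omega) hkK
              have hdvd2 : k ∣ b ^ (2*r-1) := by rw [← hkb]; exact dvd_rad_pow (by omega) hkK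
              have hkrep : b ^ (r+1) * (k / b ^ (r+1)) = k := Nat.mul_div_cancel' hdvd1
              have hsplit : b ^ (2*r-1) = b ^ (r+1) * b ^ (r-2) := by
                rw [← pow_add]; congr 1; omega
              simp only [Finset.mem_coe]
              rw [Nat.mem_divisors]
              constructor
              · have hdvd3 : b ^ (r+1) * (k / b ^ (r+1)) ∣ b ^ (r+1) * b ^ (r-2) := by
                  rw [hkrep, ← hsplit]; exact hdvd2
                exact (Nat.mul_dvd_mul_iff_left (pow_pos (by omega : 0 < b) _)).mp hdvd3
              · exact pow_ne_zero _ (by omega)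
            · intro k₁ hk₁ k₂ hk₂ heq
              simp only [Finset.coe_filter, Set.mem_setOf_eq] at hk₁ hk₂
              obtain ⟨hk₁S, hk₁b⟩ := hk₁
              obtain ⟨hk₁I, hk₁K⟩ := Finset.mem_filter.mp hk₁S
              obtain ⟨hk₂S, hk₂b⟩ := hk₂
              obtain ⟨hk₂I, hk₂K⟩ := Finset.mem_filter.mp hk₂S
              have hk₁0 : k₁ ≠ 0 := by have := (Finset.mem_Icc.mp hk₁I).1; omega
              have hk₂0 : k₂ ≠ 0 := by have := (Finset.mem_Icc.mp hk₂I).1; omega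
              have d₁ : b ^ (r+1) ∣ k₁ := by rw [← hk₁b]; exact rad_pow_dvd hk₁0 hk₁K
              have d₂ : b ^ (r+1) ∣ k₂ := by rw [← hk₂b]; exact rad_pow_dvd hk₂0 hk₂K
              have e₁ : b ^ (r+1) * (k₁ / b ^ (r+1)) = k₁ := Nat.mul_div_cancel' d₁
              have e₂ : b ^ (r+1) * (k₂ / b ^ (r+1)) = k₂ := Nat.mul_div_cancel' d₂
              dsimp only at heq
              rw [← e₁, ← e₂, heq]
          exact_mod_cast hcard
      _ ≤ (C ^ B₀ * (b:ℝ) ^ γ) * ((((b ^ (r+1) : ℕ)) : ℝ) ^ (-((1:ℝ)/r))) := by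
          rw [hTbdef, ← mul_assoc]
          refine mul_le_mul_of_nonneg_right ?_ (by positivity)
          -- τ(b^{r-2}) * τ(b^{2r-1}) ≤ C^B₀ * b^γ
          have hb1' : (b ^ (r-2)).divisors.card ≤ (r-1) ^ t.card := by
            have h := tau_prod_pow_le t htp (r-2)
            rw [← hbt] at h
            have : r - 2 + 1 = r - 1 := by omega
            rwa [this] at h
          have hb2' : (b ^ (2*r-1)).divisors.card ≤ (2*r) ^ t.card := by
            have h := tau_prod_pow_le t htp (2*r-1)
            rw [← hbt] at h
            have : 2*r - 1 + 1 = 2*r := by omega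
            rwa [this] at h
          have hprod : ((b ^ (r-2)).divisors.card : ℝ) * ((b ^ (2*r-1)).divisors.card : ℝ)
              ≤ C ^ t.card := by
            have hnat : (b ^ (r-2)).divisors.card * (b ^ (2*r-1)).divisors.card
                ≤ (2*r^2) ^ t.card := by
              calc (b ^ (r-2)).divisors.card * (b ^ (2*r-1)).divisors.card
                  ≤ (r-1) ^ t.card * (2*r) ^ t.card := Nat.mul_le_mul hb1' hb2'
                _ = ((r-1) * (2*r)) ^ t.card := (Nat.mul_pow _ _ _).symm
                _ ≤ (2*r^2) ^ t.card := by
                    refine Nat.pow_le_pow_left ?_ _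
                    calc (r-1) * (2*r) ≤ r * (2*r) := Nat.mul_le_mul_right _ (Nat.sub_le _ _)
                      _ = 2*r^2 := by ring
            calc ((b ^ (r-2)).divisors.card : ℝ) * ((b ^ (2*r-1)).divisors.card : ℝ)
                = (((b ^ (r-2)).divisors.card * (b ^ (2*r-1)).divisors.card : ℕ) : ℝ) := by
                  push_cast; ring
              _ ≤ (((2*r^2) ^ t.card : ℕ) : ℝ) := by exact_mod_cast hnat
              _ = C ^ t.card := by rw [hCdef]; push_cast; ring
          have homega : C ^ t.card ≤ C ^ B₀ * (b:ℝ) ^ γ := by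
            have hB : ∀ p : ℕ, p.Prime → (B₀ : ℝ) < p → C ≤ (p:ℝ) ^ γ := by
              intro p hp hpB
              have h1 : C ^ ((2*r : ℕ):ℝ) ≤ (p:ℝ) := by
                rw [Real.rpow_natCast]
                have : ((B₀ : ℕ):ℝ) ≤ (p:ℝ) := le_of_lt hpB
                rw [hB₀def] at this
                calc C ^ (2*r) = (((2*r^2)^(2*r) : ℕ) : ℝ) := by rw [hCdef]; push_cast; ring
                  _ ≤ (p:ℝ) := by exact_mod_cast this
              have h2 := Real.rpow_le_rpow (by positivity) h1 (le_of_lt hγ)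
              rw [← Real.rpow_mul hC0] at h2
              have h3 : ((2*r : ℕ):ℝ) * γ = 1 := by
                rw [hγdef]; push_cast; field_simp
              rwa [h3, Real.rpow_one] at h2
            have := omega_pow_le hC1 hγ B₀ hB t htp
            rwa [← Nat.cast_prod, ← hbt] at this
          calc ((b ^ (r-2)).divisors.card : ℝ) * ((b ^ (2*r-1)).divisors.card : ℝ)
              ≤ C ^ t.card := hprod
            _ ≤ C ^ B₀ * (b:ℝ) ^ γ := homega
      _ = C ^ B₀ * (b:ℝ) ^ (-(1 + γ)) := by
          rw [mul_assoc]
          congr 1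
          rw [Nat.cast_pow, ← Real.rpow_natCast (b:ℝ) (r+1), ← Real.rpow_mul (le_of_lt hbR),
            ← Real.rpow_add hbR]
          congr 1
          rw [hγdef]
          push_cast
          field_simp
          ring
  calc ∑ b ∈ Icc 1 N, ∑ k ∈ S.filter (fun k => rad k = b),
        (k.divisors.card : ℝ) * (k:ℝ) ^ (-((1:ℝ)/r))
      ≤ ∑ b ∈ Icc 1 N, C ^ B₀ * (b:ℝ) ^ (-(1 + γ)) := Finset.sum_le_sum hfiber
    _ = C ^ B₀ * ∑ b ∈ Icc 1 N, (b:ℝ) ^ (-(1 + γ)) := by rw [Finset.mul_sum]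
    _ ≤ C ^ B₀ * (1 + 1/γ) := by
        refine mul_le_mul_of_nonneg_left (p_series_sum hγ N) (by positivity)
    _ = C ^ B₀ * (1 + 2*(r:ℝ)) := by rw [hγdef, one_div_one_div]

/-- the range bound for the `a` variable -/
noncomputable def AB (r N k : ℕ) : ℕ := ⌊((N:ℝ)/(k:ℝ)) ^ ((1:ℝ)/r)⌋₊

lemma main_bound {r N : ℕ} (hr : 2 ≤ r) :
    ∑ n ∈ (Icc 1 N).filter (fun n => IsRFull r n), (n.divisors.card : ℝ)
      ≤ ∑ k ∈ (Icc 1 N).filter (fun k => KCond r k),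
          (k.divisors.card : ℝ) * ∑ a ∈ Icc 1 (AB r N k), (tm (r+1) a : ℝ) := by
  classical
  have hr0 : (0:ℝ) < (r:ℝ) := by exact_mod_cast (by omega : 0 < r)
  set S := (Icc 1 N).filter (fun n => IsRFull r n) with hS
  set T := ((Icc 1 N).filter (fun k => KCond r k)).sigma (fun k => Icc 1 (AB r N k)) with hT
  set fm : ℕ → (Σ _ : ℕ, ℕ) := fun n => ⟨kn r n, an r n⟩ with hfm
  set W : (Σ _ : ℕ, ℕ) → ℝ := fun y => (tm (r+1) y.2 : ℝ) * (y.1.divisors.card : ℝ) with hW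
  have hSfacts : ∀ n ∈ S, 1 ≤ n ∧ n ≤ N ∧ IsRFull r n := by
    intro n hn
    obtain ⟨hI, hF⟩ := Finset.mem_filter.mp hn
    obtain ⟨h1, h2⟩ := Finset.mem_Icc.mp hI
    exact ⟨h1, h2, hF⟩
  have hWfm : ∀ n ∈ S, (n.divisors.card : ℝ) ≤ W (fm n) := by
    intro n hn
    obtain ⟨h1, _, hF⟩ := hSfacts n hn
    have h3 := tau_n_le hr (by omega : n ≠ 0) hF
    show (n.divisors.card : ℝ) ≤ (tm (r+1) (an r n) : ℝ) * ((kn r n).divisors.card : ℝ)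
    exact_mod_cast h3
  have hfmT : ∀ n ∈ S, fm n ∈ T := by
    intro n hn
    obtain ⟨h1, h2, hF⟩ := hSfacts n hn
    have heq := an_pow_mul_kn hr (by omega : n ≠ 0) hF
    have hknd : kn r n ∣ n := ⟨an r n ^ r, heq.symm.trans (mul_comm _ _)⟩
    have hknN : kn r n ≤ N := le_trans (Nat.le_of_dvd (by omega) hknd) h2
    have hkpos : (0:ℝ) < (kn r n : ℝ) := by exact_mod_cast kn_pos r n
    have hle : ((an r n : ℝ)) ^ (r:ℕ) * (kn r n : ℝ) ≤ (N:ℝ) := by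
      have : ((an r n ^ r * kn r n : ℕ) : ℝ) ≤ (N:ℝ) := by
        rw [heq]; exact_mod_cast h2
      push_cast at this
      exact this
    have h3 : (an r n : ℝ) ^ (r:ℕ) ≤ (N:ℝ) / (kn r n : ℝ) := by
      rw [le_div_iff₀ hkpos]; exact hle
    have h4 : (an r n : ℝ) ≤ ((N:ℝ)/(kn r n : ℝ)) ^ ((1:ℝ)/r) := by
      have h5 : (an r n : ℝ) = ((an r n : ℝ) ^ (r:ℕ)) ^ ((1:ℝ)/r) := by
        rw [← Real.rpow_natCast (an r n : ℝ) r, ← Real.rpow_mul (Nat.cast_nonneg _),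
          mul_one_div, div_self (ne_of_gt hr0), Real.rpow_one]
      rw [h5]
      exact Real.rpow_le_rpow (by positivity) h3 (by positivity)
    refine Finset.mem_sigma.mpr ⟨Finset.mem_filter.mpr
      ⟨Finset.mem_Icc.mpr ⟨kn_pos r n, hknN⟩, kn_KCond hr (by omega) hF⟩,
      Finset.mem_Icc.mpr ⟨an_pos r n, ?_⟩⟩
    exact Nat.le_floor h4
  have hinj : ∀ n₁ ∈ S, ∀ n₂ ∈ S, fm n₁ = fm n₂ → n₁ = n₂ := by
    intro n₁ h₁ n₂ h₂ he
    obtain ⟨h11, _, hF1⟩ := hSfacts n₁ h₁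
    obtain ⟨h21, _, hF2⟩ := hSfacts n₂ h₂
    have e1 := an_pow_mul_kn hr (by omega : n₁ ≠ 0) hF1
    have e2 := an_pow_mul_kn hr (by omega : n₂ ≠ 0) hF2
    obtain ⟨hk, ha⟩ := Sigma.mk.inj_iff.mp he
    rw [← e1, ← e2, hk, eq_of_heq ha]
  calc ∑ n ∈ S, (n.divisors.card : ℝ)
      ≤ ∑ n ∈ S, W (fm n) := Finset.sum_le_sum hWfm
    _ = ∑ y ∈ S.image fm, W y := (Finset.sum_image hinj).symm
    _ ≤ ∑ y ∈ T, W y := by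
        refine Finset.sum_le_sum_of_subset_of_nonneg ?_ (fun y _ _ => by
          rw [hW]; positivity)
        intro y hy
        obtain ⟨n, hn, hny⟩ := Finset.mem_image.mp hy
        exact hny ▸ hfmT n hn
    _ = ∑ k ∈ (Icc 1 N).filter (fun k => KCond r k),
          ∑ a ∈ Icc 1 (AB r N k), W ⟨k, a⟩ := by
        rw [hT]; exact Finset.sum_sigma _ _ _
    _ = ∑ k ∈ (Icc 1 N).filter (fun k => KCond r k),
          (k.divisors.card : ℝ) * ∑ a ∈ Icc 1 (AB r N k), (tm (r+1) a : ℝ) := by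
        refine Finset.sum_congr rfl fun k _ => ?_
        rw [Finset.mul_sum]
        refine Finset.sum_congr rfl fun a _ => ?_
        rw [hW]
        ring

end RFullAux

theorem sum_rfull_tau_bound (r : ℕ) (hr : 2 ≤ r) :
    ∃ C : ℝ, 0 < C ∧ ∀ x : ℝ, 2 ≤ x →
      ∑ n ∈ Finset.Icc 1 ⌊x⌋₊, sFull r n * (n.divisors.card : ℝ)
        ≤ C * x ^ ((1 : ℝ) / r) * (Real.log x) ^ r := by
  classical
  open RFullAux in
  set C2 : ℝ := ((2*r^2 : ℕ) : ℝ) ^ ((2*r^2)^(2*r) : ℕ) * (1 + 2*(r:ℝ)) with hC2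
  set CL : ℝ := (1 + 1/Real.log 2) ^ r with hCL
  have hlog2 : (0:ℝ) < Real.log 2 := Real.log_pos (by norm_num)
  have hrR : (0:ℝ) < (r:ℝ) := by exact_mod_cast (by omega : 0 < r)
  have hC2pos : 0 < C2 := by
    rw [hC2]
    have h1 : (0:ℝ) < ((2*r^2 : ℕ):ℝ) := by
      exact_mod_cast (by nlinarith : 0 < 2*r^2)
    positivity
  have hCLpos : 0 < CL := by rw [hCL]; positivity
  refine ⟨C2 * CL, by positivity, ?_⟩
  intro x hx
  have hx0 : (0:ℝ) < x := by linarith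
  set N := ⌊x⌋₊ with hN
  have hN2 : 2 ≤ N := Nat.le_floor (by exact_mod_cast hx)
  have hNpos : (0:ℝ) < (N:ℝ) := by exact_mod_cast (by omega : 0 < N)
  have hNx : (N:ℝ) ≤ x := Nat.floor_le (le_of_lt hx0)
  have hlogN0 : 0 ≤ Real.log N := Real.log_natCast_nonneg N
  have hlogx0 : 0 < Real.log x := Real.log_pos (by linarith)
  have step0 : ∑ n ∈ Finset.Icc 1 N, sFull r n * (n.divisors.card : ℝ)
      = ∑ n ∈ (Finset.Icc 1 N).filter (fun n => IsRFull r n), (n.divisors.card : ℝ) := by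
    rw [Finset.sum_filter]
    refine Finset.sum_congr rfl fun n hn => ?_
    obtain ⟨h1, _⟩ := Finset.mem_Icc.mp hn
    rw [sFull]
    by_cases h : IsRFull r n
    · rw [if_pos ⟨h1, h⟩, if_pos h, one_mul]
    · rw [if_neg (fun hc => h hc.2), if_neg h, zero_mul]
  rw [step0]
  have hinner : ∀ k ∈ (Finset.Icc 1 N).filter (fun k => KCond r k),
      (k.divisors.card : ℝ) * ∑ a ∈ Finset.Icc 1 (AB r N k), (tm (r+1) a : ℝ)
        ≤ (k.divisors.card : ℝ) * ((k:ℝ) ^ (-((1:ℝ)/r))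
            * ((N:ℝ) ^ ((1:ℝ)/r) * (1 + Real.log N) ^ r)) := by
    intro k hk
    obtain ⟨hkI, hkK⟩ := Finset.mem_filter.mp hk
    obtain ⟨hk1, hkN⟩ := Finset.mem_Icc.mp hkI
    have hkpos : (0:ℝ) < (k:ℝ) := by exact_mod_cast (by omega : 0 < k)
    refine mul_le_mul_of_nonneg_left ?_ (by positivity)
    set A := AB r N k with hA
    have hX1 : (1:ℝ) ≤ (N:ℝ)/(k:ℝ) := by
      rw [le_div_iff₀ hkpos, one_mul]; exact_mod_cast hkN
    have hXpos : (0:ℝ) < ((N:ℝ)/(k:ℝ)) ^ ((1:ℝ)/r) := by positivity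
    have hA1 : 1 ≤ A := by
      rw [hA, AB]
      refine Nat.le_floor ?_
      rw [Nat.cast_one]
      exact Real.one_le_rpow hX1 (by positivity)
    have hAle : (A:ℝ) ≤ ((N:ℝ)/(k:ℝ)) ^ ((1:ℝ)/r) := by
      rw [hA, AB]; exact Nat.floor_le (le_of_lt hXpos)
    have hAN : (A:ℝ) ≤ (N:ℝ) := by
      refine hAle.trans ?_
      calc ((N:ℝ)/(k:ℝ)) ^ ((1:ℝ)/r) ≤ ((N:ℝ)/(k:ℝ)) ^ (1:ℝ) := by
            refine Real.rpow_le_rpow_of_exponent_le hX1 ?_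
            rw [div_le_one hrR]
            exact_mod_cast (by omega : 1 ≤ r)
        _ = (N:ℝ)/(k:ℝ) := Real.rpow_one _
        _ ≤ (N:ℝ) := by
            rw [div_le_iff₀ hkpos]
            nlinarith [(by exact_mod_cast hk1 : (1:ℝ) ≤ (k:ℝ))]
    have hlogA : Real.log A ≤ Real.log N :=
      Real.log_le_log (by exact_mod_cast hA1) hAN
    calc ∑ a ∈ Finset.Icc 1 A, (tm (r+1) a : ℝ)
        ≤ (A:ℝ) * (1 + Real.log A) ^ r := tm_sum_le r A
      _ ≤ ((N:ℝ)/(k:ℝ)) ^ ((1:ℝ)/r) * (1 + Real.log N) ^ r := by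
          refine mul_le_mul hAle (pow_le_pow_left₀ (by positivity) (by linarith) r)
            (by positivity) (by positivity)
      _ = (k:ℝ) ^ (-((1:ℝ)/r)) * ((N:ℝ) ^ ((1:ℝ)/r) * (1 + Real.log N) ^ r) := by
          rw [Real.div_rpow (le_of_lt hNpos) (le_of_lt hkpos),
            Real.rpow_neg (le_of_lt hkpos), div_eq_mul_inv]
          ring
  calc ∑ n ∈ (Finset.Icc 1 N).filter (fun n => IsRFull r n), (n.divisors.card : ℝ)
      ≤ ∑ k ∈ (Finset.Icc 1 N).filter (fun k => KCond r k),
          (k.divisors.card : ℝ) * ∑ a ∈ Finset.Icc 1 (AB r N k), (tm (r+1) a : ℝ) :=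
        main_bound hr
    _ ≤ ∑ k ∈ (Finset.Icc 1 N).filter (fun k => KCond r k),
          (k.divisors.card : ℝ) * ((k:ℝ) ^ (-((1:ℝ)/r))
            * ((N:ℝ) ^ ((1:ℝ)/r) * (1 + Real.log N) ^ r)) := Finset.sum_le_sum hinner
    _ = ((N:ℝ) ^ ((1:ℝ)/r) * (1 + Real.log N) ^ r)
          * ∑ k ∈ (Finset.Icc 1 N).filter (fun k => KCond r k),
              (k.divisors.card : ℝ) * (k:ℝ) ^ (-((1:ℝ)/r)) := by
        rw [Finset.mul_sum]
        refine Finset.sum_congr rfl fun k _ => by ring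
    _ ≤ ((N:ℝ) ^ ((1:ℝ)/r) * (1 + Real.log N) ^ r) * C2 := by
        refine mul_le_mul_of_nonneg_left ?_ (by positivity)
        rw [hC2]
        exact E2 hr N
    _ ≤ (x ^ ((1:ℝ)/r) * ((1 + 1/Real.log 2) * Real.log x) ^ r) * C2 := by
        refine mul_le_mul_of_nonneg_right (mul_le_mul ?_ ?_ (by positivity) (by positivity))
          (le_of_lt hC2pos)
        · exact Real.rpow_le_rpow (le_of_lt hNpos) hNx (by positivity)
        · refine pow_le_pow_left₀ (by linarith) ?_ r
          have hlogNx : Real.log N ≤ Real.log x := Real.log_le_log hNpos hNx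
          have h1 : Real.log 2 ≤ Real.log x := Real.log_le_log (by norm_num) hx
          have h2 : 1 ≤ Real.log x / Real.log 2 := by
            rw [le_div_iff₀ hlog2, one_mul]; exact h1
          calc 1 + Real.log N ≤ 1 + Real.log x := by linarith
            _ ≤ Real.log x / Real.log 2 + Real.log x := by linarith
            _ = (1 + 1/Real.log 2) * Real.log x := by field_simp; ring
    _ = C2 * CL * x ^ ((1:ℝ)/r) * (Real.log x) ^ r := by
        rw [hCL, mul_pow]
        ring
end

section
/- Every r-full integer n ≥ 1 can be written uniquely as n = a_1^r · a_2^{r+1} · ... · a_r^{2r-1}, where a_2 · a_3 · ... · a_r is squarefree and the a_i for 2 ≤ i < j ≤ r are pairwise coprime. -/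
open Finset

lemma fact_prod_pow (s : Finset ℕ) (hs : ∀ p ∈ s, p.Prime) (K : ℕ → ℕ) (q : ℕ) :
    (∏ p ∈ s, p ^ K p).factorization q = if q ∈ s then K q else 0 := by
  rw [Nat.factorization_prod (fun p hp => pow_ne_zero _ (hs p hp).pos.ne')]
  rw [Finsupp.finset_sum_apply]
  rw [Finset.sum_congr rfl (fun p hp => ?_), Finset.sum_ite_eq' s q K]
  rw [Nat.factorization_pow, Finsupp.smul_apply, (hs p hp).factorization]
  simp [Finsupp.single_apply, mul_comm]

lemma fact_prod_apply {α : Type*} (s : Finset α) (f : α → ℕ) (hf : ∀ i ∈ s, f i ≠ 0) (q : ℕ) :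
    (∏ i ∈ s, f i).factorization q = ∑ i ∈ s, (f i).factorization q := by
  rw [Nat.factorization_prod hf, Finsupp.finset_sum_apply]

lemma key (r n : ℕ) (hr : 2 ≤ r) (hn : n ≠ 0) (b : Fin r → ℕ) (hb : ∀ i, 0 < b i)
    (h2 : n = ∏ i : Fin r, b i ^ (r + i.val))
    (h3 : Squarefree (∏ i ∈ Finset.univ.filter (fun i : Fin r => 1 ≤ i.val), b i))
    (q : ℕ) :
    ((b ⟨0, by omega⟩).factorization q =
      if n.factorization q % r = 0 then n.factorization q / r
      else n.factorization q / r - 1) ∧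
    ∀ i : Fin r, 1 ≤ i.val →
      (b i).factorization q = if n.factorization q % r = i.val then 1 else 0 := by
  set T := Finset.univ.filter (fun i : Fin r => 1 ≤ i.val) with hT
  set v : Fin r → ℕ := fun i => (b i).factorization q with hv
  set e := n.factorization q with he
  have hsplit : (Finset.univ.filter (fun i : Fin r => ¬ 1 ≤ i.val)) = {⟨0, by omega⟩} := by
    ext i
    simp [Fin.ext_iff]
  have hE : e = r * v ⟨0, by omega⟩ + ∑ i ∈ T, (r + i.val) * v i := by
    rw [he, h2, fact_prod_apply _ _ (fun i _ => pow_ne_zero _ (hb i).ne')]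
    rw [← Finset.sum_filter_add_sum_filter_not Finset.univ (fun i : Fin r => 1 ≤ i.val)]
    rw [hsplit, Finset.sum_singleton, add_comm]
    simp [Nat.factorization_pow, hv, hT]
  have hS : ∑ i ∈ T, v i ≤ 1 := by
    have hP : (∏ i ∈ T, b i) ≠ 0 := by
      exact (Finset.prod_pos (fun i _ => hb i)).ne'
    have := (Nat.squarefree_iff_factorization_le_one hP).mp h3 q
    rwa [fact_prod_apply _ _ (fun i _ => (hb i).ne')] at this
  rcases Nat.le_one_iff_eq_zero_or_eq_one.mp hS with h0 | h1
  · have hz : ∀ i ∈ T, v i = 0 := Finset.sum_eq_zero_iff.mp h0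
    have hE' : e = r * v ⟨0, by omega⟩ := by
      rw [hE, Finset.sum_eq_zero (fun i hi => by rw [hz i hi, mul_zero]), add_zero]
    have hm : e % r = 0 := by rw [hE']; exact Nat.mul_mod_right r _
    constructor
    · rw [if_pos hm, hE', Nat.mul_div_cancel_left _ (by omega : 0 < r)]
    · intro i hi
      rw [if_neg (by omega)]
      exact hz i (by simp [hT, hi])
  · -- extract the unique index with v = 1
    obtain ⟨i0, hi0, hvi0⟩ : ∃ i0 ∈ T, v i0 ≠ 0 := by
      by_contra hc
      push_neg at hc
      rw [Finset.sum_eq_zero hc] at h1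
      omega
    have hvle : v i0 ≤ 1 := h1 ▸ Finset.single_le_sum (fun i _ => Nat.zero_le _) hi0
    have hv1 : v i0 = 1 := by omega
    have hrest : ∀ j ∈ T, j ≠ i0 → v j = 0 := by
      have := Finset.add_sum_erase T v hi0
      rw [h1, hv1] at this
      intro j hj hne
      exact Finset.sum_eq_zero_iff.mp (by omega) j (Finset.mem_erase.mpr ⟨hne, hj⟩)
    have hi0T : 1 ≤ i0.val := by simpa [hT] using hi0
    have hE' : e = r * (v ⟨0, by omega⟩ + 1) + i0.val := by
      rw [hE, Finset.sum_eq_single_of_mem i0 hi0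
        (fun j hj hne => by rw [hrest j hj hne, mul_zero]), hv1]
      ring
    have hm : e % r = i0.val := by
      rw [hE', Nat.mul_add_mod, Nat.mod_eq_of_lt i0.isLt]
    have hd : e / r = v ⟨0, by omega⟩ + 1 := by
      rw [hE', Nat.mul_add_div (by omega), Nat.div_eq_of_lt i0.isLt, add_zero]
    constructor
    · rw [if_neg (by omega)]
      show v ⟨0, by omega⟩ = e / r - 1
      omega
    · intro i hi
      by_cases hii : i = i0
      · rw [hii, if_pos hm]
        exact hv1
      · rw [if_neg (fun hc => hii (Fin.ext (by omega)))]
        exact hrest i (by simp [hT, hi]) hii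

/-- Every `r`-full integer `n ≥ 1` is uniquely of the form
`n = a 0 ^ r * a 1 ^ (r+1) * ⋯ * a (r-1) ^ (2r-1)` with `a 1 ⋯ a (r-1)` squarefree
and the `a i`, `i ≥ 1`, pairwise coprime. -/
theorem rfull_unique_factorization (r : ℕ) (hr : 2 ≤ r) (n : ℕ) (hn : 1 ≤ n)
    (hfull : IsRFull r n) :
    ∃! a : Fin r → ℕ,
      (∀ i, 0 < a i) ∧
      n = ∏ i : Fin r, a i ^ (r + i.val) ∧
      Squarefree (∏ i ∈ Finset.univ.filter (fun i : Fin r => 1 ≤ i.val), a i) ∧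
      (∀ i j : Fin r, 1 ≤ i.val → 1 ≤ j.val → i ≠ j → Nat.Coprime (a i) (a j)) := by

  have hn0 : n ≠ 0 := by omega
  have hrpos : 0 < r := by omega
  set K : ℕ → ℕ := fun p => if n.factorization p % r = 0 then n.factorization p / r
      else n.factorization p / r - 1 with hK
  set a : Fin r → ℕ := fun i => if i.val = 0 then ∏ p ∈ n.primeFactors, p ^ K p
      else ∏ p ∈ n.primeFactors.filter (fun p => n.factorization p % r = i.val), p with haa
  have hpos : ∀ i, 0 < a i := by
    intro i
    rw [haa]
    dsimp only
    split_ifs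
    · exact Finset.prod_pos fun p hp => pow_pos (Nat.prime_of_mem_primeFactors hp).pos _
    · exact Finset.prod_pos fun p hp =>
        (Nat.prime_of_mem_primeFactors (Finset.mem_filter.mp hp).1).pos
  have ha0 : ∀ q, (a ⟨0, hrpos⟩).factorization q = if q ∈ n.primeFactors then K q else 0 := by
    intro q
    rw [show a ⟨0, hrpos⟩ = ∏ p ∈ n.primeFactors, p ^ K p from by simp [haa]]
    exact fact_prod_pow _ (fun p hp => Nat.prime_of_mem_primeFactors hp) K q
  have hai : ∀ i : Fin r, 1 ≤ i.val → ∀ q, (a i).factorization q =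
      if q ∈ n.primeFactors ∧ n.factorization q % r = i.val then 1 else 0 := by
    intro i hi q
    have h1 : a i = ∏ p ∈ n.primeFactors.filter (fun p => n.factorization p % r = i.val),
        p ^ (fun _ : ℕ => 1) p := by
      rw [haa]
      dsimp only
      rw [if_neg (by omega : ¬ i.val = 0)]
      simp
    rw [h1, fact_prod_pow _
      (fun p hp => Nat.prime_of_mem_primeFactors (Finset.mem_filter.mp hp).1)]
    simp [Finset.mem_filter]
  have her : ∀ p ∈ n.primeFactors, r ≤ n.factorization p := by
    intro p hp
    obtain ⟨pp, pd, -⟩ := Nat.mem_primeFactors.mp hp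
    exact (Nat.Prime.pow_dvd_iff_le_factorization pp hn0).mp (hfull p pp pd)
  have hsplit : (Finset.univ.filter (fun i : Fin r => ¬ 1 ≤ i.val)) = {⟨0, hrpos⟩} := by
    ext i
    simp [Fin.ext_iff]
  -- the equation n = ∏ a i ^ (r + i)
  have heq : n = ∏ i : Fin r, a i ^ (r + i.val) := by
    refine Nat.eq_of_factorization_eq hn0
      (Finset.prod_pos fun i _ => pow_pos (hpos i) _).ne' fun q => ?_
    rw [fact_prod_apply _ _ (fun i _ => pow_ne_zero _ (hpos i).ne')]
    simp only [Nat.factorization_pow, Finsupp.smul_apply, smul_eq_mul]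
    rw [← Finset.sum_filter_add_sum_filter_not Finset.univ (fun i : Fin r => 1 ≤ i.val),
      hsplit, Finset.sum_singleton, ha0 q]
    by_cases hqf : q ∈ n.primeFactors
    · have herq := her q hqf
      have hdm := Nat.div_add_mod (n.factorization q) r
      have hTsum : ∑ i ∈ Finset.univ.filter (fun i : Fin r => 1 ≤ i.val),
          (r + i.val) * (a i).factorization q =
          if n.factorization q % r = 0 then 0 else r + n.factorization q % r := by
        by_cases hs : n.factorization q % r = 0
        · rw [if_pos hs]
          refine Finset.sum_eq_zero fun i hi => ?_
          rw [hai i (by simpa using hi) q, if_neg (by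
            rintro ⟨-, hc⟩
            have := (Finset.mem_filter.mp hi).2
            omega), mul_zero]
        · rw [if_neg hs]
          have hlt : n.factorization q % r < r := Nat.mod_lt _ hrpos
          rw [Finset.sum_eq_single_of_mem (⟨n.factorization q % r, hlt⟩ : Fin r)
            (by simp; omega) (fun j hj hne => by
              rw [hai j (by simpa using hj) q, if_neg (fun hc => hne (Fin.ext hc.2.symm)),
                mul_zero])]
          rw [hai _ (by simpa using (by omega : 1 ≤ n.factorization q % r)) q,
            if_pos ⟨hqf, rfl⟩, mul_one]
      rw [hTsum, if_pos hqf]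
      by_cases hs : n.factorization q % r = 0
      · have hKq : K q = n.factorization q / r := by simp [hK, hs]
        rw [if_pos hs, hKq, zero_add, add_zero]
        exact (Nat.mul_div_cancel' (Nat.dvd_of_mod_eq_zero hs)).symm
      · have h1le : 1 ≤ n.factorization q / r := (Nat.one_le_div_iff hrpos).mpr herq
        have hKq : K q = n.factorization q / r - 1 := by simp [hK, hs]
        rw [if_neg hs, hKq, add_zero]
        obtain ⟨d, hd⟩ : ∃ d, n.factorization q / r = d + 1 :=
          ⟨n.factorization q / r - 1, by omega⟩
        rw [hd] at hdm ⊢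
        simp only [Nat.add_sub_cancel]
        have h3 : r * (d + 1) = r * d + r := by ring
        omega
    · have hq0 : n.factorization q = 0 :=
        Finsupp.notMem_support_iff.mp (by rw [Nat.support_factorization]; exact hqf)
      rw [hq0, if_neg hqf]
      rw [Finset.sum_eq_zero fun i hi => by
        rw [hai i (by simpa using hi) q, if_neg (fun hc => hqf hc.1), mul_zero]]
      ring
  -- squarefreeness
  have hsq : Squarefree (∏ i ∈ Finset.univ.filter (fun i : Fin r => 1 ≤ i.val), a i) := by
    have hP : (∏ i ∈ Finset.univ.filter (fun i : Fin r => 1 ≤ i.val), a i) ≠ 0 :=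
      (Finset.prod_pos fun i _ => hpos i).ne'
    rw [Nat.squarefree_iff_factorization_le_one hP]
    intro q
    rw [fact_prod_apply _ _ (fun i _ => (hpos i).ne')]
    rw [Finset.sum_congr rfl (fun i hi => hai i (by simpa using hi) q)]
    rw [Finset.sum_boole]
    norm_cast
    rw [Finset.card_le_one]
    intro x hx y hy
    simp only [Finset.mem_filter] at hx hy
    exact Fin.ext (by omega)
  -- coprimality
  have hcop : ∀ i j : Fin r, 1 ≤ i.val → 1 ≤ j.val → i ≠ j → Nat.Coprime (a i) (a j) := by
    intro i j hi hj hne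
    have hij : i.val ≠ j.val := fun hc => hne (Fin.ext hc)
    rw [show a i = ∏ p ∈ n.primeFactors.filter (fun p => n.factorization p % r = i.val), p
        from by rw [haa]; dsimp only; rw [if_neg (by omega : ¬ i.val = 0)],
      show a j = ∏ p ∈ n.primeFactors.filter (fun p => n.factorization p % r = j.val), p
        from by rw [haa]; dsimp only; rw [if_neg (by omega : ¬ j.val = 0)]]
    refine Nat.coprime_prod_left_iff.mpr fun p hp => Nat.coprime_prod_right_iff.mpr fun p' hp' => ?_
    simp only [Finset.mem_filter] at hp hp'
    refine (Nat.coprime_primes (Nat.prime_of_mem_primeFactors hp.1)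
      (Nat.prime_of_mem_primeFactors hp'.1)).mpr ?_
    intro hc
    rw [hc] at hp
    omega
  refine ⟨a, ⟨hpos, heq, hsq, hcop⟩, fun b hb => ?_⟩
  obtain ⟨hb1, hb2, hb3, hb4⟩ := hb
  funext i
  refine Nat.eq_of_factorization_eq (hb1 i).ne' (hpos i).ne' fun q => ?_
  have hkb := key r n hr hn0 b hb1 hb2 hb3 q
  have hka := key r n hr hn0 a hpos heq hsq q
  by_cases h0 : i.val = 0
  · have hi0 : i = ⟨0, by omega⟩ := Fin.ext h0
    rw [hi0, hkb.1, hka.1]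
  · rw [hkb.2 i (by omega), hka.2 i (by omega)]
end

section
/- The Dirichlet convolution inverse μ_r^{-1} of the indicator function μ_r of r-free numbers is the multiplicative function given on prime powers p^α by: 1 if r divides α, -1 if r divides α - 1, and 0 otherwise. -/
open Finset
open scoped Classical

/-- `n` is `r`-free: no `r`-th power of a prime divides `n`. -/
def IsRFree (r n : ℕ) : Prop := ∀ p : ℕ, p.Prime → ¬ p ^ r ∣ n

/-- The indicator function of `r`-free numbers (as an integer-valued function). -/
noncomputable def muR (r n : ℕ) : ℤ := if IsRFree r n then 1 else 0

lemma muR_zero (r : ℕ) : muR r 0 = 0 := by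
  rw [muR, if_neg]
  intro h
  exact h 2 Nat.prime_two (dvd_zero _)

lemma isRFree_one {r : ℕ} (hr : 1 ≤ r) : IsRFree r 1 := by
  intro p hp hd
  have h1 : p ^ r = 1 := Nat.dvd_one.mp hd
  have h2 := Nat.one_lt_pow (show r ≠ 0 by omega) hp.one_lt
  omega

lemma muR_prime_pow {r p : ℕ} (hr : 2 ≤ r) (hp : p.Prime) (j : ℕ) :
    muR r (p ^ j) = if j < r then 1 else 0 := by
  rw [muR]
  congr 1
  simp only [eq_iff_iff]
  constructor
  · intro h
    by_contra hc
    push_neg at hc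
    exact h p hp (pow_dvd_pow p hc)
  · intro hj q hq hd
    have hqp : q = p := by
      have : q ∣ p ^ j := dvd_trans (dvd_pow_self q (by omega)) hd
      exact (Nat.prime_dvd_prime_iff_eq hq hp).mp (hq.dvd_of_dvd_pow this)
    subst hqp
    have := (Nat.pow_dvd_pow_iff_le_right hq.one_lt).mp hd
    omega

lemma muR_mult (r : ℕ) {m n : ℕ} (h : m.Coprime n) :
    muR r (m * n) = muR r m * muR r n := by
  rcases eq_or_ne m 0 with rfl | hm
  · simp [muR_zero]
  rcases eq_or_ne n 0 with rfl | hn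
  · simp [muR_zero]
  rw [muR, muR, muR]
  have hiff : IsRFree r (m * n) ↔ IsRFree r m ∧ IsRFree r n := by
    constructor
    · intro hf
      exact ⟨fun p hp hd => hf p hp (hd.mul_right n),
             fun p hp hd => hf p hp (hd.mul_left m)⟩
    · rintro ⟨h1, h2⟩ p hp hd
      have hpd : p ∣ m * n := dvd_trans (dvd_pow_self p (by
        intro h0; subst h0; simp at hd; exact h1 p hp (by simpa using hd))) hd
      rcases (hp.dvd_mul).mp hpd with hc | hc
      · have hcop : (p ^ r).Coprime n :=
          Nat.Coprime.pow_left _ (Nat.Coprime.coprime_dvd_left hc h)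
        exact h1 p hp (hcop.dvd_of_dvd_mul_right hd)
      · have hcop : (p ^ r).Coprime m :=
          Nat.Coprime.pow_left _ (Nat.Coprime.coprime_dvd_left hc h.symm)
        exact h2 p hp (hcop.dvd_of_dvd_mul_left hd)
  by_cases hmn : IsRFree r (m * n)
  · rw [if_pos hmn, if_pos (hiff.mp hmn).1, if_pos (hiff.mp hmn).2]; ring
  · rw [if_neg hmn]
    by_cases h1 : IsRFree r m
    · have h2 : ¬ IsRFree r n := fun h2 => hmn (hiff.mpr ⟨h1, h2⟩)
      rw [if_neg h2]; ring
    · rw [if_neg h1]; ring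

/-- Key counting lemma: exactly one `j ≤ i` with `j < r` and `r ∣ i - j`. -/
lemma key_count (r i : ℕ) (hr : 2 ≤ r) :
    ∑ j ∈ range (i + 1), (if j < r ∧ r ∣ i - j then (1 : ℤ) else 0) = 1 := by
  rw [Finset.sum_eq_single_of_mem (i % r)]
  · rw [if_pos]
    constructor
    · exact Nat.mod_lt _ (by omega)
    · have := Nat.div_add_mod i r
      exact ⟨i / r, by omega⟩
  · simp only [mem_range]
    have := Nat.mod_le i r
    omega
  · intro j hj hne
    rw [if_neg]
    rintro ⟨hjr, c, hc⟩
    simp only [mem_range] at hj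
    have hji : j ≤ i := by omega
    have : i = r * c + j := by omega
    rw [this] at hne
    rw [Nat.mul_add_mod, Nat.mod_eq_of_lt hjr] at hne
    exact hne rfl

lemma key_sum (r i : ℕ) (hr : 2 ≤ r) (hi : 1 ≤ i) :
    ∑ j ∈ range (i + 1), (if j < r then (1 : ℤ) else 0) *
      (if r ∣ i - j then 1 else if r ∣ i - j - 1 then -1 else 0) = 0 := by
  have hterm : ∀ j ∈ range (i + 1),
      (if j < r then (1 : ℤ) else 0) *
        (if r ∣ i - j then 1 else if r ∣ i - j - 1 then -1 else 0)
      = (if j < r ∧ r ∣ i - j then (1 : ℤ) else 0)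
        - (if j < r ∧ r ∣ i - 1 - j ∧ j < i then (1 : ℤ) else 0) := by
    intro j hj
    simp only [mem_range] at hj
    have hji : j ≤ i := by omega
    by_cases hjr : j < r
    · rw [if_pos hjr, one_mul]
      by_cases hd : r ∣ i - j
      · rw [if_pos hd, if_pos ⟨hjr, hd⟩, if_neg]
        · ring
        · rintro ⟨-, hd2, hji'⟩
          have h1 : r ∣ (i - j) - (i - 1 - j) := Nat.dvd_sub hd hd2
          have : (i - j) - (i - 1 - j) = 1 := by omega
          rw [this] at h1
          have := Nat.le_of_dvd one_pos h1
          omega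
      · rw [if_neg hd, if_neg (show ¬(j < r ∧ r ∣ i - j) from fun h => hd h.2)]
        have hji' : j < i := by
          rcases eq_or_lt_of_le hji with rfl | h
          · exfalso; exact hd (by simp)
          · exact h
        have e1 : i - 1 - j = i - j - 1 := by omega
        by_cases hd2 : r ∣ i - j - 1
        · rw [if_pos hd2, if_pos (show j < r ∧ r ∣ i - 1 - j ∧ j < i from
            ⟨hjr, by rw [e1]; exact hd2, hji'⟩)]
          ring
        · rw [if_neg hd2, if_neg (show ¬(j < r ∧ r ∣ i - 1 - j ∧ j < i) from by
            rintro ⟨-, h2, -⟩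
            exact hd2 (by rwa [← e1]))]
          ring
    · rw [if_neg hjr, zero_mul,
        if_neg (show ¬(j < r ∧ r ∣ i - j) from fun h => hjr h.1),
        if_neg (show ¬(j < r ∧ r ∣ i - 1 - j ∧ j < i) from fun h => hjr h.1)]
      ring
  rw [Finset.sum_congr rfl hterm, Finset.sum_sub_distrib, key_count r i hr]
  have h2 : ∑ j ∈ range (i + 1), (if j < r ∧ r ∣ i - 1 - j ∧ j < i then (1 : ℤ) else 0)
      = ∑ j ∈ range ((i - 1) + 1), (if j < r ∧ r ∣ i - 1 - j then (1 : ℤ) else 0) := by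
    rw [show (i - 1) + 1 = i by omega]
    rw [Finset.sum_range_succ]
    rw [if_neg (by rintro ⟨-, -, h⟩; omega)]
    rw [add_zero]
    apply Finset.sum_congr rfl
    intro j hj
    simp only [mem_range] at hj
    congr 1
    simp only [eq_iff_iff]
    tauto
  rw [h2, key_count r (i - 1) hr]
  ring

/-- The multiplicative function given on prime powers by `1` if `r ∣ α`, `-1` if
`r ∣ α - 1` and `0` otherwise is the Dirichlet convolution inverse of `muR r`. -/
theorem muR_dirichlet_inverse (r : ℕ) (hr : 2 ≤ r) (ν : ℕ → ℤ)
    (hν1 : ν 1 = 1)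
    (hνmult : ∀ m n : ℕ, Nat.Coprime m n → ν (m * n) = ν m * ν n)
    (hνpp : ∀ (p α : ℕ), p.Prime → 1 ≤ α →
      ν (p ^ α) = if r ∣ α then 1 else if r ∣ α - 1 then -1 else 0) :
    ∀ n : ℕ, 1 ≤ n →
      ∑ d ∈ n.divisors, muR r d * ν (n / d) = if n = 1 then 1 else 0 := by
  set F : ArithmeticFunction ℤ := ⟨fun n => muR r n, muR_zero r⟩ with hF
  set G : ArithmeticFunction ℤ := ⟨fun n => if n = 0 then 0 else ν n, by simp⟩ with hG
  have hFapp : ∀ n, F n = muR r n := fun n => rfl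
  have hGapp : ∀ n, n ≠ 0 → G n = ν n := fun n hn => by
    show (if n = 0 then 0 else ν n) = ν n
    rw [if_neg hn]
  have hFm : F.IsMultiplicative := by
    constructor
    · rw [hFapp, muR, if_pos (isRFree_one (by omega : 1 ≤ r))]
    · intro m n h
      rw [hFapp, hFapp, hFapp]
      exact muR_mult r h
  have hGm : G.IsMultiplicative := by
    constructor
    · rw [hGapp 1 one_ne_zero, hν1]
    · intro m n h
      rcases eq_or_ne m 0 with rfl | hm
      · rw [Nat.zero_mul, ArithmeticFunction.map_zero, zero_mul]
      rcases eq_or_ne n 0 with rfl | hn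
      · rw [Nat.mul_zero, ArithmeticFunction.map_zero, mul_zero]
      · rw [hGapp _ (Nat.mul_ne_zero hm hn), hGapp _ hm, hGapp _ hn]
        exact hνmult m n h
  -- value of G on prime powers (all exponents, including 0)
  have hGpp : ∀ (p m : ℕ), p.Prime →
      G (p ^ m) = if r ∣ m then 1 else if r ∣ m - 1 then -1 else 0 := by
    intro p m hp
    rcases Nat.eq_zero_or_pos m with rfl | hm
    · rw [pow_zero, hGapp 1 one_ne_zero, hν1, if_pos (dvd_zero r)]
    · rw [hGapp _ (pow_ne_zero _ hp.pos.ne'), hνpp p m hp hm]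
  have hmul : F * G = 1 := by
    rw [ArithmeticFunction.IsMultiplicative.eq_iff_eq_on_prime_powers _ (hFm.mul hGm) _
      ArithmeticFunction.isMultiplicative_one]
    intro p i hp
    rw [ArithmeticFunction.mul_apply, Nat.sum_divisorsAntidiagonal (f := fun x y => F x * G y),
      Nat.sum_divisors_prime_pow hp]
    have hterm : ∀ j ∈ range (i + 1),
        F (p ^ j) * G (p ^ i / p ^ j)
        = (if j < r then (1 : ℤ) else 0) *
          (if r ∣ i - j then 1 else if r ∣ i - j - 1 then -1 else 0) := by
      intro j hj
      simp only [mem_range] at hj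
      rw [Nat.pow_div (by omega) hp.pos, hFapp, muR_prime_pow hr hp, hGpp p (i - j) hp]
    rw [Finset.sum_congr rfl hterm]
    rcases Nat.eq_zero_or_pos i with rfl | hi
    · rw [Finset.sum_range_one, pow_zero, ArithmeticFunction.one_apply, if_pos rfl]
      simp [show (0:ℕ) < r by omega]
    · rw [key_sum r i hr hi, ArithmeticFunction.one_apply, if_neg]
      intro h
      have := Nat.one_lt_pow hi.ne' hp.one_lt
      omega
  intro n hn
  have hn0 : n ≠ 0 := by omega
  have := congrArg (fun f : ArithmeticFunction ℤ => f n) hmul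
  rw [ArithmeticFunction.mul_apply,
    Nat.sum_divisorsAntidiagonal (f := fun x y => F x * G y),
    ArithmeticFunction.one_apply] at this
  rw [← this]
  apply Finset.sum_congr rfl
  intro d hd
  rw [Nat.mem_divisors] at hd
  have hd0 : d ≠ 0 := fun h => by subst h; exact hn0 (Nat.eq_zero_of_zero_dvd hd.1)
  have hnd : n / d ≠ 0 :=
    (Nat.div_pos (Nat.le_of_dvd (by omega) hd.1) (by omega)).ne'
  rw [hFapp, hGapp _ hnd]
end

section
/- Let f be a multiplicative function with f(p^α) = g(α) for all primes p, where g(0) = g(1) = ... = g(r-1) = 1 for some r ≥ 2. Fix k ≥ 1 and define h(n) = Σ_{d | n, f(n/d) = k} μ_r^{-1}(d), where μ_r^{-1} is the Dirichlet inverse of the indicator of r-free numbers. Then h(p^α) = 0 for every prime p and every α with 1 ≤ α < r; consequently h is supported on r-full numbers. -/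
open Finset
open scoped Classical

/-- Sum over divisors of a coprime product as a double sum. -/
lemma sum_divisors_coprime_mul {a b : ℕ} (ha : a ≠ 0) (hb : b ≠ 0)
    (hab : Nat.Coprime a b) (F : ℕ → ℤ) :
    ∑ d ∈ (a * b).divisors, F d = ∑ x ∈ a.divisors, ∑ y ∈ b.divisors, F (x * y) := by
  rw [← Finset.sum_product']
  refine Finset.sum_nbij' (fun d => (d.gcd a, d.gcd b)) (fun q => q.1 * q.2) ?_ ?_ ?_ ?_ ?_
  · intro d hd
    rw [Nat.mem_divisors] at hd
    simp only [Finset.mem_product, Nat.mem_divisors]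
    exact ⟨⟨Nat.gcd_dvd_right _ _, ha⟩, ⟨Nat.gcd_dvd_right _ _, hb⟩⟩
  · intro q hq
    simp only [Finset.mem_product, Nat.mem_divisors] at hq
    exact Nat.mem_divisors.mpr ⟨mul_dvd_mul hq.1.1 hq.2.1, mul_ne_zero ha hb⟩
  · intro d hd
    rw [Nat.mem_divisors] at hd
    exact (Nat.gcd_mul_gcd_eq_iff_dvd_mul_of_coprime hab).mpr hd.1
  · intro q hq
    simp only [Finset.mem_product, Nat.mem_divisors] at hq
    obtain ⟨⟨hxa, -⟩, ⟨hyb, -⟩⟩ := hq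
    have h1 : (q.1 * q.2).gcd a = q.1 := by
      have hc : q.2.Coprime a := Nat.Coprime.coprime_dvd_left hyb (Nat.Coprime.symm hab)
      rw [Nat.Coprime.gcd_mul_right_cancel q.1 hc]
      exact Nat.gcd_eq_left hxa
    have h2 : (q.1 * q.2).gcd b = q.2 := by
      have hc : q.1.Coprime b := hab.coprime_dvd_left hxa
      rw [Nat.Coprime.gcd_mul_left_cancel q.2 hc]
      exact Nat.gcd_eq_left hyb
    exact Prod.ext h1 h2
  · intro d hd
    rw [Nat.mem_divisors] at hd
    rw [(Nat.gcd_mul_gcd_eq_iff_dvd_mul_of_coprime hab).mpr hd.1]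

lemma muR_pow_mul {r : ℕ} {p i c : ℕ} (hp : p.Prime) (hi : i < r) (hpc : ¬ p ∣ c) :
    muR r (p ^ i * c) = muR r c := by
  unfold muR
  congr 1
  simp only [eq_iff_iff]
  constructor
  · intro H q hq hdvd
    exact H q hq (hdvd.trans (Dvd.intro_left _ rfl))
  · intro H q hq hdvd
    by_cases hqp : q = p
    · subst hqp
      have hcop : (q ^ r).Coprime c := Nat.Coprime.pow_left _ ((Nat.Prime.coprime_iff_not_dvd hq).mpr hpc)
      have : q ^ r ∣ q ^ i := (Nat.Coprime.dvd_of_dvd_mul_right hcop hdvd)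
      have := Nat.pow_dvd_pow_iff_le_right (Nat.Prime.one_lt hq) |>.mp this
      omega
    · have hcop : (q ^ r).Coprime (p ^ i) :=
        Nat.Coprime.pow r i ((Nat.coprime_primes hq hp).mpr hqp)
      exact H q hq (Nat.Coprime.dvd_of_dvd_mul_left hcop hdvd)

/-- Key lemma: partial sums of ν over a prime power chain times a coprime part vanish. -/
lemma key_sum_s4 (r : ℕ) (hr : 2 ≤ r) (ν : ℕ → ℤ) (hν1 : ν 1 = 1)
    (hνinv : ∀ n : ℕ, 2 ≤ n → ∑ d ∈ n.divisors, muR r d * ν (n / d) = 0)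
    (p : ℕ) (hp : p.Prime) (α : ℕ) (hα1 : 1 ≤ α) (hα : α < r) :
    ∀ e : ℕ, 0 < e → ¬ p ∣ e → ∑ j ∈ Finset.range (α + 1), ν (p ^ j * e) = 0 := by
  intro e
  induction e using Nat.strong_induction_on with
  | _ e IH =>
  intro he hpe
  have hpα : 2 ≤ p ^ α := by
    calc 2 ≤ p := hp.two_le
    _ = p ^ 1 := (pow_one p).symm
    _ ≤ p ^ α := Nat.pow_le_pow_right hp.pos hα1
  have hn2 : 2 ≤ p ^ α * e := le_trans hpα (Nat.le_mul_of_pos_right _ he)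
  have hcop : (p ^ α).Coprime e := Nat.Coprime.pow_left _ ((Nat.Prime.coprime_iff_not_dvd hp).mpr hpe)
  have H := hνinv (p ^ α * e) hn2
  rw [sum_divisors_coprime_mul (pow_ne_zero _ hp.pos.ne') he.ne' hcop] at H
  -- rewrite divisors of p^α as range
  rw [Nat.divisors_prime_pow hp, Finset.sum_map] at H
  simp only [Function.Embedding.coeFn_mk] at H
  -- H : ∑ i ∈ range (α+1), ∑ y ∈ e.divisors, muR r (p^i * y) * ν (p^α * e / (p^i * y)) = 0
  rw [Finset.sum_comm] at H
  have Hc : ∀ c ∈ e.divisors, ∀ i ∈ Finset.range (α + 1),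
      muR r (p ^ i * c) * ν (p ^ α * e / (p ^ i * c)) =
      muR r c * ν (p ^ (α - i) * (e / c)) := by
    intro c hc i hi
    rw [Nat.mem_divisors] at hc
    rw [Finset.mem_range] at hi
    have hiα : i ≤ α := by omega
    have hpc : ¬ p ∣ c := fun hd => hpe (hd.trans hc.1)
    rw [muR_pow_mul hp (by omega) hpc]
    congr 2
    rw [← Nat.div_mul_div_comm (pow_dvd_pow p hiα) hc.1, Nat.pow_div hiα hp.pos]
  rw [Finset.sum_congr rfl (fun c hc => Finset.sum_congr rfl (Hc c hc))] at H
  -- now H : ∑ c ∈ e.divisors, ∑ i ∈ range (α+1), muR r c * ν (p^(α-i) * (e/c)) = 0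
  have Hrefl : ∀ c : ℕ, ∑ i ∈ Finset.range (α + 1), muR r c * ν (p ^ (α - i) * (e / c)) =
      muR r c * ∑ j ∈ Finset.range (α + 1), ν (p ^ j * (e / c)) := by
    intro c
    rw [← Finset.mul_sum]
    congr 1
    have hrefl := Finset.sum_range_reflect (fun j => ν (p ^ j * (e / c))) (α + 1)
    simp only [Nat.add_sub_cancel] at hrefl
    exact hrefl
  rw [Finset.sum_congr rfl (fun c _ => Hrefl c)] at H
  -- split off c = 1
  have h1mem : 1 ∈ e.divisors := Nat.one_mem_divisors.mpr he.ne'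
  rw [← Finset.add_sum_erase _ _ h1mem] at H
  have hz : ∀ c ∈ e.divisors.erase 1,
      muR r c * ∑ j ∈ Finset.range (α + 1), ν (p ^ j * (e / c)) = 0 := by
    intro c hc
    rw [Finset.mem_erase, Nat.mem_divisors] at hc
    obtain ⟨hc1, hce, -⟩ := hc
    have hcpos : 0 < c := Nat.pos_of_dvd_of_pos hce he
    have hlt : e / c < e := Nat.div_lt_self he (lt_of_le_of_ne hcpos (Ne.symm hc1))
    have hdvd : e / c ∣ e := Nat.div_dvd_of_dvd hce
    have hpos : 0 < e / c := Nat.div_pos (Nat.le_of_dvd he hce) hcpos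
    have hpec : ¬ p ∣ e / c := fun hd => hpe (hd.trans hdvd)
    rw [IH _ hlt hpos hpec, mul_zero]
  rw [Finset.sum_eq_zero hz, add_zero] at H
  have : muR r 1 = 1 := by
    unfold muR
    rw [if_pos]
    intro q hq hd
    have h1 : q ^ r ≤ 1 := Nat.le_of_dvd one_pos hd
    have h2 : 2 ≤ q ^ r := by
      calc 2 ≤ q := hq.two_le
      _ = q ^ 1 := (pow_one q).symm
      _ ≤ q ^ r := Nat.pow_le_pow_right hq.pos (by omega)
    omega
  rw [this, one_mul, Nat.div_one] at H
  exact H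

theorem h_vanishes_on_small_prime_powers (r : ℕ) (hr : 2 ≤ r) (k : ℤ) (hk : 1 ≤ k)
    (g : ℕ → ℤ) (hg : ∀ α : ℕ, α < r → g α = 1)
    (f : ℕ → ℤ) (hf1 : f 1 = 1)
    (hfmult : ∀ m n : ℕ, Nat.Coprime m n → f (m * n) = f m * f n)
    (hfpp : ∀ (p α : ℕ), p.Prime → f (p ^ α) = g α)
    -- `ν` is the Dirichlet convolution inverse of `muR r`
    (ν : ℕ → ℤ) (hν1 : ν 1 = 1)
    (hνinv : ∀ n : ℕ, 2 ≤ n → ∑ d ∈ n.divisors, muR r d * ν (n / d) = 0)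
    (h : ℕ → ℤ)
    (hdef : ∀ n : ℕ, 1 ≤ n →
      h n = ∑ d ∈ n.divisors, (if f (n / d) = k then 1 else 0) * ν d) :
    (∀ (p α : ℕ), p.Prime → 1 ≤ α → α < r → h (p ^ α) = 0) ∧
    (∀ n : ℕ, 1 ≤ n → ¬ IsRFull r n → h n = 0) := by
  -- general claim: if n = p^α * m with p prime, p ∤ m, 1 ≤ α < r, then h n = 0
  have main : ∀ (p α m : ℕ), p.Prime → 1 ≤ α → α < r → 0 < m → ¬ p ∣ m →
      h (p ^ α * m) = 0 := by
    intro p α m hp hα1 hα hm hpm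
    have hppos : (0:ℕ) < p ^ α := pow_pos hp.pos _
    have hcop : (p ^ α).Coprime m := Nat.Coprime.pow_left _ ((Nat.Prime.coprime_iff_not_dvd hp).mpr hpm)
    have hn1 : 1 ≤ p ^ α * m := Nat.mul_pos hppos hm
    rw [hdef _ hn1, sum_divisors_coprime_mul hppos.ne' hm.ne' hcop]
    rw [Nat.divisors_prime_pow hp, Finset.sum_map]
    simp only [Function.Embedding.coeFn_mk]
    rw [Finset.sum_comm]
    apply Finset.sum_eq_zero
    intro c hc
    rw [Nat.mem_divisors] at hc
    have Heq : ∀ i ∈ Finset.range (α + 1),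
        (if f (p ^ α * m / (p ^ i * c)) = k then (1:ℤ) else 0) * ν (p ^ i * c) =
        (if f (m / c) = k then (1:ℤ) else 0) * ν (p ^ i * c) := by
      intro i hi
      rw [Finset.mem_range] at hi
      have hiα : i ≤ α := by omega
      have hquot : p ^ α * m / (p ^ i * c) = p ^ (α - i) * (m / c) := by
        rw [← Nat.div_mul_div_comm (pow_dvd_pow p hiα) hc.1, Nat.pow_div hiα hp.pos]
      have hmc : m / c ∣ m := Nat.div_dvd_of_dvd hc.1
      have hcop2 : (p ^ (α - i)).Coprime (m / c) :=
        Nat.Coprime.coprime_dvd_right hmc (Nat.Coprime.pow_left _ ((Nat.Prime.coprime_iff_not_dvd hp).mpr hpm))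
      rw [hquot, hfmult _ _ hcop2, hfpp _ _ hp, hg _ (by omega), one_mul]
    rw [Finset.sum_congr rfl Heq, ← Finset.mul_sum]
    have hpc : ¬ p ∣ c := fun hd => hpm (hd.trans hc.1)
    have hcpos : 0 < c := Nat.pos_of_dvd_of_pos hc.1 hm
    rw [key_sum_s4 r hr ν hν1 hνinv p hp α hα1 hα c hcpos hpc, mul_zero]
  constructor
  · intro p α hp hα1 hα
    have := main p α 1 hp hα1 hα one_pos (fun hd => hp.one_lt.ne' (Nat.dvd_one.mp hd))
    simpa using this
  · intro n hn hfull
    unfold IsRFull at hfull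
    push_neg at hfull
    obtain ⟨p, hp, hpn, hpr⟩ := hfull
    set α := n.factorization p with hαdef
    have hα1 : 1 ≤ α := (Nat.Prime.dvd_iff_one_le_factorization hp (by omega)).mp hpn
    have hα : α < r := by
      by_contra hcon
      push_neg at hcon
      exact hpr ((Nat.Prime.pow_dvd_iff_le_factorization hp (by omega)).mpr hcon)
    have hord : p ^ α * (n / p ^ α) = n := Nat.ordProj_mul_ordCompl_eq_self n p
    have hpm : ¬ p ∣ n / p ^ α := Nat.not_dvd_ordCompl hp (by omega)
    have hmpos : 0 < n / p ^ α := Nat.ordCompl_pos p (by omega)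
    rw [← hord]
    exact main p α _ hp hα1 hα hmpos hpm
end

section
/- Let r ≥ 2 and let h be an arithmetic function with |h(n)| ≤ s_r(n)·τ(n). Then for any κ with 0 ≤ κ < 1/r, Σ_{n ≤ x} |h(n)|/n^κ = O(x^{1/r - κ}·(log x)^r); for κ = 1/r the sum is O((log x)^{r+1}); and for κ > 1/r the sum is O(1). -/
open Finset
open scoped Classical

namespace AuxFull



lemma sum_le_sum_inj {ι κ : Type*} [DecidableEq κ] (s : Finset ι) (t : Finset κ)
    (i : ι → κ) (hi : Set.InjOn i s) (hmap : ∀ a ∈ s, i a ∈ t)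
    (f : ι → ℝ) (g : κ → ℝ) (hfg : ∀ a ∈ s, f a ≤ g (i a)) (hg : ∀ b ∈ t, 0 ≤ g b) :
    ∑ a ∈ s, f a ≤ ∑ b ∈ t, g b := by
  calc ∑ a ∈ s, f a ≤ ∑ a ∈ s, g (i a) := Finset.sum_le_sum hfg
    _ = ∑ b ∈ s.image i, g b := (Finset.sum_image (fun a ha b hb hab => hi ha hb hab)).symm
    _ ≤ ∑ b ∈ t, g b := Finset.sum_le_sum_of_subset_of_nonneg
        (Finset.image_subset_iff.2 hmap) (fun b hb _ => hg b hb)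

lemma div_gcd_dvd_pow {t d R : ℕ} (hd : d ≠ 0) (ht : t ≠ 0) (hR : 1 ≤ R) (h : t ∣ d ^ R) :
    t / Nat.gcd t d ∣ Nat.gcd t d ^ (R - 1) := by
  have hg : Nat.gcd t d ≠ 0 := Nat.gcd_ne_zero_right hd
  have hgt : Nat.gcd t d ∣ t := Nat.gcd_dvd_left t d
  have hq : t / Nat.gcd t d ≠ 0 := by
    have := Nat.div_pos (Nat.le_of_dvd (Nat.pos_of_ne_zero ht) hgt) (Nat.pos_of_ne_zero hg)
    omega
  rw [← Nat.factorization_le_iff_dvd hq (pow_ne_zero _ hg)]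
  have hkey : t.factorization ≤ (d ^ R).factorization :=
    (Nat.factorization_le_iff_dvd ht (pow_ne_zero _ hd)).2 h
  intro p
  have h1 : (t / Nat.gcd t d).factorization p = t.factorization p - (Nat.gcd t d).factorization p := by
    rw [Nat.factorization_div hgt, Finsupp.tsub_apply]
  have h2 : (Nat.gcd t d).factorization p = min (t.factorization p) (d.factorization p) := by
    rw [Nat.factorization_gcd ht hd, Finsupp.inf_apply]
  have h3 : (Nat.gcd t d ^ (R - 1)).factorization p = (R - 1) * (Nat.gcd t d).factorization p := by
    rw [Nat.factorization_pow, Finsupp.smul_apply, smul_eq_mul]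
  have h4 : t.factorization p ≤ R * d.factorization p := by
    have := hkey p
    rwa [Nat.factorization_pow, Finsupp.smul_apply, smul_eq_mul] at this
  rw [h1, h3, h2]
  rcases le_total (t.factorization p) (d.factorization p) with hc | hc
  · rw [min_eq_left hc]; omega
  · rw [min_eq_right hc, Nat.sub_one_mul]
    have h5 : d.factorization p ≤ R * d.factorization p := Nat.le_mul_of_pos_left _ (by omega)
    omega

lemma div_gcd_dvd_right {t a b : ℕ} (ha : a ≠ 0) (hb : b ≠ 0) (ht : t ≠ 0) (h : t ∣ a * b) :
    t / Nat.gcd t a ∣ b := by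
  have hg : Nat.gcd t a ≠ 0 := Nat.gcd_ne_zero_right ha
  have hgt : Nat.gcd t a ∣ t := Nat.gcd_dvd_left t a
  have hq : t / Nat.gcd t a ≠ 0 := by
    have := Nat.div_pos (Nat.le_of_dvd (Nat.pos_of_ne_zero ht) hgt) (Nat.pos_of_ne_zero hg)
    omega
  rw [← Nat.factorization_le_iff_dvd hq hb]
  have hkey : t.factorization ≤ (a * b).factorization :=
    (Nat.factorization_le_iff_dvd ht (mul_ne_zero ha hb)).2 h
  intro p
  have h1 : (t / Nat.gcd t a).factorization p = t.factorization p - (Nat.gcd t a).factorization p := by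
    rw [Nat.factorization_div hgt, Finsupp.tsub_apply]
  have h2 : (Nat.gcd t a).factorization p = min (t.factorization p) (a.factorization p) := by
    rw [Nat.factorization_gcd ht ha, Finsupp.inf_apply]
  have h4 : t.factorization p ≤ a.factorization p + b.factorization p := by
    have := hkey p
    rwa [Nat.factorization_mul ha hb, Finsupp.add_apply] at this
  rw [h1, h2]
  omega

lemma card_divisors_mul_le {a b : ℕ} (ha : a ≠ 0) (hb : b ≠ 0) :
    ((a * b).divisors.card) ≤ a.divisors.card * b.divisors.card := by
  classical
  have : ((a * b).divisors.card) ≤ ((a.divisors ×ˢ b.divisors).card) := by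
    apply Finset.card_le_card_of_injOn (fun t => (Nat.gcd t a, t / Nat.gcd t a))
    · intro t htm
      rw [Finset.mem_coe, Nat.mem_divisors] at htm
      have ht : t ≠ 0 := by
        rintro rfl
        exact (mul_ne_zero ha hb) (Nat.eq_zero_of_zero_dvd htm.1 ▸ rfl)
      rw [Finset.mem_coe, Finset.mem_product, Nat.mem_divisors, Nat.mem_divisors]
      exact ⟨⟨Nat.gcd_dvd_right t a, ha⟩, ⟨div_gcd_dvd_right ha hb ht htm.1, hb⟩⟩
    · intro t1 h1 t2 h2 heq
      simp only [Prod.mk.injEq] at heq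
      have e1 : Nat.gcd t1 a * (t1 / Nat.gcd t1 a) = t1 := Nat.mul_div_cancel' (Nat.gcd_dvd_left _ _)
      have e2 : Nat.gcd t2 a * (t2 / Nat.gcd t2 a) = t2 := Nat.mul_div_cancel' (Nat.gcd_dvd_left _ _)
      rw [← e1, ← e2, heq.2, heq.1]
  simpa [Finset.card_product] using this

lemma card_divisors_mono {a b : ℕ} (h : a ∣ b) (hb : b ≠ 0) :
    a.divisors.card ≤ b.divisors.card :=
  Finset.card_le_card (Nat.divisors_subset_of_dvd hb h)

lemma tau_pow_le_sum (d R : ℕ) (hd : d ≠ 0) (hR : 1 ≤ R) :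
    ((d ^ R).divisors.card) ≤ ∑ e ∈ d.divisors, ((e ^ (R - 1)).divisors.card) := by
  classical
  have key : ((d ^ R).divisors.card) ≤ ((d.divisors.sigma fun e => (e ^ (R - 1)).divisors).card) := by
    apply Finset.card_le_card_of_injOn (fun t => ⟨Nat.gcd t d, t / Nat.gcd t d⟩)
    · intro t htm
      rw [Finset.mem_coe, Nat.mem_divisors] at htm
      have ht : t ≠ 0 := by
        rintro rfl
        exact (pow_ne_zero R hd) (Nat.eq_zero_of_zero_dvd htm.1 ▸ rfl)
      rw [Finset.mem_coe, Finset.mem_sigma]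
      constructor
      · rw [Nat.mem_divisors]; exact ⟨Nat.gcd_dvd_right t d, hd⟩
      · rw [Nat.mem_divisors]
        refine ⟨div_gcd_dvd_pow hd ht hR htm.1, pow_ne_zero _ (Nat.gcd_ne_zero_right hd)⟩
    · intro t1 h1 t2 h2 heq
      rw [Sigma.mk.inj_iff] at heq
      obtain ⟨hA, hB⟩ := heq
      have hB' := eq_of_heq hB
      have e1 : Nat.gcd t1 d * (t1 / Nat.gcd t1 d) = t1 := Nat.mul_div_cancel' (Nat.gcd_dvd_left _ _)
      have e2 : Nat.gcd t2 d * (t2 / Nat.gcd t2 d) = t2 := Nat.mul_div_cancel' (Nat.gcd_dvd_left _ _)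
      rw [← e1, ← e2, hB', hA]
  simpa [Finset.card_sigma] using key



lemma swap_divisor_sum (M : ℕ) (ψ : ℕ → ℕ → ℝ) :
    ∑ m ∈ Icc 1 M, ∑ e ∈ m.divisors, ψ e m
      = ∑ e ∈ Icc 1 M, ∑ f ∈ Icc 1 (M / e), ψ e (e * f) := by
  rw [Finset.sum_sigma', Finset.sum_sigma']
  refine Finset.sum_nbij' (fun x => ⟨x.2, x.1 / x.2⟩) (fun y => ⟨y.1 * y.2, y.1⟩) ?_ ?_ ?_ ?_ ?_
  · rintro ⟨m, e⟩ hx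
    simp only [Finset.mem_sigma, Finset.mem_Icc, Nat.mem_divisors] at hx ⊢
    obtain ⟨⟨hm1, hm2⟩, hed, hm0⟩ := hx
    have he1 : 1 ≤ e := Nat.pos_of_dvd_of_pos hed (by omega)
    have hem : e ≤ m := Nat.le_of_dvd (by omega) hed
    exact ⟨⟨he1, le_trans hem hm2⟩, Nat.div_pos hem (by omega), Nat.div_le_div_right hm2⟩
  · rintro ⟨e, f⟩ hy
    simp only [Finset.mem_sigma, Finset.mem_Icc, Nat.mem_divisors] at hy ⊢
    obtain ⟨⟨he1, heM⟩, hf1, hfM⟩ := hy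
    have hefM : e * f ≤ M := by
      have h1 := (Nat.le_div_iff_mul_le (by omega : 0 < e)).1 hfM
      have h2 : e * f = f * e := Nat.mul_comm e f
      omega
    refine ⟨⟨Nat.mul_pos (by omega) (by omega), hefM⟩, Dvd.intro f rfl,
      Nat.pos_iff_ne_zero.1 (Nat.mul_pos (by omega) (by omega))⟩
  · rintro ⟨m, e⟩ hx
    simp only [Finset.mem_sigma, Finset.mem_Icc, Nat.mem_divisors] at hx
    have : e * (m / e) = m := Nat.mul_div_cancel' hx.2.1
    simp [this]
  · rintro ⟨e, f⟩ hy
    simp only [Finset.mem_sigma, Finset.mem_Icc, Nat.mem_divisors] at hy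
    have : e * f / e = f := Nat.mul_div_cancel_left f (by omega)
    simp [this]
  · rintro ⟨m, e⟩ hx
    simp only [Finset.mem_sigma, Finset.mem_Icc, Nat.mem_divisors] at hx
    have : e * (m / e) = m := Nat.mul_div_cancel' hx.2.1
    simp [this]

lemma harmonic_le (M : ℕ) (hM : 1 ≤ M) :
    ∑ n ∈ Icc 1 M, (n : ℝ)⁻¹ ≤ 1 + Real.log M := by
  induction M with
  | zero => omega
  | succ M ih =>
    rcases Nat.eq_or_lt_of_le hM with hM1 | hM2
    · simp [← hM1]
    · have hM' : 1 ≤ M := by omega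
      have hstep : Real.log M + ((M : ℝ) + 1)⁻¹ ≤ Real.log ((M : ℝ) + 1) := by
        have hpos : (0 : ℝ) < M := by
          have : (1:ℝ) ≤ (M:ℝ) := by exact_mod_cast hM'
          linarith
        have h1 : Real.log ((M : ℝ) / ((M:ℝ) + 1)) ≤ (M : ℝ) / ((M:ℝ) + 1) - 1 :=
          Real.log_le_sub_one_of_pos (by positivity)
        have h2 : Real.log ((M : ℝ) / ((M:ℝ) + 1)) = Real.log M - Real.log ((M:ℝ) + 1) :=
          Real.log_div (by positivity) (by positivity)
        have h3 : (M : ℝ) / ((M:ℝ) + 1) - 1 = -(((M:ℝ) + 1)⁻¹) := by field_simp; ring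
        rw [h2, h3] at h1
        linarith
      rw [Finset.sum_Icc_succ_top (by omega : 1 ≤ M + 1)]
      have ihh := ih hM'
      push_cast
      push_cast at ihh hstep
      linarith

lemma powersum_le (s : ℝ) (hs0 : 0 ≤ s) (hs1 : s < 1) (F : ℕ) :
    ∑ f ∈ Icc 1 F, (f : ℝ) ^ (-s) ≤ (F : ℝ) ^ (1 - s) / (1 - s) := by
  have h1s : (0 : ℝ) < 1 - s := by linarith
  induction F with
  | zero =>
    simp [Real.zero_rpow (by linarith : (1:ℝ) - s ≠ 0)]
  | succ F ih =>
    rw [Finset.sum_Icc_succ_top (by omega : 1 ≤ F + 1)]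
    have key : (1 - s) * ((F : ℝ) + 1) ^ (-s) ≤ ((F : ℝ) + 1) ^ (1 - s) - (F : ℝ) ^ (1 - s) := by
      have hF1 : (0 : ℝ) < (F : ℝ) + 1 := by positivity
      have hu : (-1 : ℝ) ≤ (F : ℝ) / ((F:ℝ) + 1) - 1 := by
        have : (0:ℝ) ≤ (F : ℝ) / ((F:ℝ) + 1) := by positivity
        linarith
      have hb := rpow_one_add_le_one_add_mul_self
        (s := (F : ℝ) / ((F:ℝ) + 1) - 1) hu (p := 1 - s) (by linarith) (by linarith)
      have hone : (1:ℝ) + ((F : ℝ) / ((F:ℝ) + 1) - 1) = (F : ℝ) / ((F:ℝ) + 1) := by ring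
      rw [hone] at hb
      have hdiv : ((F : ℝ) / ((F:ℝ) + 1)) ^ (1 - s) = (F : ℝ) ^ (1 - s) / ((F : ℝ) + 1) ^ (1 - s) :=
        Real.div_rpow (by positivity) (by positivity) _
      rw [hdiv] at hb
      have hppos : (0 : ℝ) < ((F : ℝ) + 1) ^ (1 - s) := Real.rpow_pos_of_pos hF1 _
      have hb2 : (F : ℝ) ^ (1 - s) ≤ (1 + (1 - s) * ((F : ℝ) / ((F:ℝ) + 1) - 1)) * ((F : ℝ) + 1) ^ (1 - s) := by
        calc (F : ℝ) ^ (1 - s)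
            = ((F : ℝ) ^ (1 - s) / ((F : ℝ) + 1) ^ (1 - s)) * ((F : ℝ) + 1) ^ (1 - s) := by
              field_simp
          _ ≤ _ := mul_le_mul_of_nonneg_right hb (le_of_lt hppos)
      have hfrac : (F : ℝ) / ((F:ℝ) + 1) - 1 = -(((F : ℝ) + 1)⁻¹) := by field_simp; ring
      rw [hfrac] at hb2
      have hexp : ((F : ℝ) + 1) ^ (1 - s) * (((F : ℝ) + 1)⁻¹) = ((F : ℝ) + 1) ^ (-s) := by
        rw [← Real.rpow_neg_one ((F:ℝ)+1), ← Real.rpow_add hF1]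
        ring_nf
      nlinarith [hb2, hexp]
    have key2 : ((F : ℝ) + 1) ^ (-s) ≤ (((F : ℝ) + 1) ^ (1 - s) - (F : ℝ) ^ (1 - s)) / (1 - s) := by
      rw [le_div_iff₀ h1s]
      linarith
    have hid : (F : ℝ) ^ (1 - s) / (1 - s) + (((F : ℝ) + 1) ^ (1 - s) - (F : ℝ) ^ (1 - s)) / (1 - s)
        = ((F : ℝ) + 1) ^ (1 - s) / (1 - s) := by ring
    push_cast
    push_cast at ih
    linarith



lemma W_le (s : ℝ) (N : ℕ) (R : ℕ) :
    ∑ m ∈ Icc 1 N, ((m ^ R).divisors.card : ℝ) * (m : ℝ) ^ (-s)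
      ≤ (∑ n ∈ Icc 1 N, (n : ℝ) ^ (-s)) ^ (R + 1) := by
  have hZnn : (0:ℝ) ≤ ∑ n ∈ Icc 1 N, (n : ℝ) ^ (-s) :=
    Finset.sum_nonneg fun n _ => Real.rpow_nonneg (Nat.cast_nonneg n) _
  induction R with
  | zero =>
    have : ∀ m : ℕ, ((m ^ 0).divisors.card : ℝ) = 1 := by
      intro m; simp [pow_zero]
    simp only [this, one_mul, zero_add, pow_one]
    exact le_refl _
  | succ R ih =>
    have step1 : ∑ m ∈ Icc 1 N, ((m ^ (R+1)).divisors.card : ℝ) * (m : ℝ) ^ (-s)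
        ≤ ∑ m ∈ Icc 1 N, ∑ e ∈ m.divisors, ((e ^ R).divisors.card : ℝ) * (m : ℝ) ^ (-s) := by
      apply Finset.sum_le_sum
      intro m hm
      rw [Finset.mem_Icc] at hm
      rw [← Finset.sum_mul]
      apply mul_le_mul_of_nonneg_right _ (Real.rpow_nonneg (Nat.cast_nonneg m) _)
      have := tau_pow_le_sum m (R+1) (by omega) (by omega)
      simp only [Nat.add_sub_cancel] at this
      exact_mod_cast this
    have step2 : ∑ m ∈ Icc 1 N, ∑ e ∈ m.divisors, ((e ^ R).divisors.card : ℝ) * (m : ℝ) ^ (-s)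
        = ∑ e ∈ Icc 1 N, ∑ f ∈ Icc 1 (N / e), ((e ^ R).divisors.card : ℝ) * ((e * f : ℕ) : ℝ) ^ (-s) :=
      swap_divisor_sum N (fun e m => ((e ^ R).divisors.card : ℝ) * (m : ℝ) ^ (-s))
    have step3 : ∑ e ∈ Icc 1 N, ∑ f ∈ Icc 1 (N / e), ((e ^ R).divisors.card : ℝ) * ((e * f : ℕ) : ℝ) ^ (-s)
        ≤ ∑ e ∈ Icc 1 N, ((e ^ R).divisors.card : ℝ) * (e : ℝ) ^ (-s) * (∑ n ∈ Icc 1 N, (n : ℝ) ^ (-s)) := by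
      apply Finset.sum_le_sum
      intro e he
      rw [Finset.mem_Icc] at he
      have hcast : ∀ f : ℕ, ((e * f : ℕ) : ℝ) ^ (-s) = (e : ℝ) ^ (-s) * (f : ℝ) ^ (-s) := by
        intro f
        push_cast
        exact Real.mul_rpow (Nat.cast_nonneg e) (Nat.cast_nonneg f)
      simp only [hcast, ← Finset.mul_sum]
      rw [← mul_assoc]
      apply mul_le_mul_of_nonneg_left _ (by positivity)
      apply Finset.sum_le_sum_of_subset_of_nonneg
      · exact Finset.Icc_subset_Icc_right (Nat.div_le_self N e)
      · intro f _ _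
        exact Real.rpow_nonneg (Nat.cast_nonneg f) _
    calc ∑ m ∈ Icc 1 N, ((m ^ (R+1)).divisors.card : ℝ) * (m : ℝ) ^ (-s)
        ≤ ∑ e ∈ Icc 1 N, ((e ^ R).divisors.card : ℝ) * (e : ℝ) ^ (-s) * (∑ n ∈ Icc 1 N, (n : ℝ) ^ (-s)) := by
          rw [step2] at step1; exact le_trans step1 step3
      _ = (∑ e ∈ Icc 1 N, ((e ^ R).divisors.card : ℝ) * (e : ℝ) ^ (-s)) * (∑ n ∈ Icc 1 N, (n : ℝ) ^ (-s)) := by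
          rw [Finset.sum_mul]
      _ ≤ (∑ n ∈ Icc 1 N, (n : ℝ) ^ (-s)) ^ (R + 1) * (∑ n ∈ Icc 1 N, (n : ℝ) ^ (-s)) :=
          mul_le_mul_of_nonneg_right ih hZnn
      _ = (∑ n ∈ Icc 1 N, (n : ℝ) ^ (-s)) ^ (R + 2) := by ring

lemma count_le (s : ℝ) (hs0 : 0 ≤ s) (hs1 : s < 1) (N : ℕ) (R : ℕ) (hR : 1 ≤ R) :
    ∑ m ∈ Icc 1 N, ((m ^ R).divisors.card : ℝ) * (m : ℝ) ^ (-s)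
      ≤ (N : ℝ) ^ (1 - s) / (1 - s) * (∑ n ∈ Icc 1 N, (n : ℝ) ^ (-(1:ℝ))) ^ R := by
  have h1s : (0:ℝ) < 1 - s := by linarith
  have step1 : ∑ m ∈ Icc 1 N, ((m ^ R).divisors.card : ℝ) * (m : ℝ) ^ (-s)
      ≤ ∑ m ∈ Icc 1 N, ∑ e ∈ m.divisors, ((e ^ (R-1)).divisors.card : ℝ) * (m : ℝ) ^ (-s) := by
    apply Finset.sum_le_sum
    intro m hm
    rw [Finset.mem_Icc] at hm
    rw [← Finset.sum_mul]
    apply mul_le_mul_of_nonneg_right _ (Real.rpow_nonneg (Nat.cast_nonneg m) _)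
    exact_mod_cast tau_pow_le_sum m R (by omega) hR
  rw [swap_divisor_sum N (fun e m => ((e ^ (R-1)).divisors.card : ℝ) * (m : ℝ) ^ (-s))] at step1
  have step3 : ∑ e ∈ Icc 1 N, ∑ f ∈ Icc 1 (N / e), ((e ^ (R-1)).divisors.card : ℝ) * ((e * f : ℕ) : ℝ) ^ (-s)
      ≤ ∑ e ∈ Icc 1 N, ((e ^ (R-1)).divisors.card : ℝ) * (e : ℝ) ^ (-(1:ℝ)) * ((N:ℝ) ^ (1 - s) / (1 - s)) := by
    apply Finset.sum_le_sum
    intro e he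
    rw [Finset.mem_Icc] at he
    have hepos : (0:ℝ) < (e:ℝ) := by exact_mod_cast he.1
    have hcast : ∀ f : ℕ, ((e * f : ℕ) : ℝ) ^ (-s) = (e : ℝ) ^ (-s) * (f : ℝ) ^ (-s) := by
      intro f; push_cast; exact Real.mul_rpow (Nat.cast_nonneg e) (Nat.cast_nonneg f)
    simp only [hcast, ← Finset.mul_sum]
    rw [← mul_assoc]
    have hbase : ((N / e : ℕ) : ℝ) ^ (1 - s) ≤ ((N:ℝ)/(e:ℝ)) ^ (1 - s) :=
      Real.rpow_le_rpow (Nat.cast_nonneg _) Nat.cast_div_le (le_of_lt h1s)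
    have hps2 : ∑ f ∈ Icc 1 (N / e), (f : ℝ) ^ (-s) ≤ ((N:ℝ) / e) ^ (1 - s) / (1 - s) :=
      le_trans (powersum_le s hs0 hs1 (N / e)) (by gcongr)
    have hee : (e:ℝ) ^ (-s) / (e:ℝ) ^ (1 - s) = (e:ℝ) ^ (-(1:ℝ)) := by
      rw [← Real.rpow_sub hepos, show -s - (1 - s) = (-1 : ℝ) by ring]
    calc ((e ^ (R-1)).divisors.card : ℝ) * (e : ℝ) ^ (-s) * (∑ f ∈ Icc 1 (N/e), (f:ℝ)^(-s))
        ≤ ((e ^ (R-1)).divisors.card : ℝ) * (e : ℝ) ^ (-s) * (((N:ℝ)/e)^(1-s)/(1-s)) := by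
          apply mul_le_mul_of_nonneg_left hps2 (by positivity)
      _ = ((e ^ (R-1)).divisors.card : ℝ) * (e : ℝ) ^ (-(1:ℝ)) * ((N:ℝ)^(1-s)/(1-s)) := by
          rw [Real.div_rpow (Nat.cast_nonneg N) (le_of_lt hepos), ← hee]
          ring
  have step4 : ∑ e ∈ Icc 1 N, ((e ^ (R-1)).divisors.card : ℝ) * (e : ℝ) ^ (-(1:ℝ)) * ((N:ℝ) ^ (1 - s) / (1 - s))
      ≤ (∑ n ∈ Icc 1 N, (n : ℝ) ^ (-(1:ℝ))) ^ R * ((N:ℝ) ^ (1 - s) / (1 - s)) := by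
    rw [← Finset.sum_mul]
    apply mul_le_mul_of_nonneg_right _ (by positivity)
    have := W_le 1 N (R - 1)
    rwa [Nat.sub_add_cancel hR] at this
  calc ∑ m ∈ Icc 1 N, ((m ^ R).divisors.card : ℝ) * (m : ℝ) ^ (-s)
      ≤ _ := step1
    _ ≤ _ := step3
    _ ≤ _ := step4
    _ = (N : ℝ) ^ (1 - s) / (1 - s) * (∑ n ∈ Icc 1 N, (n : ℝ) ^ (-(1:ℝ))) ^ R := by ring




lemma exists_decomp (R : ℕ) (n : ℕ) (hn : n ≠ 0)
    (β : ℕ → ℕ) (hβ0 : β 0 = 0) (hβ : ∀ e : ℕ, R * β e ≤ e) :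
    ∃ m k : ℕ, m ≠ 0 ∧ k ≠ 0 ∧ n = m ^ R * k ∧
      (∀ p : ℕ, m.factorization p = β (n.factorization p)) ∧
      (∀ p : ℕ, k.factorization p = n.factorization p - R * β (n.factorization p)) := by
  classical
  set f : ℕ →₀ ℕ := Finsupp.mapRange β hβ0 n.factorization with hf
  have hsupp : ∀ p ∈ f.support, Nat.Prime p := by
    intro p hp
    have : p ∈ n.factorization.support := Finsupp.support_mapRange hp
    rw [Nat.support_factorization] at this
    exact Nat.prime_of_mem_primeFactors this
  set m : ℕ := f.prod (· ^ ·) with hm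
  have hm0 : m ≠ 0 := by
    rw [hm]
    apply Nat.pos_iff_ne_zero.1
    apply Finset.prod_pos
    intro p hp
    exact pow_pos (Nat.Prime.pos (Nat.prime_of_mem_primeFactors (by
      have : p ∈ n.factorization.support := Finsupp.support_mapRange hp
      rwa [Nat.support_factorization] at this))) _
  have hmf : m.factorization = f := Nat.prod_pow_factorization_eq_self hsupp
  have hmp : ∀ p : ℕ, m.factorization p = β (n.factorization p) := by
    intro p
    rw [hmf, hf]
    by_cases hp : p ∈ n.factorization.support
    · rw [Finsupp.mapRange_apply]
    · rw [Finsupp.mapRange_apply]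
  have hdvd : m ^ R ∣ n := by
    rw [← Nat.factorization_le_iff_dvd (pow_ne_zero _ hm0) hn]
    intro p
    rw [Nat.factorization_pow, Finsupp.smul_apply, smul_eq_mul, hmp p]
    exact hβ _
  refine ⟨m, n / m ^ R, hm0, ?_, (Nat.mul_div_cancel' hdvd).symm, hmp, ?_⟩
  · have hpos : 0 < n / m ^ R :=
      Nat.div_pos (Nat.le_of_dvd (Nat.pos_of_ne_zero hn) hdvd) (Nat.pos_of_ne_zero (pow_ne_zero _ hm0))
    omega
  · intro p
    rw [Nat.factorization_div hdvd, Finsupp.tsub_apply, Nat.factorization_pow,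
      Finsupp.smul_apply, smul_eq_mul, hmp p]

lemma rfull_le_factorization {R k p : ℕ} (h : IsRFull R k) (hk : k ≠ 0) (hp : p.Prime)
    (hpk : p ∣ k) : R ≤ k.factorization p :=
  (Nat.Prime.pow_dvd_iff_le_factorization hp hk).1 (h p hp hpk)

lemma dec_step (R : ℕ) (hR : 1 ≤ R) (n : ℕ) (hn : n ≠ 0) (hfull : IsRFull R n) :
    ∃ m k : ℕ, m ≠ 0 ∧ k ≠ 0 ∧ n = m ^ R * k ∧ IsRFull (R + 1) k := by
  set β : ℕ → ℕ := fun e => if R ∣ e then e / R else e / R - 1 with hβ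
  have hβ0 : β 0 = 0 := by simp [hβ]
  have hβle : ∀ e, R * β e ≤ e := by
    intro e
    rw [hβ]
    by_cases hdvd : R ∣ e
    · simp only [hdvd, if_true]
      rw [Nat.mul_div_cancel' hdvd]
    · simp only [hdvd, if_false]
      calc R * (e / R - 1) ≤ R * (e / R) := Nat.mul_le_mul_left R (Nat.sub_le _ _)
        _ ≤ e := Nat.mul_div_le e R
  obtain ⟨m, k, hm0, hk0, heq, hmp, hkp⟩ := exists_decomp R n hn β hβ0 hβle
  refine ⟨m, k, hm0, hk0, heq, ?_⟩
  intro p pp hpk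
  rw [Nat.Prime.pow_dvd_iff_le_factorization pp hk0]
  have hvpos : 0 < k.factorization p := pp.factorization_pos_of_dvd hk0 hpk
  have hpn : p ∣ n := heq ▸ Dvd.dvd.mul_left hpk _
  have hRe : R ≤ n.factorization p := rfull_le_factorization hfull hn pp hpn
  rw [hkp p] at hvpos ⊢
  set e := n.factorization p with he
  by_cases hdr : R ∣ e
  · exfalso
    rw [hβ] at hvpos
    simp only [hdr, if_true] at hvpos
    rw [Nat.mul_div_cancel' hdr] at hvpos
    omega
  · rw [hβ]
    simp only [hdr, if_false]
    have hq1 : 1 ≤ e / R := (Nat.one_le_div_iff (by omega)).2 hRe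
    obtain ⟨q', hq'⟩ : ∃ q', e / R = q' + 1 := ⟨e / R - 1, by omega⟩
    have hmod := Nat.div_add_mod e R
    have hmodne : e % R ≠ 0 := fun hc => hdr (Nat.dvd_of_mod_eq_zero hc)
    rw [hq'] at hmod
    rw [hq']
    simp only [Nat.add_sub_cancel]
    have hexp : R * (q' + 1) = R * q' + R := by ring
    omega

lemma dec_tail (R : ℕ) (hR : 1 ≤ R) (n : ℕ) (hn : n ≠ 0) (hfull : IsRFull R n) :
    ∃ a b : ℕ, a ≠ 0 ∧ n = a ^ R * b ∧ b ∣ a ^ (R - 1) := by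
  set β : ℕ → ℕ := fun e => e / R with hβ
  have hβ0 : β 0 = 0 := by simp [hβ]
  have hβle : ∀ e, R * β e ≤ e := fun e => Nat.mul_div_le e R
  obtain ⟨m, k, hm0, hk0, heq, hmp, hkp⟩ := exists_decomp R n hn β hβ0 hβle
  refine ⟨m, k, hm0, heq, ?_⟩
  rw [← Nat.factorization_le_iff_dvd hk0 (pow_ne_zero _ hm0)]
  intro p
  rw [hkp p, Nat.factorization_pow, Finsupp.smul_apply, smul_eq_mul, hmp p]
  set e := n.factorization p with he
  by_cases he0 : e = 0
  · simp [he0, hβ]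
  · have hppf : p ∈ n.primeFactors := by
      rw [← Nat.support_factorization]
      exact Finsupp.mem_support_iff.2 (by rw [← he]; exact he0)
    have pp := Nat.prime_of_mem_primeFactors hppf
    have hpn : p ∣ n := Nat.dvd_of_mem_primeFactors hppf
    have hRe : R ≤ e := rfull_le_factorization hfull hn pp hpn
    have hq1 : 1 ≤ e / R := (Nat.one_le_div_iff (by omega)).2 hRe
    have hmod := Nat.div_add_mod e R
    have hlt : e % R < R := Nat.mod_lt e (by omega)
    show e - R * (e / R) ≤ (R - 1) * (e / R)
    obtain ⟨q', hq'⟩ : ∃ q', e / R = q' + 1 := ⟨e / R - 1, by omega⟩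
    obtain ⟨RR, rfl⟩ : ∃ RR, R = RR + 1 := ⟨R - 1, by omega⟩
    rw [hq'] at hmod ⊢
    simp only [Nat.add_sub_cancel]
    have h1 : (RR + 1) * (q' + 1) = RR * q' + RR + q' + 1 := by ring
    have h2 : RR * (q' + 1) = RR * q' + RR := by ring
    omega

lemma pow_isRFull (R a : ℕ) : IsRFull R (a ^ R) := by
  intro p pp hpa
  exact pow_dvd_pow_of_dvd (pp.dvd_of_dvd_pow hpa) R

lemma NI (R : ℕ) (hR : 2 ≤ R) : ∀ e : ℕ, R ≤ e → ((e : ℝ) + 1) ^ R ≤ ((R : ℝ) + 1) ^ e := by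
  intro e he
  induction e, he using Nat.le_induction with
  | base => norm_num
  | succ e he ih =>
    have he1 : (0:ℝ) < (e:ℝ) + 1 := by positivity
    have hkey : ((e : ℝ) + 2) ^ R ≤ ((e : ℝ) + 1) ^ R * ((R:ℝ) + 1) := by
      have hsplit : ((e : ℝ) + 2) = ((e:ℝ) + 1) * (1 + 1/((e:ℝ)+1)) := by field_simp; ring
      rw [hsplit, mul_pow]
      apply mul_le_mul_of_nonneg_left _ (by positivity)
      have hx : (1 + 1/((e:ℝ)+1)) ≤ Real.exp (1/((e:ℝ)+1)) := by
        have := Real.add_one_le_exp (1/((e:ℝ)+1))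
        linarith
      calc (1 + 1/((e:ℝ)+1)) ^ R ≤ (Real.exp (1/((e:ℝ)+1))) ^ R :=
            pow_le_pow_left₀ (by positivity) hx R
        _ = Real.exp ((R:ℝ) * (1/((e:ℝ)+1))) := by rw [← Real.exp_nat_mul]
        _ ≤ Real.exp 1 := by
            apply Real.exp_le_exp.2
            rw [mul_one_div]
            rw [div_le_one he1]
            have : (R:ℝ) ≤ (e:ℝ) := by exact_mod_cast he
            linarith
        _ ≤ (R:ℝ) + 1 := by
            have h3 : Real.exp 1 < 2.7182818286 := Real.exp_one_lt_d9
            have : (2:ℝ) ≤ (R:ℝ) := by exact_mod_cast hR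
            linarith
    have hmono : ((e:ℝ) + 1) ^ R * ((R:ℝ) + 1) ≤ ((R : ℝ) + 1) ^ e * ((R:ℝ)+1) := by
      apply mul_le_mul_of_nonneg_right ih (by positivity)
    push_cast
    calc ((e:ℝ) + 1 + 1) ^ R = ((e:ℝ) + 2) ^ R := by ring_nf
      _ ≤ ((e : ℝ) + 1) ^ R * ((R:ℝ) + 1) := hkey
      _ ≤ ((R : ℝ) + 1) ^ e * ((R:ℝ)+1) := hmono
      _ = ((R : ℝ) + 1) ^ (e + 1) := by ring

lemma tau_rpow_bound (R k : ℕ) (hR : 2 ≤ R) (hk : k ≠ 0) (hfull : IsRFull R k) :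
    (k.divisors.card : ℝ) ≤ (k : ℝ) ^ (Real.log ((R:ℝ) + 1) / ((R:ℝ) * Real.log 2)) := by
  set c : ℝ := Real.log ((R:ℝ) + 1) / ((R:ℝ) * Real.log 2) with hc
  have hlog2 : (0:ℝ) < Real.log 2 := Real.log_pos (by norm_num)
  have hRpos : (0:ℝ) < (R:ℝ) := by positivity
  have hcpos : 0 ≤ c := by
    rw [hc]
    apply div_nonneg (Real.log_nonneg (by push_cast; linarith)) (by positivity)
  have hcard : (k.divisors.card : ℝ) = ∏ p ∈ k.factorization.support, ((k.factorization p + 1 : ℕ) : ℝ) := by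
    rw [Nat.card_divisors hk]
    push_cast
    rw [Nat.support_factorization]
  have hprod : (k : ℝ) = ∏ p ∈ k.factorization.support, ((p ^ k.factorization p : ℕ) : ℝ) := by
    conv_lhs => rw [← Nat.factorization_prod_pow_eq_self hk]
    rw [Finsupp.prod]
    push_cast
    rfl
  rw [hcard, hprod, ← Real.finset_prod_rpow _ _ (fun p _ => by positivity) c]
  apply Finset.prod_le_prod
  · intro p _
    positivity
  · intro p hp
    have hppf : p ∈ k.primeFactors := by rwa [Nat.support_factorization] at hp
    have pp := Nat.prime_of_mem_primeFactors hppf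
    have hpk : p ∣ k := Nat.dvd_of_mem_primeFactors hppf
    have hRe : R ≤ k.factorization p := rfull_le_factorization hfull hk pp hpk
    set e := k.factorization p with he
    have hp2 : (2:ℝ) ≤ (p:ℝ) := by exact_mod_cast pp.two_le
    have hcast : ((p ^ e : ℕ) : ℝ) = (p:ℝ) ^ e := by push_cast; rfl
    rw [hcast, ← Real.rpow_natCast (p:ℝ) e, ← Real.rpow_mul (by positivity)]
    have h2e : ((e:ℕ):ℝ) + 1 ≤ (2:ℝ) ^ ((e:ℝ) * c) := by
      have hNI := NI R hR e hRe
      have hlog := Real.log_le_log (by positivity) hNI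
      rw [Real.log_pow, Real.log_pow] at hlog
      have hloge : Real.log ((e:ℝ) + 1) ≤ (e:ℝ) * Real.log ((R:ℝ)+1) / R := by
        rw [le_div_iff₀ hRpos]
        calc Real.log ((e:ℝ) + 1) * R = (R:ℕ) * Real.log ((e:ℝ)+1) := by push_cast; ring
          _ ≤ (e:ℕ) * Real.log ((R:ℝ)+1) := hlog
          _ = (e:ℝ) * Real.log ((R:ℝ)+1) := by push_cast; ring
      have hrw : (2:ℝ) ^ ((e:ℝ) * c) = Real.exp ((e:ℝ) * Real.log ((R:ℝ)+1) / R) := by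
        rw [Real.rpow_def_of_pos (by norm_num : (0:ℝ) < 2)]
        congr 1
        rw [hc]
        field_simp
      rw [hrw]
      calc ((e:ℕ):ℝ) + 1 = Real.exp (Real.log ((e:ℝ) + 1)) := by
            rw [Real.exp_log (by positivity)]
        _ ≤ _ := Real.exp_le_exp.2 hloge
    calc ((e + 1 : ℕ) : ℝ) = ((e:ℕ):ℝ) + 1 := by push_cast; ring
      _ ≤ (2:ℝ) ^ ((e:ℝ) * c) := h2e
      _ ≤ (p:ℝ) ^ ((e:ℝ) * c) := Real.rpow_le_rpow (by norm_num) hp2 (by positivity)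

noncomputable def Ssum (N R : ℕ) (σ : ℝ) : ℝ :=
  ∑ k ∈ (Icc 1 N).filter (fun k => IsRFull R k), ((k.divisors.card : ℝ) * (k:ℝ) ^ (-σ))

lemma Ssum_nonneg (N R : ℕ) (σ : ℝ) : 0 ≤ Ssum N R σ :=
  Finset.sum_nonneg fun k _ => by positivity

lemma Ssum_mono_exp (N R : ℕ) {σ σ' : ℝ} (hσ : σ ≤ σ') : Ssum N R σ' ≤ Ssum N R σ := by
  apply Finset.sum_le_sum
  intro k hk
  rw [Finset.mem_filter, Finset.mem_Icc] at hk
  have hk1 : (1:ℝ) ≤ (k:ℝ) := by exact_mod_cast hk.1.1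
  apply mul_le_mul_of_nonneg_left _ (Nat.cast_nonneg _)
  exact Real.rpow_le_rpow_of_exponent_le hk1 (by linarith)

lemma chain_step (N R : ℕ) (hR : 1 ≤ R) (σ : ℝ) (hσ : 0 ≤ σ) :
    Ssum N R σ ≤ (∑ m ∈ Icc 1 N, ((m^R).divisors.card : ℝ) * (m:ℝ) ^ (-((R:ℝ)*σ)))
      * Ssum N (R+1) σ := by
  classical
  set s := (Icc 1 N).filter (fun k => IsRFull R k) with hs
  set t := (Icc 1 N) ×ˢ ((Icc 1 N).filter (fun k => IsRFull (R+1) k)) with ht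
  set P : ℕ → ℕ × ℕ → Prop := fun k p => p.1 ≠ 0 ∧ p.2 ≠ 0 ∧ k = p.1 ^ R * p.2 ∧ IsRFull (R+1) p.2
    with hP
  have hex : ∀ k ∈ s, ∃ p, P k p := by
    intro k hk
    rw [hs, Finset.mem_filter, Finset.mem_Icc] at hk
    obtain ⟨m, k', h1, h2, h3, h4⟩ := dec_step R hR k (by omega) hk.2
    exact ⟨(m, k'), h1, h2, h3, h4⟩
  set i : ℕ → ℕ × ℕ := fun k => if h : ∃ p, P k p then h.choose else (1,1) with hi
  have hiP : ∀ k ∈ s, P k (i k) := by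
    intro k hk
    rw [hi]
    simp only
    rw [dif_pos (hex k hk)]
    exact (hex k hk).choose_spec
  have key : Ssum N R σ ≤ ∑ p ∈ t,
      ((((p.1:ℕ)^R).divisors.card : ℝ) * (p.1:ℝ) ^ (-((R:ℝ)*σ)))
        * (((p.2:ℕ).divisors.card : ℝ) * (p.2:ℝ) ^ (-σ)) := by
    apply sum_le_sum_inj s t i
    · intro k1 hk1 k2 hk2 heq
      obtain ⟨m1, n1, e1, f1⟩ := hiP k1 hk1
      obtain ⟨m2, n2, e2, f2⟩ := hiP k2 hk2
      rw [e1, heq, ← e2]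
    · intro k hk
      obtain ⟨hm0, hk0, heq, hfull⟩ := hiP k hk
      have hkIcc : k ∈ Icc 1 N := (Finset.mem_filter.1 hk).1
      rw [Finset.mem_Icc] at hkIcc
      rw [ht, Finset.mem_product, Finset.mem_Icc, Finset.mem_filter, Finset.mem_Icc]
      have hle1 : (i k).1 ≤ k := by
        calc (i k).1 ≤ (i k).1 ^ R := Nat.le_self_pow (by omega) _
          _ ≤ (i k).1 ^ R * (i k).2 := Nat.le_mul_of_pos_right _ (by omega)
          _ = k := heq.symm
      have hle2 : (i k).2 ≤ k := by
        calc (i k).2 ≤ (i k).1 ^ R * (i k).2 :=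
              Nat.le_mul_of_pos_left _ (by positivity)
          _ = k := heq.symm
      exact ⟨⟨by omega, le_trans hle1 hkIcc.2⟩, ⟨by omega, le_trans hle2 hkIcc.2⟩, hfull⟩
    · intro k hk
      obtain ⟨hm0, hk0, heq, hfull⟩ := hiP k hk
      set m := (i k).1
      set k' := (i k).2
      have htau : (k.divisors.card : ℝ) ≤ ((m^R).divisors.card : ℝ) * (k'.divisors.card : ℝ) := by
        rw [heq]
        exact_mod_cast card_divisors_mul_le (pow_ne_zero _ hm0) hk0
      have hrpow : (k:ℝ) ^ (-σ) = (m:ℝ) ^ (-((R:ℝ)*σ)) * (k':ℝ) ^ (-σ) := by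
        rw [heq]
        push_cast
        rw [Real.mul_rpow (by positivity) (by positivity)]
        congr 1
        rw [← Real.rpow_natCast (m:ℝ) R, ← Real.rpow_mul (by positivity)]
        congr 1
        ring
      calc (k.divisors.card : ℝ) * (k:ℝ) ^ (-σ)
          ≤ (((m^R).divisors.card : ℝ) * (k'.divisors.card : ℝ)) * (k:ℝ) ^ (-σ) :=
            mul_le_mul_of_nonneg_right htau (by positivity)
        _ = (((m^R).divisors.card : ℝ) * (m:ℝ) ^ (-((R:ℝ)*σ)))
            * (((k'.divisors.card : ℝ)) * (k':ℝ) ^ (-σ)) := by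
            rw [hrpow]; ring
    · intro p _
      positivity
  rw [ht, Finset.sum_product] at key
  simp only [← Finset.mul_sum] at key
  rw [← Finset.sum_mul] at key
  exact key

noncomputable def Zr (r : ℕ) : ℝ := 1 + ∑' n : ℕ, (n:ℝ) ^ (-(1 + 1/(r:ℝ)))

lemma Zr_one_le (r : ℕ) (hr : 2 ≤ r) : 1 ≤ Zr r := by
  have : 0 ≤ ∑' n : ℕ, (n:ℝ) ^ (-(1 + 1/(r:ℝ))) :=
    tsum_nonneg fun n => Real.rpow_nonneg (Nat.cast_nonneg n) _
  rw [Zr]; linarith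

lemma sum_rpow_le_Zr (r N : ℕ) (hr : 2 ≤ r) {s : ℝ} (hs : 1 + 1/(r:ℝ) ≤ s) :
    ∑ n ∈ Icc 1 N, (n:ℝ) ^ (-s) ≤ Zr r := by
  have hsum : Summable (fun n : ℕ => (n:ℝ) ^ (-(1 + 1/(r:ℝ)))) := by
    apply Real.summable_nat_rpow.2
    have : 0 < 1/(r:ℝ) := by positivity
    linarith
  have hterm : ∀ n ∈ Icc 1 N, (n:ℝ) ^ (-s) ≤ (n:ℝ) ^ (-(1 + 1/(r:ℝ))) := by
    intro n hn
    rw [Finset.mem_Icc] at hn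
    have : (1:ℝ) ≤ (n:ℝ) := by exact_mod_cast hn.1
    exact Real.rpow_le_rpow_of_exponent_le this (by linarith)
  calc ∑ n ∈ Icc 1 N, (n:ℝ) ^ (-s) ≤ ∑ n ∈ Icc 1 N, (n:ℝ) ^ (-(1 + 1/(r:ℝ))) :=
        Finset.sum_le_sum hterm
    _ ≤ ∑' n : ℕ, (n:ℝ) ^ (-(1 + 1/(r:ℝ))) :=
        Summable.sum_le_tsum _ (fun n _ => Real.rpow_nonneg (Nat.cast_nonneg n) _) hsum
    _ ≤ Zr r := by rw [Zr]; linarith [le_refl (0:ℝ)]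

lemma num_bound (r : ℕ) (hr : 2 ≤ r) :
    ((2*(64*r^2):ℕ):ℝ) * (Real.log (((2*(64*r^2):ℕ):ℝ) + 1)
        / (((2*(64*r^2):ℕ):ℝ) * Real.log 2))
      + ((2*(64*r^2):ℕ):ℝ) * (Real.log (((2*(64*r^2):ℕ):ℝ) + 1)
        / (((2*(64*r^2):ℕ):ℝ) * Real.log 2))
      + ((64*r^2:ℕ):ℝ) * (-(1/(r:ℝ))) ≤ -(1 + 1/(r:ℝ)) := by
  rw [show ∀ X Y Z : ℝ, X + X + Y ≤ Z ↔ 2*X + Y ≤ Z from fun X Y Z => by constructor <;> intro <;> linarith]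
  have hrR : (2:ℝ) ≤ (r:ℝ) := by exact_mod_cast hr
  have hlog2 : (0:ℝ) < Real.log 2 := Real.log_pos (by norm_num)
  have hR0pos : (0:ℝ) < ((2*(64*r^2):ℕ):ℝ) := by
    have : 0 < 2*(64*r^2) := by positivity
    exact_mod_cast this
  set T : ℝ := ((2*(64*r^2):ℕ):ℝ) with hT
  have hsimp : T * (Real.log (T + 1) / (T * Real.log 2)) = Real.log (T + 1) / Real.log 2 := by
    field_simp
  rw [hsimp]
  -- nat inequality : 2*(64*r^2)+1 ≤ 2^(8+2r)
  have hnat : 2*(64*r^2) + 1 ≤ 2^(8+2*r) := by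
    have h1 : r < 2^r := Nat.lt_two_pow_self
    have h2 : r^2 ≤ (2^r)^2 := Nat.pow_le_pow_left (le_of_lt h1) 2
    have h3 : 2^(8+2*r) = 256 * (2^r)^2 := by
      rw [pow_add, ← pow_mul, mul_comm r 2]
      norm_num
    have h4 : 0 < (2^r)^2 := by positivity
    calc 2*(64*r^2) + 1 = 128*r^2 + 1 := by ring
      _ ≤ 128*(2^r)^2 + 1 := by omega
      _ ≤ 256 * (2^r)^2 := by omega
      _ = 2^(8+2*r) := h3.symm
  have hlogle : Real.log (T + 1) ≤ ((8+2*r : ℕ):ℝ) * Real.log 2 := by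
    have hcast : T + 1 ≤ ((2:ℝ))^((8+2*r : ℕ)) := by
      rw [hT]
      have : ((2*(64*r^2) + 1 : ℕ):ℝ) ≤ ((2^(8+2*r) : ℕ):ℝ) := by exact_mod_cast hnat
      push_cast at this ⊢
      linarith
    calc Real.log (T + 1) ≤ Real.log ((2:ℝ)^((8+2*r : ℕ))) :=
          Real.log_le_log (by positivity) hcast
      _ = ((8+2*r : ℕ):ℝ) * Real.log 2 := by rw [Real.log_pow]
  have hdiv : Real.log (T + 1) / Real.log 2 ≤ ((8+2*r : ℕ):ℝ) := by
    rw [div_le_iff₀ hlog2]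
    exact hlogle
  have hcast2 : ((64*r^2:ℕ):ℝ) * (-(1/(r:ℝ))) = -(64*(r:ℝ)) := by
    have hrne : (r:ℝ) ≠ 0 := by positivity
    push_cast
    field_simp
  rw [hcast2]
  have hinv : 1/(r:ℝ) ≤ 1 := by
    rw [div_le_one (by positivity)]
    linarith
  have h8 : ((8+2*r : ℕ):ℝ) = 8 + 2*(r:ℝ) := by push_cast; ring
  rw [h8] at hdiv
  linarith

lemma tail_bound (r N R0 : ℕ) (hr : 2 ≤ r) (hR0pos : 1 ≤ R0)
    (hnum : ((2*R0:ℕ):ℝ) * (Real.log (((2*R0:ℕ):ℝ) + 1) / (((2*R0:ℕ):ℝ) * Real.log 2))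
      + ((2*R0:ℕ):ℝ) * (Real.log (((2*R0:ℕ):ℝ) + 1) / (((2*R0:ℕ):ℝ) * Real.log 2))
      + ((R0:ℕ):ℝ) * (-(1/(r:ℝ))) ≤ -(1 + 1/(r:ℝ))) :
    Ssum N R0 (1/(r:ℝ)) ≤ Zr r := by
  classical
  set s := (Icc 1 N).filter (fun k => IsRFull R0 k) with hs
  set t := (Icc 1 N).sigma (fun a => (a^(R0-1)).divisors) with ht
  set c : ℝ := Real.log (((2*R0:ℕ):ℝ) + 1) / (((2*R0:ℕ):ℝ) * Real.log 2) with hc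
  set g : (Σ _ : ℕ, ℕ) → ℝ :=
    fun x => (((x.1^(2*R0)).divisors.card : ℝ)) * (x.1:ℝ) ^ (((R0:ℕ):ℝ) * (-(1/(r:ℝ)))) with hg
  set P : ℕ → (Σ _ : ℕ, ℕ) → Prop :=
    fun k x => x.1 ≠ 0 ∧ k = x.1 ^ R0 * x.2 ∧ x.2 ∣ x.1 ^ (R0-1) with hP
  have hex : ∀ k ∈ s, ∃ x, P k x := by
    intro k hk
    rw [hs, Finset.mem_filter, Finset.mem_Icc] at hk
    obtain ⟨a, b, h1, h2, h3⟩ := dec_tail R0 hR0pos k (by omega) hk.2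
    exact ⟨⟨a, b⟩, h1, h2, h3⟩
  set i : ℕ → (Σ _ : ℕ, ℕ) := fun k => if h : ∃ x, P k x then h.choose else ⟨1,1⟩ with hi
  have hiP : ∀ k ∈ s, P k (i k) := by
    intro k hk
    rw [hi]
    simp only
    rw [dif_pos (hex k hk)]
    exact (hex k hk).choose_spec
  have key : Ssum N R0 (1/(r:ℝ)) ≤ ∑ x ∈ t, g x := by
    apply sum_le_sum_inj s t i
    · intro k1 hk1 k2 hk2 heq
      obtain ⟨m1, e1, f1⟩ := hiP k1 hk1
      obtain ⟨m2, e2, f2⟩ := hiP k2 hk2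
      rw [e1, heq, ← e2]
    · intro k hk
      obtain ⟨ha0, heq, hdvd⟩ := hiP k hk
      have hkIcc : k ∈ Icc 1 N := (Finset.mem_filter.1 hk).1
      rw [Finset.mem_Icc] at hkIcc
      have hb0 : (i k).2 ≠ 0 := by
        intro hb
        rw [hb, mul_zero] at heq
        omega
      rw [ht, Finset.mem_sigma, Finset.mem_Icc, Nat.mem_divisors]
      have hle1 : (i k).1 ≤ k := by
        calc (i k).1 ≤ (i k).1 ^ R0 := Nat.le_self_pow (by omega) _
          _ ≤ (i k).1 ^ R0 * (i k).2 := Nat.le_mul_of_pos_right _ (by omega)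
          _ = k := heq.symm
      exact ⟨⟨by omega, le_trans hle1 hkIcc.2⟩, hdvd, pow_ne_zero _ ha0⟩
    · intro k hk
      obtain ⟨ha0, heq, hdvd⟩ := hiP k hk
      set a := (i k).1 with haa
      set b := (i k).2 with hbb
      have ha1 : 1 ≤ a := by omega
      have hk0' : k ≠ 0 := by
        have hmem := (Finset.mem_filter.1 hk).1
        rw [Finset.mem_Icc] at hmem
        omega
      have hb0 : b ≠ 0 := fun hb => hk0' (by rw [heq, hb, mul_zero])
      have hkdvd : k ∣ a ^ (2*R0) := by
        rw [heq]
        have h1 : a ^ R0 * b ∣ a ^ R0 * a ^ (R0-1) := mul_dvd_mul_left _ hdvd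
        have h2 : a ^ R0 * a ^ (R0-1) = a ^ (R0 + (R0-1)) := by rw [pow_add]
        have h3 : a ^ (R0 + (R0-1)) ∣ a ^ (2*R0) := pow_dvd_pow a (by omega)
        exact dvd_trans (h2 ▸ h1) h3
      have htau : (k.divisors.card : ℝ) ≤ ((a^(2*R0)).divisors.card : ℝ) := by
        exact_mod_cast card_divisors_mono hkdvd (pow_ne_zero _ ha0)
      have hk0 : k ≠ 0 := by
        have := (Finset.mem_filter.1 hk).1
        rw [Finset.mem_Icc] at this
        omega
      have hrpow : (k:ℝ) ^ (-(1/(r:ℝ))) ≤ (a:ℝ) ^ (((R0:ℕ):ℝ) * (-(1/(r:ℝ)))) := by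
        have haknat : a ^ R0 ≤ k := by
          calc a ^ R0 ≤ a ^ R0 * b := Nat.le_mul_of_pos_right _ (by omega)
            _ = k := heq.symm
        have hak : ((a ^ R0 : ℕ):ℝ) ≤ (k:ℝ) := by exact_mod_cast haknat
        have hap : (0:ℝ) < ((a ^ R0 : ℕ):ℝ) := by
          have : 0 < a ^ R0 := by positivity
          exact_mod_cast this
        have h1 : ((a ^ R0 : ℕ):ℝ) ^ ((1:ℝ)/(r:ℝ)) ≤ (k:ℝ) ^ ((1:ℝ)/(r:ℝ)) :=
          Real.rpow_le_rpow (le_of_lt hap) hak (by positivity)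
        have h2 : (0:ℝ) < ((a ^ R0 : ℕ):ℝ) ^ ((1:ℝ)/(r:ℝ)) := Real.rpow_pos_of_pos hap _
        have h3 := inv_anti₀ h2 h1
        have h4 : ((a ^ R0 : ℕ):ℝ) ^ ((1:ℝ)/(r:ℝ)) = (a:ℝ) ^ (((R0:ℕ):ℝ) * ((1:ℝ)/(r:ℝ))) := by
          push_cast
          rw [← Real.rpow_natCast (a:ℝ) R0, ← Real.rpow_mul (by positivity)]
        rw [h4] at h3
        calc (k:ℝ) ^ (-(1/(r:ℝ))) = ((k:ℝ) ^ ((1:ℝ)/(r:ℝ)))⁻¹ := by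
              rw [← Real.rpow_neg (Nat.cast_nonneg k)]
          _ ≤ ((a:ℝ) ^ (((R0:ℕ):ℝ) * ((1:ℝ)/(r:ℝ))))⁻¹ := h3
          _ = ((a:ℝ) ^ (((R0:ℕ):ℝ) * (-(1/(r:ℝ))))) := by
              rw [← Real.rpow_neg (Nat.cast_nonneg a)]
              congr 1
              ring
      calc (k.divisors.card : ℝ) * (k:ℝ) ^ (-(1/(r:ℝ)))
          ≤ ((a^(2*R0)).divisors.card : ℝ) * (a:ℝ) ^ (((R0:ℕ):ℝ) * (-(1/(r:ℝ)))) := by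
            apply mul_le_mul htau hrpow (Real.rpow_nonneg (Nat.cast_nonneg k) _)
              (Nat.cast_nonneg _)
        _ = g ⟨a, b⟩ := rfl
    · intro x _
      exact mul_nonneg (Nat.cast_nonneg _) (Real.rpow_nonneg (Nat.cast_nonneg _) _)
  have hsum : ∑ x ∈ t, g x ≤ ∑ a ∈ Icc 1 N, (a:ℝ) ^ (-(1+1/(r:ℝ))) := by
    rw [ht, Finset.sum_sigma]
    apply Finset.sum_le_sum
    intro a ha
    rw [Finset.mem_Icc] at ha
    have ha0 : a ≠ 0 := by omega
    have ha1R : (1:ℝ) ≤ (a:ℝ) := by exact_mod_cast ha.1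
    have hconst : ∑ x ∈ (a^(R0-1)).divisors, g ⟨a, x⟩
        = ((a^(R0-1)).divisors.card : ℝ) * (((a^(2*R0)).divisors.card : ℝ))
          * (a:ℝ) ^ (((R0:ℕ):ℝ) * (-(1/(r:ℝ)))) := by
      have hgv : ∀ x ∈ (a^(R0-1)).divisors, g ⟨a, x⟩
          = ((a^(2*R0)).divisors.card : ℝ) * (a:ℝ) ^ (((R0:ℕ):ℝ) * (-(1/(r:ℝ)))) :=
        fun x _ => rfl
      rw [Finset.sum_congr rfl hgv, Finset.sum_const, nsmul_eq_mul]
      ring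
    rw [hconst]
    have h2R0 : 2 ≤ 2*R0 := by omega
    have htb := tau_rpow_bound (2*R0) (a^(2*R0)) h2R0 (pow_ne_zero _ ha0) (pow_isRFull (2*R0) a)
    have htb2 : ((a^(2*R0)).divisors.card : ℝ) ≤ (a:ℝ) ^ (((2*R0:ℕ):ℝ) * c) := by
      apply le_trans htb
      rw [hc]
      apply le_of_eq
      push_cast
      rw [← Real.rpow_natCast (a:ℝ) (2*R0), ← Real.rpow_mul (by positivity)]
      push_cast
      ring_nf
    have htau1 : ((a^(R0-1)).divisors.card : ℝ) ≤ (a:ℝ) ^ (((2*R0:ℕ):ℝ) * c) := by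
      apply le_trans _ htb2
      exact_mod_cast card_divisors_mono (pow_dvd_pow a (by omega)) (pow_ne_zero _ ha0)
    calc ((a^(R0-1)).divisors.card : ℝ) * (((a^(2*R0)).divisors.card : ℝ))
          * (a:ℝ) ^ (((R0:ℕ):ℝ) * (-(1/(r:ℝ))))
        ≤ ((a:ℝ) ^ (((2*R0:ℕ):ℝ) * c)) * ((a:ℝ) ^ (((2*R0:ℕ):ℝ) * c))
          * (a:ℝ) ^ (((R0:ℕ):ℝ) * (-(1/(r:ℝ)))) := by
          apply mul_le_mul_of_nonneg_right _ (by positivity)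
          apply mul_le_mul htau1 htb2 (by positivity) (by positivity)
      _ = (a:ℝ) ^ (((2*R0:ℕ):ℝ) * c + ((2*R0:ℕ):ℝ) * c + ((R0:ℕ):ℝ) * (-(1/(r:ℝ)))) := by
          rw [Real.rpow_add (by positivity), Real.rpow_add (by positivity)]
      _ ≤ (a:ℝ) ^ (-(1+1/(r:ℝ))) := by
          apply Real.rpow_le_rpow_of_exponent_le ha1R
          exact hnum
  have hlast : ∑ a ∈ Icc 1 N, (a:ℝ) ^ (-(1+1/(r:ℝ))) ≤ Zr r :=
    sum_rpow_le_Zr r N hr le_rfl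
  linarith

lemma chain_bound (r N : ℕ) (hr : 2 ≤ r) :
    Ssum N (r+1) (1/(r:ℝ)) ≤ Zr r ^ ((64*r^2+1) * (64*r^2)) * Zr r := by
  have hZ1 := Zr_one_le r hr
  have hZ0 : (0:ℝ) ≤ Zr r := by linarith
  suffices H : ∀ j : ℕ, ∀ R : ℕ, r+1 ≤ R → R + j = 64*r^2 →
      Ssum N R (1/(r:ℝ)) ≤ Zr r ^ ((64*r^2+1) * j) * Zr r by
    have hle : r + 1 ≤ 64*r^2 := by nlinarith
    have := H (64*r^2 - (r+1)) (r+1) le_rfl (by omega)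
    apply le_trans this
    apply mul_le_mul_of_nonneg_right _ hZ0
    exact pow_le_pow_right₀ hZ1 (Nat.mul_le_mul_left _ (by omega))
  intro j
  induction j with
  | zero =>
    intro R hR1 hR2
    have hRe : R = 64*r^2 := by omega
    subst hRe
    have hpos : 1 ≤ 64*r^2 := by
      rw [pow_two]
      have := Nat.mul_le_mul hr hr
      omega
    simpa using tail_bound r N (64*r^2) hr hpos (num_bound r hr)
  | succ j ih =>
    intro R hR1 hR2
    have hstep := chain_step N R (by omega) (1/(r:ℝ)) (by positivity)
    have hfac : ∑ m ∈ Icc 1 N, ((m^R).divisors.card : ℝ) * (m:ℝ) ^ (-((R:ℝ)*(1/(r:ℝ))))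
        ≤ Zr r ^ (R+1) := by
      have hexp : ∀ m ∈ Icc 1 N, ((m^R).divisors.card : ℝ) * (m:ℝ) ^ (-((R:ℝ)*(1/(r:ℝ))))
          ≤ ((m^R).divisors.card : ℝ) * (m:ℝ) ^ (-(1+1/(r:ℝ))) := by
        intro m hm
        rw [Finset.mem_Icc] at hm
        have hm1 : (1:ℝ) ≤ (m:ℝ) := by exact_mod_cast hm.1
        apply mul_le_mul_of_nonneg_left _ (Nat.cast_nonneg _)
        apply Real.rpow_le_rpow_of_exponent_le hm1
        have hrpos : (0:ℝ) < (r:ℝ) := by positivity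
        have hRge : ((r:ℝ)+1) ≤ (R:ℝ) := by exact_mod_cast hR1
        have hkey2 : (1+1/(r:ℝ)) * (r:ℝ) = (r:ℝ) + 1 := by field_simp
        rw [neg_le_neg_iff, mul_one_div, le_div_iff₀ hrpos, hkey2]
        linarith
      calc ∑ m ∈ Icc 1 N, ((m^R).divisors.card : ℝ) * (m:ℝ) ^ (-((R:ℝ)*(1/(r:ℝ))))
          ≤ ∑ m ∈ Icc 1 N, ((m^R).divisors.card : ℝ) * (m:ℝ) ^ (-(1+1/(r:ℝ))) :=
            Finset.sum_le_sum hexp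
        _ ≤ (∑ n ∈ Icc 1 N, (n:ℝ) ^ (-(1+1/(r:ℝ)))) ^ (R+1) := W_le _ N R
        _ ≤ Zr r ^ (R+1) := by
            apply pow_le_pow_left₀ _ (sum_rpow_le_Zr r N hr le_rfl)
            exact Finset.sum_nonneg fun n _ => Real.rpow_nonneg (Nat.cast_nonneg n) _
    have hih := ih (R+1) (by omega) (by omega)
    calc Ssum N R (1/(r:ℝ))
        ≤ (∑ m ∈ Icc 1 N, ((m^R).divisors.card : ℝ) * (m:ℝ) ^ (-((R:ℝ)*(1/(r:ℝ)))))
          * Ssum N (R+1) (1/(r:ℝ)) := hstep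
      _ ≤ Zr r ^ (R+1) * (Zr r ^ ((64*r^2+1) * j) * Zr r) := by
          apply mul_le_mul hfac hih (Ssum_nonneg _ _ _) (by positivity)
      _ = Zr r ^ (R+1 + (64*r^2+1) * j) * Zr r := by
          rw [pow_add]; ring
      _ ≤ Zr r ^ ((64*r^2+1) * (j+1)) * Zr r := by
          apply mul_le_mul_of_nonneg_right _ hZ0
          apply pow_le_pow_right₀ hZ1
          have hexp2 : (64*r^2+1) * (j+1) = (64*r^2+1)*j + (64*r^2+1) := by ring
          omega

/-- reduction from `|h|` to the filtered divisor sum -/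
lemma reduce (r : ℕ) (h : ℕ → ℝ)
    (hbound : ∀ n : ℕ, 1 ≤ n → |h n| ≤ sFull r n * (n.divisors.card : ℝ))
    (N : ℕ) (κ : ℝ) :
    ∑ n ∈ Icc 1 N, |h n| / (n : ℝ) ^ κ ≤ Ssum N r κ := by
  classical
  rw [Ssum, Finset.sum_filter]
  apply Finset.sum_le_sum
  intro n hn
  rw [Finset.mem_Icc] at hn
  have hn1 : 1 ≤ n := hn.1
  have hnR : (0:ℝ) < (n:ℝ) := by exact_mod_cast hn1
  have hdiv : |h n| / (n:ℝ) ^ κ = |h n| * (n:ℝ) ^ (-κ) := by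
    rw [Real.rpow_neg (le_of_lt hnR), div_eq_mul_inv]
  rw [hdiv]
  by_cases hfull : IsRFull r n
  · rw [if_pos hfull]
    apply mul_le_mul_of_nonneg_right _ (Real.rpow_nonneg (le_of_lt hnR) _)
    have := hbound n hn1
    rwa [sFull, if_pos ⟨hn1, hfull⟩, one_mul] at this
  · rw [if_neg hfull]
    have hb := hbound n hn1
    rw [sFull, if_neg (fun hc => hfull hc.2), zero_mul] at hb
    have : |h n| = 0 := le_antisymm hb (abs_nonneg _)
    rw [this, zero_mul]

lemma case1_step (r N : ℕ) (hr : 2 ≤ r) (hN : 1 ≤ N) (κ : ℝ) (hκ0 : 0 ≤ κ)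
    (hκ1 : (r:ℝ)*κ < 1) :
    Ssum N r κ ≤ (N:ℝ) ^ ((1:ℝ)/(r:ℝ) - κ) * ((1 + Real.log N)^r / (1 - (r:ℝ)*κ))
      * Ssum N (r+1) (1/(r:ℝ)) := by
  classical
  have hrpos : (0:ℝ) < (r:ℝ) := by positivity
  have hrne : (r:ℝ) ≠ 0 := ne_of_gt hrpos
  have h1rκ : (0:ℝ) < 1 - (r:ℝ)*κ := by linarith
  set Mcap : ℕ → ℕ := fun k => ⌊((N:ℝ)/(k:ℝ)) ^ ((1:ℝ)/(r:ℝ))⌋₊ with hMcap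
  set s := (Icc 1 N).filter (fun k => IsRFull r k) with hs
  set t := ((Icc 1 N).filter (fun k => IsRFull (r+1) k)).sigma (fun k => Icc 1 (Mcap k)) with ht
  set g : (Σ _ : ℕ, ℕ) → ℝ := fun x =>
    ((x.1.divisors.card : ℝ) * (x.1:ℝ) ^ (-κ))
      * (((x.2^r).divisors.card : ℝ) * (x.2:ℝ) ^ (-((r:ℝ)*κ))) with hg
  set P : ℕ → (Σ _ : ℕ, ℕ) → Prop := fun n x =>
    x.2 ≠ 0 ∧ x.1 ≠ 0 ∧ n = x.2 ^ r * x.1 ∧ IsRFull (r+1) x.1 with hP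
  have hex : ∀ n ∈ s, ∃ x, P n x := by
    intro n hn
    rw [hs, Finset.mem_filter, Finset.mem_Icc] at hn
    obtain ⟨m, k, h1, h2, h3, h4⟩ := dec_step r (by omega) n (by omega) hn.2
    exact ⟨⟨k, m⟩, h1, h2, h3, h4⟩
  set i : ℕ → (Σ _ : ℕ, ℕ) := fun n => if h : ∃ x, P n x then h.choose else ⟨1,1⟩ with hi
  have hiP : ∀ n ∈ s, P n (i n) := by
    intro n hn
    rw [hi]
    simp only
    rw [dif_pos (hex n hn)]
    exact (hex n hn).choose_spec
  have key : Ssum N r κ ≤ ∑ x ∈ t, g x := by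
    apply sum_le_sum_inj s t i
    · intro n1 hn1 n2 hn2 heq
      obtain ⟨-, -, e1, -⟩ := hiP n1 hn1
      obtain ⟨-, -, e2, -⟩ := hiP n2 hn2
      rw [e1, heq, ← e2]
    · intro n hn
      obtain ⟨hm0, hk0, heq, hfull⟩ := hiP n hn
      have hnIcc : n ∈ Icc 1 N := (Finset.mem_filter.1 hn).1
      rw [Finset.mem_Icc] at hnIcc
      set k := (i n).1
      set m := (i n).2
      have hkn : k ≤ n := by
        calc k ≤ m ^ r * k := Nat.le_mul_of_pos_left _ (by positivity)
          _ = n := heq.symm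
      have hkpos : (0:ℝ) < (k:ℝ) := by
        have : 1 ≤ k := by omega
        exact_mod_cast this
      rw [ht, Finset.mem_sigma, Finset.mem_filter, Finset.mem_Icc, Finset.mem_Icc]
      refine ⟨⟨⟨by omega, le_trans hkn hnIcc.2⟩, hfull⟩, by omega, ?_⟩
      -- m ≤ Mcap k
      apply Nat.le_floor
      have hmrk : (m:ℝ) ^ (r:ℕ) * (k:ℝ) ≤ (N:ℝ) := by
        have : m ^ r * k ≤ N := by rw [← heq]; exact hnIcc.2
        exact_mod_cast this
      have hmr : (m:ℝ) ^ (r:ℕ) ≤ (N:ℝ) / (k:ℝ) := by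
        rw [le_div_iff₀ hkpos]
        exact hmrk
      have hmid : (m:ℝ) = ((m:ℝ) ^ (r:ℕ)) ^ ((1:ℝ)/(r:ℝ)) := by
        rw [← Real.rpow_natCast (m:ℝ) r, ← Real.rpow_mul (Nat.cast_nonneg m)]
        rw [mul_one_div, div_self hrne, Real.rpow_one]
      rw [hmid]
      exact Real.rpow_le_rpow (by positivity) hmr (by positivity)
    · intro n hn
      obtain ⟨hm0, hk0, heq, hfull⟩ := hiP n hn
      set k := (i n).1
      set m := (i n).2
      have htau : (n.divisors.card : ℝ) ≤ ((m^r).divisors.card : ℝ) * (k.divisors.card : ℝ) := by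
        rw [heq]
        exact_mod_cast card_divisors_mul_le (pow_ne_zero _ hm0) hk0
      have hrpow : (n:ℝ) ^ (-κ) = (m:ℝ) ^ (-((r:ℝ)*κ)) * (k:ℝ) ^ (-κ) := by
        rw [heq]
        push_cast
        rw [Real.mul_rpow (by positivity) (by positivity)]
        congr 1
        rw [← Real.rpow_natCast (m:ℝ) r, ← Real.rpow_mul (by positivity)]
        congr 1
        ring
      calc (n.divisors.card : ℝ) * (n:ℝ) ^ (-κ)
          ≤ (((m^r).divisors.card : ℝ) * (k.divisors.card : ℝ)) * (n:ℝ) ^ (-κ) :=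
            mul_le_mul_of_nonneg_right htau (Real.rpow_nonneg (Nat.cast_nonneg n) _)
        _ = g ⟨k, m⟩ := by
            rw [hg]
            simp only
            rw [hrpow]
            ring
    · intro x _
      exact mul_nonneg (mul_nonneg (Nat.cast_nonneg _) (Real.rpow_nonneg (Nat.cast_nonneg _) _))
        (mul_nonneg (Nat.cast_nonneg _) (Real.rpow_nonneg (Nat.cast_nonneg _) _))
  have hH : ∑ n ∈ Icc 1 N, (n:ℝ) ^ (-(1:ℝ)) ≤ 1 + Real.log N := by
    have : ∀ n : ℕ, (n:ℝ) ^ (-(1:ℝ)) = (n:ℝ)⁻¹ := fun n => Real.rpow_neg_one (n:ℝ)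
    simp only [this]
    exact harmonic_le N hN
  have hHnn : (0:ℝ) ≤ ∑ n ∈ Icc 1 N, (n:ℝ) ^ (-(1:ℝ)) :=
    Finset.sum_nonneg fun n _ => Real.rpow_nonneg (Nat.cast_nonneg n) _
  have hsigma : ∑ x ∈ t, g x
      ≤ (N:ℝ) ^ ((1:ℝ)/(r:ℝ) - κ) * ((1 + Real.log N)^r / (1 - (r:ℝ)*κ))
        * Ssum N (r+1) (1/(r:ℝ)) := by
    rw [ht, Finset.sum_sigma]
    rw [Ssum, Finset.mul_sum]
    apply Finset.sum_le_sum
    intro k hk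
    rw [Finset.mem_filter, Finset.mem_Icc] at hk
    have hk1 : 1 ≤ k := hk.1.1
    have hkpos : (0:ℝ) < (k:ℝ) := by exact_mod_cast hk1
    have hgval : ∀ m ∈ Icc 1 (Mcap k), g ⟨k, m⟩
        = ((k.divisors.card : ℝ) * (k:ℝ) ^ (-κ))
          * (((m^r).divisors.card : ℝ) * (m:ℝ) ^ (-((r:ℝ)*κ))) := fun m _ => rfl
    rw [Finset.sum_congr rfl hgval, ← Finset.mul_sum]
    -- inner bound
    have hinner := count_le ((r:ℝ)*κ) (by positivity) hκ1 (Mcap k) r (by omega)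
    have hMk : (Mcap k : ℝ) ≤ ((N:ℝ)/(k:ℝ)) ^ ((1:ℝ)/(r:ℝ)) := by
      rw [hMcap]
      exact Nat.floor_le (by positivity)
    have hMkN : Mcap k ≤ N := by
      have h1 : ((N:ℝ)/(k:ℝ)) ≤ (N:ℝ) := by
        apply div_le_self (Nat.cast_nonneg N)
        exact_mod_cast hk1
      have h2 : ((N:ℝ)/(k:ℝ)) ^ ((1:ℝ)/(r:ℝ)) ≤ (N:ℝ) := by
        calc ((N:ℝ)/(k:ℝ)) ^ ((1:ℝ)/(r:ℝ)) ≤ (N:ℝ) ^ ((1:ℝ)/(r:ℝ)) :=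
              Real.rpow_le_rpow (by positivity) h1 (by positivity)
          _ ≤ (N:ℝ) ^ (1:ℝ) := by
              apply Real.rpow_le_rpow_of_exponent_le (by exact_mod_cast hN)
              rw [div_le_one hrpos]
              exact_mod_cast (by omega : 1 ≤ r)
          _ = (N:ℝ) := Real.rpow_one _
      rw [hMcap]
      calc ⌊((N:ℝ)/(k:ℝ)) ^ ((1:ℝ)/(r:ℝ))⌋₊ ≤ ⌊(N:ℝ)⌋₊ := Nat.floor_mono h2
        _ = N := Nat.floor_natCast N
    have hHsub : (∑ n ∈ Icc 1 (Mcap k), (n:ℝ) ^ (-(1:ℝ))) ^ r ≤ (1 + Real.log N)^r := by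
      apply pow_le_pow_left₀
      · exact Finset.sum_nonneg fun n _ => Real.rpow_nonneg (Nat.cast_nonneg n) _
      · calc ∑ n ∈ Icc 1 (Mcap k), (n:ℝ) ^ (-(1:ℝ))
            ≤ ∑ n ∈ Icc 1 N, (n:ℝ) ^ (-(1:ℝ)) := by
              apply Finset.sum_le_sum_of_subset_of_nonneg (Finset.Icc_subset_Icc_right hMkN)
              intro n _ _
              exact Real.rpow_nonneg (Nat.cast_nonneg n) _
          _ ≤ 1 + Real.log N := hH
    have hpow : (Mcap k : ℝ) ^ (1 - (r:ℝ)*κ)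
        ≤ (N:ℝ) ^ ((1:ℝ)/(r:ℝ) - κ) * (k:ℝ) ^ (-((1:ℝ)/(r:ℝ) - κ)) := by
      have h1 : (Mcap k : ℝ) ^ (1 - (r:ℝ)*κ) ≤ (((N:ℝ)/(k:ℝ)) ^ ((1:ℝ)/(r:ℝ))) ^ (1 - (r:ℝ)*κ) :=
        Real.rpow_le_rpow (Nat.cast_nonneg _) hMk (by linarith)
      have h2 : (((N:ℝ)/(k:ℝ)) ^ ((1:ℝ)/(r:ℝ))) ^ (1 - (r:ℝ)*κ)
          = ((N:ℝ)/(k:ℝ)) ^ ((1:ℝ)/(r:ℝ) - κ) := by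
        rw [← Real.rpow_mul (by positivity)]
        congr 1
        field_simp
        try ring
      have h3 : ((N:ℝ)/(k:ℝ)) ^ ((1:ℝ)/(r:ℝ) - κ)
          = (N:ℝ) ^ ((1:ℝ)/(r:ℝ) - κ) * (k:ℝ) ^ (-((1:ℝ)/(r:ℝ) - κ)) := by
        rw [Real.div_rpow (Nat.cast_nonneg N) (le_of_lt hkpos)]
        rw [Real.rpow_neg (le_of_lt hkpos), div_eq_mul_inv]
      rw [h2, h3] at h1
      exact h1
    have hcomb : ∑ m ∈ Icc 1 (Mcap k), ((m^r).divisors.card : ℝ) * (m:ℝ) ^ (-((r:ℝ)*κ))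
        ≤ (N:ℝ) ^ ((1:ℝ)/(r:ℝ) - κ) * (k:ℝ) ^ (-((1:ℝ)/(r:ℝ) - κ)) * ((1 + Real.log N)^r / (1 - (r:ℝ)*κ)) := by
      calc ∑ m ∈ Icc 1 (Mcap k), ((m^r).divisors.card : ℝ) * (m:ℝ) ^ (-((r:ℝ)*κ))
          ≤ (Mcap k : ℝ) ^ (1 - (r:ℝ)*κ) / (1 - (r:ℝ)*κ)
            * (∑ n ∈ Icc 1 (Mcap k), (n:ℝ) ^ (-(1:ℝ))) ^ r := hinner
        _ ≤ (Mcap k : ℝ) ^ (1 - (r:ℝ)*κ) / (1 - (r:ℝ)*κ) * (1 + Real.log N)^r := by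
            apply mul_le_mul_of_nonneg_left hHsub
            positivity
        _ ≤ ((N:ℝ) ^ ((1:ℝ)/(r:ℝ) - κ) * (k:ℝ) ^ (-((1:ℝ)/(r:ℝ) - κ))) / (1 - (r:ℝ)*κ)
            * (1 + Real.log N)^r := by
            apply mul_le_mul_of_nonneg_right _ (by positivity)
            exact (div_le_div_iff_of_pos_right h1rκ).2 hpow
        _ = (N:ℝ) ^ ((1:ℝ)/(r:ℝ) - κ) * (k:ℝ) ^ (-((1:ℝ)/(r:ℝ) - κ))
            * ((1 + Real.log N)^r / (1 - (r:ℝ)*κ)) := by ring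
    calc ((k.divisors.card : ℝ) * (k:ℝ) ^ (-κ))
          * ∑ m ∈ Icc 1 (Mcap k), ((m^r).divisors.card : ℝ) * (m:ℝ) ^ (-((r:ℝ)*κ))
        ≤ ((k.divisors.card : ℝ) * (k:ℝ) ^ (-κ))
          * ((N:ℝ) ^ ((1:ℝ)/(r:ℝ) - κ) * (k:ℝ) ^ (-((1:ℝ)/(r:ℝ) - κ))
            * ((1 + Real.log N)^r / (1 - (r:ℝ)*κ))) := by
          apply mul_le_mul_of_nonneg_left hcomb (by positivity)
      _ = (N:ℝ) ^ ((1:ℝ)/(r:ℝ) - κ) * ((1 + Real.log N)^r / (1 - (r:ℝ)*κ))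
          * ((k.divisors.card : ℝ) * ((k:ℝ) ^ (-κ) * (k:ℝ) ^ (-((1:ℝ)/(r:ℝ) - κ)))) := by
          ring
      _ = (N:ℝ) ^ ((1:ℝ)/(r:ℝ) - κ) * ((1 + Real.log N)^r / (1 - (r:ℝ)*κ))
          * ((k.divisors.card : ℝ) * (k:ℝ) ^ (-(1/(r:ℝ)))) := by
          rw [← Real.rpow_add hkpos]
          congr 3
          ring
  exact le_trans key hsigma


end AuxFull

open AuxFull in
theorem weighted_sum_h_bounds (r : ℕ) (hr : 2 ≤ r) (h : ℕ → ℝ)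
    (hbound : ∀ n : ℕ, 1 ≤ n → |h n| ≤ sFull r n * (n.divisors.card : ℝ)) :
    (∀ κ : ℝ, 0 ≤ κ → κ < 1 / r →
      ∃ C : ℝ, 0 < C ∧ ∀ x : ℝ, 2 ≤ x →
        ∑ n ∈ Finset.Icc 1 ⌊x⌋₊, |h n| / (n : ℝ) ^ κ
          ≤ C * x ^ ((1 : ℝ) / r - κ) * (Real.log x) ^ r) ∧
    (∃ C : ℝ, 0 < C ∧ ∀ x : ℝ, 2 ≤ x →
        ∑ n ∈ Finset.Icc 1 ⌊x⌋₊, |h n| / (n : ℝ) ^ ((1 : ℝ) / r)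
          ≤ C * (Real.log x) ^ (r + 1)) ∧
    (∀ κ : ℝ, 1 / r < κ →
      ∃ C : ℝ, 0 < C ∧ ∀ x : ℝ, 2 ≤ x →
        ∑ n ∈ Finset.Icc 1 ⌊x⌋₊, |h n| / (n : ℝ) ^ κ ≤ C) := by
  have hrpos : (0:ℝ) < (r:ℝ) := by
    have : 0 < r := by omega
    exact_mod_cast this
  have hrne : (r:ℝ) ≠ 0 := ne_of_gt hrpos
  have hlog2 : (0:ℝ) < Real.log 2 := Real.log_pos (by norm_num)
  have hA0 : (0:ℝ) < 1 + 1/Real.log 2 := by positivity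
  set Cch : ℝ := Zr r ^ ((64*r^2+1) * (64*r^2)) * Zr r with hCch
  have hZ1 := Zr_one_le r hr
  have hCch1 : 1 ≤ Cch := by
    rw [hCch]
    calc (1:ℝ) = 1 ^ ((64*r^2+1) * (64*r^2)) * 1 := by norm_num
      _ ≤ Zr r ^ ((64*r^2+1) * (64*r^2)) * Zr r :=
        mul_le_mul (pow_le_pow_left₀ (by norm_num) hZ1 _) hZ1 (by norm_num) (by positivity)
  have hCch0 : (0:ℝ) < Cch := lt_of_lt_of_le one_pos hCch1
  -- facts for x ≥ 2
  have hxfacts : ∀ x : ℝ, 2 ≤ x →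
      1 ≤ ⌊x⌋₊ ∧ ((⌊x⌋₊:ℕ):ℝ) ≤ x ∧ (0:ℝ) < Real.log x ∧
        1 + Real.log (⌊x⌋₊:ℕ) ≤ (1 + 1/Real.log 2) * Real.log x := by
    intro x hx
    have hx0 : (0:ℝ) ≤ x := by linarith
    have hN2 : 2 ≤ ⌊x⌋₊ := Nat.le_floor (by exact_mod_cast hx)
    have hN1 : 1 ≤ ⌊x⌋₊ := by omega
    have hNx : ((⌊x⌋₊:ℕ):ℝ) ≤ x := Nat.floor_le hx0
    have hNpos : (0:ℝ) < ((⌊x⌋₊:ℕ):ℝ) := by exact_mod_cast hN1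
    have hlogN : Real.log (⌊x⌋₊:ℕ) ≤ Real.log x := Real.log_le_log hNpos hNx
    have hlogx2 : Real.log 2 ≤ Real.log x := Real.log_le_log (by norm_num) hx
    have hlogxpos : (0:ℝ) < Real.log x := lt_of_lt_of_le hlog2 hlogx2
    have hone : (1:ℝ) ≤ Real.log x / Real.log 2 := (one_le_div hlog2).2 hlogx2
    have hdiv : Real.log x / Real.log 2 = 1/Real.log 2 * Real.log x := by ring
    refine ⟨hN1, hNx, hlogxpos, ?_⟩
    rw [hdiv] at hone
    have : (1 + 1/Real.log 2) * Real.log x = 1/Real.log 2 * Real.log x + Real.log x := by ring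
    linarith
  refine ⟨?_, ?_, ?_⟩
  -- CASE 1 : 0 ≤ κ < 1/r
  · intro κ hκ0 hκ1
    have hrκ1 : (r:ℝ)*κ < 1 := by
      have := (mul_lt_mul_of_pos_left hκ1 hrpos)
      rwa [mul_one_div, div_self hrne] at this
    have h1rκ : (0:ℝ) < 1 - (r:ℝ)*κ := by linarith
    have hθ : (0:ℝ) ≤ (1:ℝ)/(r:ℝ) - κ := by
      rw [sub_nonneg]
      exact le_of_lt hκ1
    refine ⟨(1 + 1/Real.log 2)^r * Cch * (1/(1 - (r:ℝ)*κ)), by positivity, ?_⟩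
    intro x hx
    obtain ⟨hN1, hNx, hlogxpos, hlog1⟩ := hxfacts x hx
    set N := ⌊x⌋₊ with hNdef
    have hlogNnn : (0:ℝ) ≤ Real.log (N:ℕ) := Real.log_natCast_nonneg N
    calc ∑ n ∈ Finset.Icc 1 N, |h n| / (n : ℝ) ^ κ
        ≤ Ssum N r κ := reduce r h hbound N κ
      _ ≤ (N:ℝ) ^ ((1:ℝ)/(r:ℝ) - κ) * ((1 + Real.log N)^r / (1 - (r:ℝ)*κ))
          * Ssum N (r+1) (1/(r:ℝ)) := case1_step r N hr hN1 κ hκ0 hrκ1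
      _ ≤ x ^ ((1:ℝ)/(r:ℝ) - κ) * (((1 + 1/Real.log 2) * Real.log x)^r / (1 - (r:ℝ)*κ))
          * Cch := by
          apply mul_le_mul
          · apply mul_le_mul
            · exact Real.rpow_le_rpow (Nat.cast_nonneg N) hNx hθ
            · exact (div_le_div_iff_of_pos_right h1rκ).2 (pow_le_pow_left₀ (by positivity) hlog1 r)
            · positivity
            · positivity
          · exact chain_bound r N hr
          · exact Ssum_nonneg _ _ _
          · positivity
      _ = (1 + 1/Real.log 2)^r * Cch * (1/(1 - (r:ℝ)*κ))
          * x ^ ((1:ℝ)/(r:ℝ) - κ) * (Real.log x)^r := by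
          rw [mul_pow]
          ring
  -- CASE 2 : κ = 1/r
  · refine ⟨(1 + 1/Real.log 2)^(r+1) * Cch, by positivity, ?_⟩
    intro x hx
    obtain ⟨hN1, hNx, hlogxpos, hlog1⟩ := hxfacts x hx
    set N := ⌊x⌋₊ with hNdef
    have hlogNnn : (0:ℝ) ≤ Real.log (N:ℕ) := Real.log_natCast_nonneg N
    have hfac1 : ∑ m ∈ Icc 1 N, ((m^r).divisors.card : ℝ) * (m:ℝ) ^ (-((r:ℝ)*(1/(r:ℝ))))
        ≤ ((1 + 1/Real.log 2) * Real.log x)^(r+1) := by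
      have hexp1 : (r:ℝ)*(1/(r:ℝ)) = 1 := by field_simp
      rw [hexp1]
      calc ∑ m ∈ Icc 1 N, ((m^r).divisors.card : ℝ) * (m:ℝ) ^ (-(1:ℝ))
          ≤ (∑ n ∈ Icc 1 N, (n:ℝ) ^ (-(1:ℝ)))^(r+1) := W_le 1 N r
        _ ≤ (1 + Real.log N)^(r+1) := by
            apply pow_le_pow_left₀
            · exact Finset.sum_nonneg fun n _ => Real.rpow_nonneg (Nat.cast_nonneg n) _
            · have : ∀ n : ℕ, (n:ℝ) ^ (-(1:ℝ)) = (n:ℝ)⁻¹ := fun n => Real.rpow_neg_one _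
              simp only [this]
              exact harmonic_le N hN1
        _ ≤ ((1 + 1/Real.log 2) * Real.log x)^(r+1) := by
            apply pow_le_pow_left₀ (by positivity) hlog1
    calc ∑ n ∈ Finset.Icc 1 N, |h n| / (n : ℝ) ^ ((1:ℝ)/(r:ℝ))
        ≤ Ssum N r (1/(r:ℝ)) := reduce r h hbound N _
      _ ≤ (∑ m ∈ Icc 1 N, ((m^r).divisors.card : ℝ) * (m:ℝ) ^ (-((r:ℝ)*(1/(r:ℝ)))))
          * Ssum N (r+1) (1/(r:ℝ)) := chain_step N r (by omega) _ (by positivity)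
      _ ≤ ((1 + 1/Real.log 2) * Real.log x)^(r+1) * Cch := by
          apply mul_le_mul hfac1 (chain_bound r N hr) (Ssum_nonneg _ _ _) (by positivity)
      _ = (1 + 1/Real.log 2)^(r+1) * Cch * (Real.log x)^(r+1) := by
          rw [mul_pow]
          ring
  -- CASE 3 : κ > 1/r
  · intro κ hκ
    have hκpos : (0:ℝ) < κ := lt_trans (by positivity) hκ
    have hrκ : (1:ℝ) < (r:ℝ)*κ := by
      have := (mul_lt_mul_of_pos_left hκ hrpos)
      rwa [mul_one_div, div_self hrne] at this
    have hsummable : Summable (fun n : ℕ => (n:ℝ)^(-((r:ℝ)*κ))) :=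
      Real.summable_nat_rpow.2 (by linarith)
    set Zs : ℝ := 1 + ∑' n : ℕ, (n:ℝ)^(-((r:ℝ)*κ)) with hZs
    have hZs1 : 1 ≤ Zs := by
      have : 0 ≤ ∑' n : ℕ, (n:ℝ)^(-((r:ℝ)*κ)) :=
        tsum_nonneg fun n => Real.rpow_nonneg (Nat.cast_nonneg n) _
      rw [hZs]; linarith
    refine ⟨Zs^(r+1) * Cch, by positivity, ?_⟩
    intro x hx
    obtain ⟨hN1, hNx, hlogxpos, hlog1⟩ := hxfacts x hx
    set N := ⌊x⌋₊ with hNdef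
    have hfac1 : ∑ m ∈ Icc 1 N, ((m^r).divisors.card : ℝ) * (m:ℝ) ^ (-((r:ℝ)*κ))
        ≤ Zs^(r+1) := by
      calc ∑ m ∈ Icc 1 N, ((m^r).divisors.card : ℝ) * (m:ℝ) ^ (-((r:ℝ)*κ))
          ≤ (∑ n ∈ Icc 1 N, (n:ℝ) ^ (-((r:ℝ)*κ)))^(r+1) := W_le _ N r
        _ ≤ Zs^(r+1) := by
            apply pow_le_pow_left₀
            · exact Finset.sum_nonneg fun n _ => Real.rpow_nonneg (Nat.cast_nonneg n) _
            · calc ∑ n ∈ Icc 1 N, (n:ℝ) ^ (-((r:ℝ)*κ))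
                  ≤ ∑' n : ℕ, (n:ℝ)^(-((r:ℝ)*κ)) :=
                    Summable.sum_le_tsum _ (fun n _ => Real.rpow_nonneg (Nat.cast_nonneg n) _) hsummable
                _ ≤ Zs := by rw [hZs]; linarith
    calc ∑ n ∈ Finset.Icc 1 N, |h n| / (n : ℝ) ^ κ
        ≤ Ssum N r κ := reduce r h hbound N κ
      _ ≤ (∑ m ∈ Icc 1 N, ((m^r).divisors.card : ℝ) * (m:ℝ) ^ (-((r:ℝ)*κ)))
          * Ssum N (r+1) κ := chain_step N r (by omega) κ (le_of_lt hκpos)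
      _ ≤ Zs^(r+1) * Cch := by
          apply mul_le_mul hfac1 _ (Ssum_nonneg _ _ _) (by positivity)
          calc Ssum N (r+1) κ ≤ Ssum N (r+1) (1/(r:ℝ)) := Ssum_mono_exp N (r+1) (le_of_lt hκ)
            _ ≤ Cch := chain_bound r N hr
end

section
/- For any integer r ≥ 2, the series Σ_n s_r(n)/n^σ converges for every real σ > 1/r, where s_r is the indicator of r-full numbers. Equivalently, Σ_{n ≤ x} s_r(n) = O(x^{1/r}). -/
open Finset
open scoped Classical

lemma aux_summable_pi_prod : ∀ (k : ℕ) (F : Fin k → ℕ → ℝ),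
    (∀ i n, 0 ≤ F i n) → (∀ i, Summable (F i)) →
    Summable fun b : Fin k → ℕ => ∏ i, F i (b i) := by
  intro k
  induction k with
  | zero =>
    intro F _ _
    exact Summable.of_finite
  | succ k ih =>
    intro F hnn hs
    have h2 := Summable.mul_of_nonneg (hs 0)
      (ih (fun i => F i.succ) (fun i n => hnn _ n) (fun i => hs _))
      (fun n => hnn 0 n) (fun t => Finset.prod_nonneg fun i _ => hnn _ _)
    have e := Fin.consEquiv (fun _ : Fin (k + 1) => ℕ)
    rw [← (Fin.consEquiv (fun _ : Fin (k + 1) => ℕ)).summable_iff]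
    convert h2 using 1
    ext ⟨A, t⟩
    simp [Fin.prod_univ_succ, Function.comp]

lemma aux_prod_pow_rpow {k : ℕ} (b : Fin k → ℕ) (E : Fin k → ℕ) (τ : ℝ) :
    ((∏ i, b i ^ E i : ℕ) : ℝ) ^ τ = ∏ i, (b i : ℝ) ^ ((E i : ℝ) * τ) := by
  push_cast
  rw [← Real.finset_prod_rpow _ _ (fun i _ => by positivity) τ]
  exact Finset.prod_congr rfl fun i _ => by
    rw [← Real.rpow_natCast ((b i : ℝ)) (E i), ← Real.rpow_mul (by positivity)]

lemma aux_phi_rpow (r : ℕ) (A : ℕ) {k : ℕ} (b : Fin k → ℕ) (E : Fin k → ℕ) (τ : ℝ) :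
    ((A ^ r * ∏ i, b i ^ E i : ℕ) : ℝ) ^ τ
      = (A : ℝ) ^ ((r : ℝ) * τ) * ∏ i, (b i : ℝ) ^ ((E i : ℝ) * τ) := by
  rw [Nat.cast_mul, Real.mul_rpow (by positivity) (by positivity),
    aux_prod_pow_rpow _ _ τ, Nat.cast_pow, ← Real.rpow_natCast ((A:ℝ)) r,
    ← Real.rpow_mul (by positivity)]


lemma rfull_decomp (r : ℕ) (hr : 2 ≤ r) :
    ∀ n : ℕ, 1 ≤ n → IsRFull r n →
      ∃ (a : ℕ) (b : Fin (r - 1) → ℕ), 1 ≤ a ∧ (∀ i, 1 ≤ b i) ∧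
        n = a ^ r * ∏ i, b i ^ (r + 1 + (i : ℕ)) := by
  intro n
  induction n using Nat.strong_induction_on with
  | _ n ih =>
    intro hn1 hfull
    rcases eq_or_lt_of_le hn1 with h1 | h1
    · exact ⟨1, fun _ => 1, le_refl 1, fun _ => le_refl 1, by simp [← h1]⟩
    · have hn0 : n ≠ 0 := by omega
      have hn1' : n ≠ 1 := by omega
      set p := n.minFac with hp_def
      have hp : p.Prime := Nat.minFac_prime hn1'
      set e := n.factorization p with he_def
      have hre : r ≤ e :=
        (Nat.Prime.pow_dvd_iff_le_factorization hp hn0).mp (hfull p hp (Nat.minFac_dvd n))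
      set m := ordCompl[p] n with hm_def
      have hm0 : 0 < m := Nat.ordCompl_pos p hn0
      have hnm : p ^ e * m = n := Nat.ordProj_mul_ordCompl_eq_self n p
      have hpm : ¬ p ∣ m := Nat.not_dvd_ordCompl hp hn0
      have hpe2 : 2 ≤ p ^ e := le_trans hp.two_le (Nat.le_self_pow (by omega) p)
      have hmlt : m < n := by nlinarith [hm0, hnm]
      have hmfull : IsRFull r m := by
        intro q hq hqm
        have hqn : q ^ r ∣ n := hfull q hq (hqm.trans (Nat.ordCompl_dvd n p))
        have hqp : q ≠ p := fun h => hpm (h ▸ hqm)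
        have hcop : Nat.Coprime (q ^ r) (p ^ e) :=
          Nat.Coprime.pow _ _ ((Nat.coprime_primes hq hp).mpr hqp)
        exact hcop.dvd_of_dvd_mul_left (hnm ▸ hqn)
      obtain ⟨a', b', ha', hb', heq⟩ := ih m hmlt hm0 hmfull
      set s := e % r with hs_def
      have hslt : s < r := Nat.mod_lt _ (by omega)
      by_cases hs : s = 0
      · refine ⟨p ^ (e / r) * a', b', Nat.one_le_iff_ne_zero.mpr (Nat.mul_ne_zero (pow_ne_zero _ hp.pos.ne') (by omega)), hb', ?_⟩
        have hee : e / r * r = e := Nat.div_mul_cancel (Nat.dvd_of_mod_eq_zero hs)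
        calc n = p ^ e * m := hnm.symm
          _ = p ^ (e / r * r) * (a' ^ r * ∏ i, b' i ^ (r + 1 + (i : ℕ))) := by rw [hee, heq]
          _ = (p ^ (e / r) * a') ^ r * ∏ i, b' i ^ (r + 1 + (i : ℕ)) := by
              rw [mul_pow, pow_mul]; ring
      · have hs1 : 1 ≤ s := by omega
        have hdiv1 : 1 ≤ e / r := (Nat.one_le_div_iff (by omega)).mpr hre
        obtain ⟨a, hA⟩ : ∃ a, e / r = a + 1 := ⟨e / r - 1, by omega⟩
        have hdm : r * (a + 1) + s = e := by
          rw [← hA, hs_def]; exact Nat.div_add_mod e r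
        have hea : e = r * a + (r + s) := by rw [← hdm]; ring
        set i : Fin (r - 1) := ⟨s - 1, by omega⟩ with hi_def
        have hEi : r + 1 + (i : ℕ) = r + s := by
          show r + 1 + (s - 1) = r + s
          omega
        refine ⟨p ^ a * a', Function.update b' i (b' i * p),
          Nat.one_le_iff_ne_zero.mpr (Nat.mul_ne_zero (pow_ne_zero _ hp.pos.ne') (by omega)), ?_, ?_⟩
        · intro j
          rcases eq_or_ne j i with h | h
          · rw [h, Function.update_self]
            have := hb' i
            have := hp.two_le
            nlinarith
          · rw [Function.update_of_ne h]; exact hb' j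
        · have hprod : ∏ j, (Function.update b' i (b' i * p)) j ^ (r + 1 + (j : ℕ))
              = p ^ (r + s) * ∏ j, b' j ^ (r + 1 + (j : ℕ)) := by
            rw [← Finset.mul_prod_erase Finset.univ
                (fun j => (Function.update b' i (b' i * p)) j ^ (r + 1 + (j : ℕ)))
                (Finset.mem_univ i),
              ← Finset.mul_prod_erase Finset.univ
                (fun j => b' j ^ (r + 1 + (j : ℕ))) (Finset.mem_univ i)]
            have herase : ∏ j ∈ Finset.univ.erase i,
                (Function.update b' i (b' i * p)) j ^ (r + 1 + (j : ℕ))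
                = ∏ j ∈ Finset.univ.erase i, b' j ^ (r + 1 + (j : ℕ)) :=
              Finset.prod_congr rfl fun j hj => by
                rw [Function.update_of_ne (Finset.ne_of_mem_erase hj)]
            rw [herase, Function.update_self, hEi, mul_pow]
            ring
          calc n = p ^ e * m := hnm.symm
            _ = p ^ (r * a + (r + s)) * (a' ^ r * ∏ j, b' j ^ (r + 1 + (j : ℕ))) := by
                rw [← hea, heq]
            _ = (p ^ a * a') ^ r *
                (p ^ (r + s) * ∏ j, b' j ^ (r + 1 + (j : ℕ))) := by
                rw [pow_add, pow_mul, mul_pow]; ring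
            _ = (p ^ a * a') ^ r *
                ∏ j, (Function.update b' i (b' i * p)) j ^ (r + 1 + (j : ℕ)) := by
                rw [hprod]

set_option maxHeartbeats 1000000 in
theorem rfull_series_and_count (r : ℕ) (hr : 2 ≤ r) :
    (∀ σ : ℝ, 1 / r < σ → Summable fun n : ℕ => sFull r n / (n : ℝ) ^ σ) ∧
    ∃ C : ℝ, 0 < C ∧ ∀ x : ℝ, 1 ≤ x →
      ∑ n ∈ Finset.Icc 1 ⌊x⌋₊, sFull r n ≤ C * x ^ ((1 : ℝ) / r) := by
  have hr0 : (0 : ℝ) < r := by positivity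
  -- choice of decomposition
  have key : ∀ n : ℕ, ∃ q : ℕ × (Fin (r - 1) → ℕ),
      (1 ≤ n ∧ IsRFull r n) →
      (1 ≤ q.1 ∧ (∀ i, 1 ≤ q.2 i) ∧ n = q.1 ^ r * ∏ i, q.2 i ^ (r + 1 + (i : ℕ))) := by
    intro n
    by_cases h : 1 ≤ n ∧ IsRFull r n
    · obtain ⟨a, b, h1, h2, h3⟩ := rfull_decomp r hr n h.1 h.2
      exact ⟨(a, b), fun _ => ⟨h1, h2, h3⟩⟩
    · exact ⟨(1, fun _ => 1), fun hc => absurd hc h⟩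
  choose ψ hψ using key
  have hψeq : ∀ n : ℕ, (1 ≤ n ∧ IsRFull r n) →
      n = (ψ n).1 ^ r * ∏ i, (ψ n).2 i ^ (r + 1 + (i : ℕ)) := fun n h => (hψ n h).2.2
  constructor
  · -- summability
    intro σ hσ
    have hσ0 : 0 < σ := lt_trans (by positivity) hσ
    have hrσ : 1 < (r : ℝ) * σ := by
      rw [div_lt_iff₀ hr0] at hσ
      linarith
    set G : ℕ × (Fin (r - 1) → ℕ) → ℝ := fun q =>
      (1 / (q.1 : ℝ) ^ ((r : ℝ) * σ)) *
        ∏ i, 1 / (q.2 i : ℝ) ^ (((r + 1 + (i : ℕ) : ℕ) : ℝ) * σ) with hG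
    have hGnn : ∀ q, 0 ≤ G q := by
      intro q
      apply mul_nonneg (by positivity)
      exact Finset.prod_nonneg fun i _ => by positivity
    have hsum1 : Summable (fun A : ℕ => 1 / (A : ℝ) ^ ((r : ℝ) * σ)) :=
      Real.summable_one_div_nat_rpow.mpr hrσ
    have hsum2 : Summable (fun t : Fin (r - 1) → ℕ =>
        ∏ i, 1 / (t i : ℝ) ^ (((r + 1 + (i : ℕ) : ℕ) : ℝ) * σ)) := by
      apply aux_summable_pi_prod (r - 1)
        (fun i n => 1 / (n : ℝ) ^ (((r + 1 + (i : ℕ) : ℕ) : ℝ) * σ))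
      · intro i n; positivity
      · intro i
        apply Real.summable_one_div_nat_rpow.mpr
        have h1 : (r : ℝ) ≤ ((r + 1 + (i : ℕ) : ℕ) : ℝ) := by push_cast; linarith
        calc (1 : ℝ) < (r : ℝ) * σ := hrσ
          _ ≤ ((r + 1 + (i : ℕ) : ℕ) : ℝ) * σ :=
              mul_le_mul_of_nonneg_right h1 hσ0.le
    have hGsum : Summable G := by
      have h := Summable.mul_of_nonneg hsum1 hsum2 (fun n => by positivity)
        (fun t => Finset.prod_nonneg fun i _ => by positivity)
      exact h
    apply summable_of_sum_range_le (c := ∑' q, G q)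
    · intro n
      have : 0 ≤ sFull r n := by unfold sFull; split <;> norm_num
      positivity
    · intro N
      have hterm : ∀ n : ℕ, sFull r n / (n : ℝ) ^ σ
          = if (1 ≤ n ∧ IsRFull r n) then 1 / (n : ℝ) ^ σ else 0 := by
        intro n
        unfold sFull
        split <;> simp
      calc ∑ n ∈ Finset.range N, sFull r n / (n : ℝ) ^ σ
          = ∑ n ∈ (Finset.range N).filter (fun n => 1 ≤ n ∧ IsRFull r n),
              1 / (n : ℝ) ^ σ := by
            rw [Finset.sum_filter]
            exact Finset.sum_congr rfl fun n _ => hterm n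
        _ = ∑ q ∈ ((Finset.range N).filter (fun n => 1 ≤ n ∧ IsRFull r n)).image ψ,
              G q := by
            rw [Finset.sum_image ?_]
            · apply Finset.sum_congr rfl
              intro n hn
              have hn' := (Finset.mem_filter.mp hn).2
              have heq := hψeq n hn'
              have h0 : ((n : ℝ)) ^ σ = ((ψ n).1 : ℝ) ^ ((r : ℝ) * σ) *
                  ∏ i, (((ψ n).2 i : ℝ)) ^ (((r + 1 + (i : ℕ) : ℕ) : ℝ) * σ) := by
                conv_lhs => rw [heq]
                exact aux_phi_rpow r (ψ n).1 (ψ n).2 (fun i => r + 1 + (i : ℕ)) σ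
              rw [hG]
              simp only
              rw [h0, one_div, mul_inv, ← Finset.prod_inv_distrib]
              simp [one_div]
            · intro a ha b hb hab
              have ha' := (Finset.mem_filter.mp ha).2
              have hb' := (Finset.mem_filter.mp hb).2
              rw [hψeq a ha', hψeq b hb', hab]
        _ ≤ ∑' q, G q := Summable.sum_le_tsum _ (fun q _ => hGnn q) hGsum
  · -- counting
    have hsum2 : Summable (fun t : Fin (r - 1) → ℕ =>
        ∏ i, 1 / (t i : ℝ) ^ (((r + 1 + (i : ℕ) : ℕ) : ℝ) * ((1 : ℝ) / r))) := by
      apply aux_summable_pi_prod (r - 1)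
        (fun i n => 1 / (n : ℝ) ^ (((r + 1 + (i : ℕ) : ℕ) : ℝ) * ((1 : ℝ) / r)))
      · intro i n; positivity
      · intro i
        apply Real.summable_one_div_nat_rpow.mpr
        have h1 : (r : ℝ) < ((r + 1 + (i : ℕ) : ℕ) : ℝ) := by push_cast; linarith
        calc (1 : ℝ) = (r : ℝ) * ((1 : ℝ) / r) := by field_simp
          _ < ((r + 1 + (i : ℕ) : ℕ) : ℝ) * ((1 : ℝ) / r) := by
              apply mul_lt_mul_of_pos_right h1 (by positivity)
    set g2 : (Fin (r - 1) → ℕ) → ℝ := fun t =>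
      ∏ i, 1 / (t i : ℝ) ^ (((r + 1 + (i : ℕ) : ℕ) : ℝ) * ((1 : ℝ) / r)) with hg2
    have hg2nn : ∀ t, 0 ≤ g2 t := fun t =>
      Finset.prod_nonneg fun i _ => by positivity
    set C0 : ℝ := ∑' t, g2 t with hC0def
    have hC0 : 0 ≤ C0 := tsum_nonneg hg2nn
    refine ⟨C0 + 1, by linarith, ?_⟩
    intro x hx
    have hx0 : (0 : ℝ) ≤ x := by linarith
    have hxr0 : (0 : ℝ) ≤ x ^ ((1 : ℝ) / r) := Real.rpow_nonneg hx0 _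
    -- rewrite the sum as a cardinality
    have hsum_card : ∑ n ∈ Finset.Icc 1 ⌊x⌋₊, sFull r n
        = (((Finset.Icc 1 ⌊x⌋₊).filter (fun n => 1 ≤ n ∧ IsRFull r n)).card : ℝ) := by
      unfold sFull
      rw [Finset.sum_boole]
    set S := (Finset.Icc 1 ⌊x⌋₊).filter (fun n => 1 ≤ n ∧ IsRFull r n) with hS
    set T := S.image ψ with hT
    have hST : S.card = T.card := by
      rw [hT]
      refine (Finset.card_image_of_injOn ?_).symm
      intro a ha b hb hab
      have ha' := (Finset.mem_filter.mp ha).2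
      have hb' := (Finset.mem_filter.mp hb).2
      rw [hψeq a ha', hψeq b hb', hab]
    have hTmem : ∀ q ∈ T, 1 ≤ q.1 ∧ (∀ i, 1 ≤ q.2 i) ∧
        q.1 ^ r * ∏ i, q.2 i ^ (r + 1 + (i : ℕ)) ≤ ⌊x⌋₊ := by
      intro q hq
      obtain ⟨n, hn, rfl⟩ := Finset.mem_image.mp hq
      have hn1 := (Finset.mem_filter.mp hn).2
      have hn2 := (Finset.mem_Icc.mp (Finset.mem_filter.mp hn).1).2
      obtain ⟨h1, h2, h3⟩ := hψ n hn1
      exact ⟨h1, h2, h3 ▸ hn2⟩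
    set T2 := T.image Prod.snd with hT2
    have hfib : T.card = ∑ t ∈ T2, (T.filter (fun q => q.2 = t)).card :=
      Finset.card_eq_sum_card_fiberwise fun q hq => Finset.mem_image_of_mem _ hq
    -- bound each fiber
    have hfibbd : ∀ t ∈ T2, ((T.filter (fun q => q.2 = t)).card : ℝ)
        ≤ x ^ ((1 : ℝ) / r) * g2 t := by
      intro t ht
      obtain ⟨q0, hq0, hq0t⟩ := Finset.mem_image.mp ht
      have ht1 : ∀ i, 1 ≤ t i := hq0t ▸ (hTmem q0 hq0).2.1
      have hBt1 : 1 ≤ ∏ i, t i ^ (r + 1 + (i : ℕ)) :=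
        Finset.one_le_prod' fun i _ => Nat.one_le_pow _ _ (ht1 i)
      have hBtR : (1 : ℝ) ≤ ((∏ i, t i ^ (r + 1 + (i : ℕ)) : ℕ) : ℝ) := by
        exact_mod_cast hBt1
      have hBtpos : (0 : ℝ) < ((∏ i, t i ^ (r + 1 + (i : ℕ)) : ℕ) : ℝ) := by linarith
      set M := ⌊(x / ((∏ i, t i ^ (r + 1 + (i : ℕ)) : ℕ) : ℝ)) ^ ((1 : ℝ) / r)⌋₊ with hM
      have hcard : (T.filter (fun q => q.2 = t)).card ≤ (Finset.Icc 1 M).card := by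
        apply Finset.card_le_card_of_injOn Prod.fst
        · intro q hq
          have hqT := (Finset.mem_filter.mp hq).1
          have hqt : q.2 = t := (Finset.mem_filter.mp hq).2
          obtain ⟨h1, _, h3⟩ := hTmem q hqT
          rw [Finset.mem_coe, Finset.mem_Icc]
          refine ⟨h1, ?_⟩
          rw [hqt] at h3
          have hle : ((q.1 ^ r * ∏ i, t i ^ (r + 1 + (i : ℕ)) : ℕ) : ℝ) ≤ x :=
            le_trans (Nat.cast_le.mpr h3) (Nat.floor_le hx0)
          rw [Nat.cast_mul, Nat.cast_pow] at hle
          have h4 : ((q.1 : ℝ)) ^ (r : ℕ) ≤ x / ((∏ i, t i ^ (r + 1 + (i : ℕ)) : ℕ) : ℝ) :=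
            (le_div_iff₀ hBtpos).mpr hle
          have h5 : ((q.1 : ℝ)) ≤ (x / ((∏ i, t i ^ (r + 1 + (i : ℕ)) : ℕ) : ℝ)) ^ ((1 : ℝ) / r) := by
            have h6 : ((q.1 : ℝ)) = (((q.1 : ℝ)) ^ (r : ℕ)) ^ ((1 : ℝ) / r) := by
              rw [← Real.rpow_natCast (q.1 : ℝ) r, ← Real.rpow_mul (Nat.cast_nonneg _)]
              rw [mul_one_div, div_self (ne_of_gt hr0), Real.rpow_one]
            rw [h6]
            exact Real.rpow_le_rpow (by positivity) h4 (by positivity)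
          exact Nat.le_floor h5
        · intro q hq q' hq' hqq
          have h1 : q.2 = t := (Finset.mem_filter.mp hq).2
          have h2 : q'.2 = t := (Finset.mem_filter.mp hq').2
          exact Prod.ext hqq (h1.trans h2.symm)
      have hMle : ((M : ℕ) : ℝ) ≤ (x / ((∏ i, t i ^ (r + 1 + (i : ℕ)) : ℕ) : ℝ)) ^ ((1 : ℝ) / r) :=
        Nat.floor_le (by positivity)
      have hcardIcc : (Finset.Icc 1 M).card = M := by
        rw [Nat.card_Icc]; omega
      have hsplit : (x / ((∏ i, t i ^ (r + 1 + (i : ℕ)) : ℕ) : ℝ)) ^ ((1 : ℝ) / r)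
          = x ^ ((1 : ℝ) / r) * g2 t := by
        rw [Real.div_rpow hx0 (by positivity),
          aux_prod_pow_rpow t (fun i => r + 1 + (i : ℕ)) ((1 : ℝ) / r),
          div_eq_mul_inv, ← Finset.prod_inv_distrib, hg2]
        simp [one_div]
      calc ((T.filter (fun q => q.2 = t)).card : ℝ)
          ≤ ((Finset.Icc 1 M).card : ℝ) := Nat.cast_le.mpr hcard
        _ = (M : ℝ) := by rw [hcardIcc]
        _ ≤ x ^ ((1 : ℝ) / r) * g2 t := hsplit ▸ hMle
    -- assemble
    rw [hsum_card]
    calc ((S.card : ℕ) : ℝ) = ((T.card : ℕ) : ℝ) := by rw [hST]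
      _ = ∑ t ∈ T2, ((T.filter (fun q => q.2 = t)).card : ℝ) := by
          rw [hfib]; push_cast; rfl
      _ ≤ ∑ t ∈ T2, x ^ ((1 : ℝ) / r) * g2 t := Finset.sum_le_sum hfibbd
      _ = x ^ ((1 : ℝ) / r) * ∑ t ∈ T2, g2 t := by rw [Finset.mul_sum]
      _ ≤ x ^ ((1 : ℝ) / r) * C0 := by
          apply mul_le_mul_of_nonneg_left ?_ hxr0
          exact Summable.sum_le_tsum _ (fun t _ => hg2nn t) hsum2
      _ ≤ (C0 + 1) * x ^ ((1 : ℝ) / r) := by nlinarith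
end
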